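/- arXiv:1807.02868 — 5 statements merged into one kernel-verified Lean document; each statement's English description precedes it below -/
import Mathlib

section
/- Let n ≥ 1 and let Pₙ be the Boolean subalgebra of the powerset of ℝⁿ generated by the closed half-spaces {x ∈ ℝⁿ : ℓ(x) ≤ a}, where ℓ ranges over linear functionals on ℝⁿ and a over ℝ. Then Pₙ is closed under topological closure: for every A ∈ Pₙ, the closure of A in the Euclidean topology on ℝⁿ again belongs to Pₙ (so Pₙ is a modal subalgebra of the powerset of ℝⁿ with the closure/interior operators). -/
/-- The Boolean subalgebra of the powerset of `X` generated by a family `G` of subsets: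
the smallest family containing `G`, `∅` and `univ`, closed under finite unions,
finite intersections and complementation. -/
inductive BoolGen {X : Type*} (G : Set (Set X)) : Set X → Prop
  | base (A : Set X) : A ∈ G → BoolGen G A
  | empty : BoolGen G ∅
  | univ : BoolGen G Set.univ
  | union (A B : Set X) : BoolGen G A → BoolGen G B → BoolGen G (A ∪ B)
  | inter (A B : Set X) : BoolGen G A → BoolGen G B → BoolGen G (A ∩ B)
  | compl (A : Set X) : BoolGen G A → BoolGen G Aᶜ

/-- The closed half-spaces `{x ∈ ℝⁿ : ℓ(x) ≤ a}` for linear functionals `ℓ` and reals `a`. -/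
def halfSpaces (n : ℕ) : Set (Set (EuclideanSpace ℝ (Fin n))) :=
  {H | ∃ (l : EuclideanSpace ℝ (Fin n) →ₗ[ℝ] ℝ) (a : ℝ), H = {x | l x ≤ a}}

open Set Topology Filter

/-- A linear constraint: `l x ≤ a` (non-strict) or `a < l x` (strict). -/
structure Constr (n : ℕ) where
  l : EuclideanSpace ℝ (Fin n) →ₗ[ℝ] ℝ
  a : ℝ
  strict : Bool

namespace Constr

variable {n : ℕ}

def set (c : Constr n) : Set (EuclideanSpace ℝ (Fin n)) :=
  match c.strict with
  | true => {x | c.a < c.l x}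
  | false => {x | c.l x ≤ c.a}

def relax (c : Constr n) : Set (EuclideanSpace ℝ (Fin n)) :=
  match c.strict with
  | true => {x | c.a ≤ c.l x}
  | false => {x | c.l x ≤ c.a}

def neg (c : Constr n) : Constr n := ⟨c.l, c.a, !c.strict⟩

lemma neg_set (c : Constr n) : c.neg.set = c.setᶜ := by
  rcases c with ⟨l, a, b⟩
  cases b <;> · ext x; simp [set, neg, not_le, not_lt]

lemma boolGen_set (c : Constr n) : BoolGen (halfSpaces n) c.set := by
  rcases c with ⟨l, a, b⟩
  cases b
  · exact BoolGen.base _ (show _ ∈ halfSpaces n from ⟨l, a, by simp [set]⟩)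
  · have h1 : BoolGen (halfSpaces n) {x | l x ≤ a} :=
      BoolGen.base _ (show _ ∈ halfSpaces n from ⟨l, a, rfl⟩)
    have h2 := BoolGen.compl _ h1
    have : (Constr.mk l a true).set = {x | l x ≤ a}ᶜ := by
      ext x; simp [set, not_le]
    rwa [this]

lemma boolGen_relax (c : Constr n) : BoolGen (halfSpaces n) c.relax := by
  rcases c with ⟨l, a, b⟩
  cases b
  · exact BoolGen.base _ (show _ ∈ halfSpaces n from ⟨l, a, by simp [relax]⟩)
  · refine BoolGen.base _ (show _ ∈ halfSpaces n from ⟨-l, -a, ?_⟩)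
    ext x
    show a ≤ l x ↔ (-l) x ≤ -a
    simp only [LinearMap.neg_apply]
    constructor <;> intro h <;> linarith

lemma set_subset_relax (c : Constr n) : c.set ⊆ c.relax := by
  rcases c with ⟨l, a, b⟩
  cases b <;> intro x hx
  · exact hx
  · exact le_of_lt (show a < l x from hx)

lemma isClosed_relax (c : Constr n) : IsClosed c.relax := by
  rcases c with ⟨l, a, b⟩
  have hc : Continuous l := l.continuous_of_finiteDimensional
  cases b
  · exact (isClosed_le hc continuous_const : IsClosed {x | l x ≤ a})
  · exact (isClosed_le continuous_const hc : IsClosed {x | a ≤ l x})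

end Constr

variable {n : ℕ}

/-- The cell cut out by a list of constraints. -/
def cell (L : List (Constr n)) : Set (EuclideanSpace ℝ (Fin n)) :=
  ⋂ c ∈ L, c.set

def cellRelax (L : List (Constr n)) : Set (EuclideanSpace ℝ (Fin n)) :=
  ⋂ c ∈ L, c.relax

lemma cell_nil : cell ([] : List (Constr n)) = univ := by simp [cell]

lemma cell_cons (c : Constr n) (L : List (Constr n)) :
    cell (c :: L) = c.set ∩ cell L := by simp [cell]

lemma cell_append (L M : List (Constr n)) : cell (L ++ M) = cell L ∩ cell M := by
  ext x; simp [cell, or_imp, forall_and]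

lemma boolGen_cell (L : List (Constr n)) : BoolGen (halfSpaces n) (cell L) := by
  induction L with
  | nil => simpa [cell_nil] using BoolGen.univ
  | cons c L ih => rw [cell_cons]; exact BoolGen.inter _ _ c.boolGen_set ih

lemma boolGen_cellRelax (L : List (Constr n)) : BoolGen (halfSpaces n) (cellRelax L) := by
  induction L with
  | nil => simpa [cellRelax] using BoolGen.univ
  | cons c L ih =>
      have : cellRelax (c :: L) = c.relax ∩ cellRelax L := by simp [cellRelax]
      rw [this]; exact BoolGen.inter _ _ c.boolGen_relax ih

/-- Finite union of cells. -/
def dnf (Ls : List (List (Constr n))) : Set (EuclideanSpace ℝ (Fin n)) :=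
  ⋃ L ∈ Ls, cell L

lemma dnf_nil : dnf ([] : List (List (Constr n))) = ∅ := by simp [dnf]

lemma dnf_cons (L : List (Constr n)) (Ls : List (List (Constr n))) :
    dnf (L :: Ls) = cell L ∪ dnf Ls := by simp [dnf]

lemma dnf_append (Ls Ms : List (List (Constr n))) :
    dnf (Ls ++ Ms) = dnf Ls ∪ dnf Ms := by
  ext x; simp [dnf, or_and_right, exists_or]

def IsDNF (A : Set (EuclideanSpace ℝ (Fin n))) : Prop :=
  ∃ Ls : List (List (Constr n)), A = dnf Ls

lemma IsDNF.union {A B : Set (EuclideanSpace ℝ (Fin n))} (hA : IsDNF A) (hB : IsDNF B) :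
    IsDNF (A ∪ B) := by
  obtain ⟨Ls, rfl⟩ := hA; obtain ⟨Ms, rfl⟩ := hB
  exact ⟨Ls ++ Ms, (dnf_append Ls Ms).symm⟩

lemma IsDNF.inter {A B : Set (EuclideanSpace ℝ (Fin n))} (hA : IsDNF A) (hB : IsDNF B) :
    IsDNF (A ∩ B) := by
  obtain ⟨Ls, rfl⟩ := hA; obtain ⟨Ms, rfl⟩ := hB
  refine ⟨Ls.flatMap fun L => Ms.map fun M => L ++ M, ?_⟩
  ext x
  simp only [dnf, mem_inter_iff, mem_iUnion, exists_prop, List.mem_flatMap, List.mem_map]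
  constructor
  · rintro ⟨⟨L, hL, hxL⟩, ⟨M, hM, hxM⟩⟩
    exact ⟨L ++ M, ⟨L, hL, M, hM, rfl⟩, by rw [cell_append]; exact ⟨hxL, hxM⟩⟩
  · rintro ⟨_, ⟨L, hL, M, hM, rfl⟩, hx⟩
    rw [cell_append] at hx
    exact ⟨⟨L, hL, hx.1⟩, ⟨M, hM, hx.2⟩⟩

lemma isDNF_cell_compl (L : List (Constr n)) : IsDNF (cell L)ᶜ := by
  refine ⟨L.map fun c => [c.neg], ?_⟩
  ext x
  simp only [dnf, mem_compl_iff, cell, mem_iInter, mem_iUnion, exists_prop, List.mem_map,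
    not_forall]
  constructor
  · rintro ⟨c, hc, hxc⟩
    exact ⟨[c.neg], ⟨c, hc, rfl⟩, by simp [Constr.neg_set, hxc]⟩
  · rintro ⟨_, ⟨c, hc, rfl⟩, hx⟩
    simp only [mem_iInter, List.mem_singleton, forall_eq] at hx
    rw [Constr.neg_set] at hx
    exact ⟨c, hc, hx⟩

lemma IsDNF.compl {A : Set (EuclideanSpace ℝ (Fin n))} (hA : IsDNF A) : IsDNF Aᶜ := by
  obtain ⟨Ls, rfl⟩ := hA
  induction Ls with
  | nil => exact ⟨[[]], by simp [dnf_nil, dnf, cell_nil]⟩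
  | cons L Ls ih =>
      rw [dnf_cons, compl_union]
      exact (isDNF_cell_compl L).inter ih

lemma isDNF_of_boolGen {A : Set (EuclideanSpace ℝ (Fin n))}
    (hA : BoolGen (halfSpaces n) A) : IsDNF A := by
  induction hA with
  | base A hA =>
      obtain ⟨l, a, rfl⟩ := hA
      exact ⟨[[⟨l, a, false⟩]], by simp [dnf, cell, Constr.set]⟩
  | empty => exact ⟨[], (dnf_nil).symm⟩
  | univ => exact ⟨[[]], by simp [dnf, cell_nil]⟩
  | union A B _ _ ihA ihB => exact ihA.union ihB
  | inter A B _ _ ihA ihB => exact ihA.inter ihB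
  | compl A _ ih => exact ih.compl

lemma isClosed_cellRelax (L : List (Constr n)) : IsClosed (cellRelax L) := by
  induction L with
  | nil => simpa [cellRelax] using isClosed_univ
  | cons c L ih =>
      have : cellRelax (c :: L) = c.relax ∩ cellRelax L := by simp [cellRelax]
      rw [this]; exact c.isClosed_relax.inter ih

lemma segment_mem_cell (L : List (Constr n)) {p q : EuclideanSpace ℝ (Fin n)}
    (hp : p ∈ cell L) (hq : q ∈ cellRelax L) {t : ℝ} (ht0 : 0 ≤ t) (ht1 : t < 1) :
    p + t • (q - p) ∈ cell L := by
  simp only [cell, mem_iInter] at hp ⊢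
  simp only [cellRelax, mem_iInter] at hq
  intro c hc
  have hp' := hp c hc
  have hq' := hq c hc
  rcases c with ⟨l, a, b⟩
  have hval : l (p + t • (q - p)) = l p + t * (l q - l p) := by
    simp [map_add, map_smul, map_sub, smul_eq_mul]
  cases b with
  | false =>
      replace hp' : l p ≤ a := hp'
      replace hq' : l q ≤ a := hq'
      show l (p + t • (q - p)) ≤ a
      rw [hval]; nlinarith
  | true =>
      replace hp' : a < l p := hp'
      replace hq' : a ≤ l q := hq'
      show a < l (p + t • (q - p))
      rw [hval]; nlinarith

lemma closure_cell (L : List (Constr n)) (hne : (cell L).Nonempty) :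
    closure (cell L) = cellRelax L := by
  obtain ⟨p, hp⟩ := hne
  apply Subset.antisymm
  · refine closure_minimal ?_ (isClosed_cellRelax L)
    intro x hx
    simp only [cell, mem_iInter] at hx
    simp only [cellRelax, mem_iInter]
    exact fun c hc => c.set_subset_relax (hx c hc)
  · intro q hq
    have hne1 : (𝓝[Ico (0:ℝ) 1] 1).NeBot := by
      refine mem_closure_iff_nhdsWithin_neBot.mp ?_
      rw [closure_Ico (by norm_num : (0:ℝ) ≠ 1)]
      exact ⟨le_of_lt one_pos, le_refl 1⟩
    set f : ℝ → EuclideanSpace ℝ (Fin n) := fun t => p + t • (q - p) with hf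
    have hcont : Continuous f := by continuity
    have htend : Filter.Tendsto f (𝓝[Ico (0:ℝ) 1] 1) (𝓝 q) := by
      have : Filter.Tendsto f (𝓝 (1:ℝ)) (𝓝 (f 1)) := hcont.tendsto 1
      have hf1 : f 1 = q := by simp [hf]
      rw [hf1] at this
      exact this.mono_left nhdsWithin_le_nhds
    refine mem_closure_of_tendsto htend ?_
    filter_upwards [self_mem_nhdsWithin] with t ht
    exact segment_mem_cell L hp hq ht.1 ht.2

/-- The Boolean algebra `Pₙ` generated by half-spaces is closed under topological closure. -/
theorem Pn_closed_under_closure (n : ℕ) (hn : 1 ≤ n) (A : Set (EuclideanSpace ℝ (Fin n)))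
    (hA : BoolGen (halfSpaces n) A) : BoolGen (halfSpaces n) (closure A) := by
  obtain ⟨Ls, rfl⟩ := isDNF_of_boolGen hA
  clear hA
  induction Ls with
  | nil => simpa [dnf_nil] using BoolGen.empty
  | cons L Ls ih =>
      rw [dnf_cons, closure_union]
      refine BoolGen.union _ _ ?_ ih
      rcases (cell L).eq_empty_or_nonempty with h | h
      · rw [h, closure_empty]; exact BoolGen.empty
      · rw [closure_cell L h]; exact boolGen_cellRelax L
end

section
/- Let X and Y be topological spaces, let U be an open subset of X, and let f : U → Y (U with the subspace topology) be a surjective map that is both continuous and open. Then for every modal formula φ: if φ is valid on X (true at every point of X under every valuation assigning arbitrary subsets of X to the propositional letters), then φ is valid on Y. -/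
/-- Modal formulas over countably many propositional letters, built from
`⊥`, `¬`, `∨` and `◇`. -/
inductive Fml : Type
  | bot : Fml
  | var : ℕ → Fml
  | neg : Fml → Fml
  | or : Fml → Fml → Fml
  | dia : Fml → Fml

/-- Topological semantics: the set of points of the space at which a formula is true,
with `◇` interpreted as topological closure. -/
def topoSem {X : Type*} [TopologicalSpace X] (ν : ℕ → Set X) : Fml → Set X
  | .bot => ∅
  | .var p => ν p
  | .neg φ => (topoSem ν φ)ᶜ
  | .or φ ψ => topoSem ν φ ∪ topoSem ν ψ
  | .dia φ => closure (topoSem ν φ)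

/-- If `f` is a surjective continuous open map from an open subspace `U` of `X` onto `Y`
(a partial interior onto map), then every modal formula valid on `X` is valid on `Y`. -/
theorem valid_of_partial_interior_onto {X Y : Type*} [TopologicalSpace X] [TopologicalSpace Y]
    (U : Set X) (hU : IsOpen U) (f : U → Y)
    (hsurj : Function.Surjective f) (hcont : Continuous f) (hopen : IsOpenMap f)
    (φ : Fml) (hvalid : ∀ (ν : ℕ → Set X) (x : X), x ∈ topoSem ν φ) :
    ∀ (μ : ℕ → Set Y) (y : Y), y ∈ topoSem μ φ := by
  intro μ y
  classical
  set ν : ℕ → Set X := fun p => Subtype.val '' (f ⁻¹' (μ p)) with hν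
  have hpre : ∀ T : Set Y, f ⁻¹' closure T = closure (f ⁻¹' T) :=
    fun T => Set.Subset.antisymm (hopen.preimage_closure_subset_closure_preimage)
      (hcont.closure_preimage_subset T)
  have key : ∀ ψ : Fml, ∀ u : U, ((u : X) ∈ topoSem ν ψ ↔ f u ∈ topoSem μ ψ) := by
    intro ψ
    induction ψ with
    | bot => intro u; simp [topoSem]
    | var p =>
      intro u
      simp only [topoSem, hν]
      constructor
      · rintro ⟨v, hv, hvu⟩
        have : v = u := Subtype.ext hvu
        exact this ▸ hv
      · intro h; exact ⟨u, h, rfl⟩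
    | neg φ ih => intro u; simp [topoSem, ih u]
    | or φ ψ ihφ ihψ => intro u; simp [topoSem, ihφ u, ihψ u]
    | dia φ ih =>
      intro u
      have hset : topoSem ν φ ∩ U = Subtype.val '' (f ⁻¹' topoSem μ φ) := by
        ext x
        constructor
        · rintro ⟨hx, hxU⟩
          exact ⟨⟨x, hxU⟩, (ih ⟨x, hxU⟩).1 hx, rfl⟩
        · rintro ⟨v, hv, rfl⟩
          exact ⟨(ih v).2 hv, v.2⟩
      simp only [topoSem]
      constructor
      · intro h
        have h2 : (u : X) ∈ closure (topoSem ν φ ∩ U) := by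
          rw [Set.inter_comm]
          exact hU.inter_closure ⟨u.2, h⟩
        rw [hset, ← closure_subtype] at h2
        rw [← hpre] at h2
        exact h2
      · intro h
        have h2 : u ∈ closure (f ⁻¹' topoSem μ φ) := by rw [← hpre]; exact h
        rw [closure_subtype, ← hset] at h2
        exact closure_mono Set.inter_subset_left h2
  obtain ⟨u, rfl⟩ := hsurj y
  exact (key φ u).1 (hvalid ν u)
end

section
/- For every n ≥ 1 there exists a surjective map f : ℝ² → S_n from the Euclidean plane onto the crown frame 𝔠_n (equipped with the Alexandroff topology of Q_n-upward-closed sets) such that f is continuous and open, and moreover f⁻¹({w}) is a polygon (an element of P₂) for every w ∈ S_n. In other words, every crown frame is an interior image of the polygonal plane. -/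
/-- The accessibility relation `Q_n` of the crown frame `𝔠_n` on worlds `Fin (2n+1)`,
where world `0` is the root `r` and world `i` (for `1 ≤ i ≤ 2n`) is `sᵢ`:
the smallest reflexive relation such that the root sees every `sᵢ`, every even
`sᵢ` with `i < 2n` sees `s_{i-1}` and `s_{i+1}`, and `s_{2n}` sees `s_{2n-1}` and `s₁`. -/
def crownRel (n : ℕ) (x y : Fin (2 * n + 1)) : Prop :=
  x = y ∨ x.val = 0 ∨
    (x.val % 2 = 0 ∧ x.val ≠ 0 ∧
      (y.val + 1 = x.val ∨ y.val = x.val + 1 ∨ (x.val = 2 * n ∧ y.val = 1)))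

/-- The Alexandroff topology on the crown frame: opens are the `Q_n`-upward-closed sets. -/
def crownTop (n : ℕ) : TopologicalSpace (Fin (2 * n + 1)) where
  IsOpen U := ∀ x ∈ U, ∀ y, crownRel n x y → y ∈ U
  isOpen_univ := fun _ _ _ _ => trivial
  isOpen_inter := fun _ _ hU hV x hx y hxy => ⟨hU x hx.1 y hxy, hV x hx.2 y hxy⟩
  isOpen_sUnion := fun _ hS x hx y hxy => by
    obtain ⟨t, htS, hxt⟩ := hx
    exact ⟨t, htS, hS t htS x hxt y hxy⟩


open Complex Real Set
noncomputable section
namespace CrownAux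


def theta (n k : ℕ) : ℝ := 2 * π * k / n - π

def argU (n : ℕ) (z : ℂ) : ℝ := n * (z.arg + π) / (2 * π)

def kIdx (n : ℕ) (z : ℂ) : ℕ := max 1 (min n ⌈argU n z⌉₊)

def fval (n : ℕ) (z : ℂ) : ℕ :=
  if z = 0 then 0 else 2 * kIdx n z - (if argU n z = (kIdx n z : ℝ) then 0 else 1)

variable {n : ℕ} {z : ℂ}

lemma argU_pos (hn : 1 ≤ n) (hz : z ≠ 0) : 0 < argU n z := by
  have h1 := (Complex.arg_mem_Ioc z).1
  have hn' : (0:ℝ) < n := by exact_mod_cast hn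
  have hpi := Real.pi_pos
  have : 0 < z.arg + π := by linarith
  exact div_pos (mul_pos hn' this) (by linarith)

lemma argU_le (hn : 1 ≤ n) : argU n z ≤ n := by
  have h2 := (Complex.arg_mem_Ioc z).2
  have hn' : (0:ℝ) < n := by exact_mod_cast hn
  have hpi := Real.pi_pos
  rw [argU, div_le_iff₀ (by linarith)]
  nlinarith

lemma map_theta (hn : 1 ≤ n) (k : ℕ) : n * (theta n k + π) / (2 * π) = k := by
  have hn' : (0:ℝ) ≠ n := by exact_mod_cast (Nat.one_le_iff_ne_zero.mp hn).symm
  have hpi := Real.pi_ne_zero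
  simp only [theta]
  field_simp
  ring

lemma map_lt_map (hn : 1 ≤ n) {s t : ℝ} :
    n * (s + π) / (2 * π) < n * (t + π) / (2 * π) ↔ s < t := by
  have hn' : (0:ℝ) < n := by exact_mod_cast hn
  have hpi := Real.pi_pos
  rw [div_lt_div_iff_of_pos_right (by linarith), mul_lt_mul_iff_right₀ hn', add_lt_add_iff_right]

lemma argU_lt_iff (hn : 1 ≤ n) {k : ℕ} : argU n z < k ↔ z.arg < theta n k := by
  conv_lhs => rw [argU, ← map_theta hn k]
  exact map_lt_map hn

lemma lt_argU_iff (hn : 1 ≤ n) {k : ℕ} : (k:ℝ) < argU n z ↔ theta n k < z.arg := by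
  conv_lhs => rw [argU, ← map_theta hn k]
  exact map_lt_map hn

lemma argU_eq_iff (hn : 1 ≤ n) {k : ℕ} : argU n z = (k:ℝ) ↔ z.arg = theta n k := by
  constructor <;> intro h
  · have h1 : ¬ argU n z < k := by simp [h]
    have h2 : ¬ (k:ℝ) < argU n z := by simp [h]
    rw [argU_lt_iff hn] at h1
    rw [lt_argU_iff hn] at h2
    linarith
  · have h1 : ¬ z.arg < theta n k := by simp [h]
    have h2 : ¬ theta n k < z.arg := by simp [h]
    rw [← argU_lt_iff hn] at h1
    rw [← lt_argU_iff hn] at h2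
    linarith

lemma kIdx_eq (hn : 1 ≤ n) (hz : z ≠ 0) : kIdx n z = ⌈argU n z⌉₊ := by
  have h1 : 1 ≤ ⌈argU n z⌉₊ := Nat.one_le_ceil_iff.mpr (argU_pos hn hz)
  have h2 : ⌈argU n z⌉₊ ≤ n := Nat.ceil_le.mpr (argU_le hn)
  unfold kIdx; omega

lemma kIdx_mem (hn : 1 ≤ n) : 1 ≤ kIdx n z ∧ kIdx n z ≤ n := by
  unfold kIdx; omega

lemma theta_zero (n : ℕ) : theta n 0 = -π := by simp [theta]

lemma theta_n (hn : 1 ≤ n) : theta n n = π := by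
  have hn' : (0:ℝ) < n := by exact_mod_cast hn
  simp only [theta]
  field_simp
  ring

lemma theta_strict_mono (hn : 1 ≤ n) {j k : ℕ} (h : j < k) : theta n j < theta n k := by
  have hn' : (0:ℝ) < n := by exact_mod_cast hn
  have hpi := Real.pi_pos
  have hj : (j:ℝ) < k := by exact_mod_cast h
  rw [theta, theta, sub_lt_sub_iff_right, div_lt_div_iff₀ hn' hn']
  nlinarith [mul_pos (sub_pos.mpr hj) (mul_pos (mul_pos two_pos hpi) hn')]

lemma theta_mono (hn : 1 ≤ n) {j k : ℕ} (h : j ≤ k) : theta n j ≤ theta n k := by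
  rcases eq_or_lt_of_le h with rfl | h
  · exact le_refl _
  · exact (theta_strict_mono hn h).le

lemma theta_mem (hn : 1 ≤ n) {k : ℕ} (h1 : 1 ≤ k) (h2 : k ≤ n) :
    theta n k ∈ Set.Ioc (-π) π := by
  constructor
  · calc -π = theta n 0 := (theta_zero n).symm
    _ < theta n k := theta_strict_mono hn h1
  · calc theta n k ≤ theta n n := theta_mono hn h2
    _ = π := theta_n hn

lemma fval_eq_zero_iff (hn : 1 ≤ n) : fval n z = 0 ↔ z = 0 := by
  have hk := kIdx_mem (n := n) (z := z) hn
  unfold fval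
  split_ifs with h h2
  · simp [h]
  · simp [h]; omega
  · simp [h]; omega

lemma fval_eq_even_iff (hn : 1 ≤ n) {k : ℕ} (hk1 : 1 ≤ k) (hk2 : k ≤ n) :
    fval n z = 2 * k ↔ z ≠ 0 ∧ z.arg = theta n k := by
  unfold fval
  split_ifs with h h2
  · simp [h]; omega
  · have hk := kIdx_mem (n := n) (z := z) hn
    rw [kIdx_eq hn h] at h2 hk ⊢
    constructor
    · intro he
      have hck : ⌈argU n z⌉₊ = k := by omega
      exact ⟨h, (argU_eq_iff hn).mp (by rw [h2, hck])⟩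
    · rintro ⟨-, ha⟩
      have ha' : argU n z = (k:ℝ) := (argU_eq_iff hn).mpr ha
      have : ⌈argU n z⌉₊ = k := by rw [ha']; exact Nat.ceil_natCast k
      omega
  · have hk := kIdx_mem (n := n) (z := z) hn
    rw [kIdx_eq hn h] at h2 hk ⊢
    constructor
    · intro he; omega
    · rintro ⟨-, ha⟩
      have ha' : argU n z = (k:ℝ) := (argU_eq_iff hn).mpr ha
      exact absurd (by rw [ha']; simp) h2

lemma fval_eq_odd_iff (hn : 1 ≤ n) {k : ℕ} (hk1 : 1 ≤ k) (hk2 : k ≤ n) :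
    fval n z = 2 * k - 1 ↔ z ≠ 0 ∧ theta n (k-1) < z.arg ∧ z.arg < theta n k := by
  unfold fval
  split_ifs with h h2
  · simp [h]; omega
  · have hk := kIdx_mem (n := n) (z := z) hn
    rw [kIdx_eq hn h] at h2 hk ⊢
    constructor
    · intro he; omega
    · rintro ⟨-, ha1, ha2⟩
      exfalso
      have hb1 : ((k-1:ℕ):ℝ) < argU n z := (lt_argU_iff hn).mpr ha1
      have hb2 : argU n z < (k:ℝ) := (argU_lt_iff hn).mpr ha2
      have hceil : ⌈argU n z⌉₊ = k := (Nat.ceil_eq_iff (by omega)).mpr ⟨hb1, hb2.le⟩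
      have : z.arg = theta n k := (argU_eq_iff hn).mp (by rw [h2, hceil])
      linarith
  · have hk := kIdx_mem (n := n) (z := z) hn
    rw [kIdx_eq hn h] at h2 hk ⊢
    constructor
    · intro he
      have hck : ⌈argU n z⌉₊ = k := by omega
      have hiff := (Nat.ceil_eq_iff (n := k) (a := argU n z) (by omega)).mp hck
      refine ⟨h, (lt_argU_iff hn).mp hiff.1, ?_⟩
      rcases lt_or_eq_of_le hiff.2 with hlt | heq
      · exact (argU_lt_iff hn).mp hlt
      · exact absurd (by rw [hck, heq]) h2
    · rintro ⟨-, ha1, ha2⟩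
      have hb1 : ((k-1:ℕ):ℝ) < argU n z := (lt_argU_iff hn).mpr ha1
      have hb2 : argU n z < (k:ℝ) := (argU_lt_iff hn).mpr ha2
      have hceil : ⌈argU n z⌉₊ = k := (Nat.ceil_eq_iff (by omega)).mpr ⟨hb1, hb2.le⟩
      omega

lemma fval_lt (hn : 1 ≤ n) : fval n z < 2 * n + 1 := by
  have hk := kIdx_mem (n := n) (z := z) hn
  unfold fval
  split_ifs <;> omega



def DD (θ : ℝ) (z : ℂ) : ℝ := Real.sin θ * z.re - Real.cos θ * z.im

def CC (θ : ℝ) (z : ℂ) : ℝ := Real.cos θ * z.re + Real.sin θ * z.im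

lemma re_eq (z : ℂ) : z.re = ‖z‖ * Real.cos z.arg := by
  rcases eq_or_ne z 0 with rfl | hz
  · simp
  · rw [Complex.cos_arg hz, mul_div_cancel₀ _ ((norm_ne_zero_iff.mpr hz))]

lemma im_eq (z : ℂ) : z.im = ‖z‖ * Real.sin z.arg := by
  rcases eq_or_ne z 0 with rfl | hz
  · simp
  · rw [Complex.sin_arg, mul_div_cancel₀ _ ((norm_ne_zero_iff.mpr hz))]

lemma DD_eq (θ : ℝ) (z : ℂ) : DD θ z = ‖z‖ * Real.sin (θ - z.arg) := by
  rw [DD, re_eq z, im_eq z, Real.sin_sub]; ring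

lemma CC_eq (θ : ℝ) (z : ℂ) : CC θ z = ‖z‖ * Real.cos (θ - z.arg) := by
  rw [CC, re_eq z, im_eq z, Real.cos_sub]; ring

lemma sin_sign {t a b : ℝ} (ht1 : -π < t) (ht2 : t ≤ π) (ha : -π ≤ a) (hb : b ≤ π)
    (h1 : 0 < b - a) (h2 : b - a ≤ π) :
    (0 < Real.sin (t - a) ∧ 0 < Real.sin (b - t)) ↔ (a < t ∧ t < b) := by
  have hpi := Real.pi_pos
  constructor
  · rintro ⟨s1, s2⟩
    constructor
    · by_contra hta
      push_neg at hta
      rcases le_or_gt (-π) (t - a) with hc | hc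
      · have := Real.sin_nonpos_of_nonpos_of_neg_pi_le (by linarith) hc
        linarith
      · have : Real.sin (b - t) < 0 := by
          have h3 : 0 < Real.sin (b - t - π) :=
            Real.sin_pos_of_pos_of_lt_pi (by linarith) (by linarith)
          rw [Real.sin_sub_pi] at h3
          linarith
        linarith
    · by_contra htb
      push_neg at htb
      rcases le_or_gt (-π) (b - t) with hc | hc
      · have := Real.sin_nonpos_of_nonpos_of_neg_pi_le (by linarith) hc
        linarith
      · have hta2 : t - a ≤ 2 * π := by linarith
        rcases lt_or_eq_of_le hta2 with hlt | heq
        · have h3 : 0 < Real.sin (t - a - π) :=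
            Real.sin_pos_of_pos_of_lt_pi (by linarith) (by linarith)
          rw [Real.sin_sub_pi] at h3
          linarith
        · rw [heq] at s1
          simp [Real.sin_two_pi] at s1
  · rintro ⟨h3, h4⟩
    exact ⟨Real.sin_pos_of_pos_of_lt_pi (by linarith) (by linarith),
      Real.sin_pos_of_pos_of_lt_pi (by linarith) (by linarith)⟩

lemma sin_cos_zero {s : ℝ} (h1 : Real.sin s = 0) (h2 : 0 < Real.cos s)
    (h3 : -(2*π) < s) (h4 : s < 2*π) : s = 0 := by
  have hpi := Real.pi_pos
  obtain ⟨m, hm⟩ := Real.sin_eq_zero_iff.mp h1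
  have hm1 : (-2 : ℝ) < (m:ℝ) := by
    by_contra hc; push_neg at hc; nlinarith
  have hm2 : ((m:ℝ)) < 2 := by
    by_contra hc; push_neg at hc; nlinarith
  have hcase : m = -1 ∨ m = 0 ∨ m = 1 := by
    have l1 : (-2 : ℤ) < m := by exact_mod_cast hm1
    have l2 : m < 2 := by exact_mod_cast hm2
    omega
  rcases hcase with rfl | rfl | rfl
  · exfalso
    have hv : ((-1:ℤ):ℝ) * π = -π := by push_cast; ring
    rw [hv] at hm
    rw [← hm, Real.cos_neg, Real.cos_pi] at h2
    linarith
  · have : (0:ℝ) * π = s := by exact_mod_cast hm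
    linarith [this]
  · exfalso
    have hv : ((1:ℤ):ℝ) * π = π := by push_cast; ring
    rw [hv] at hm
    rw [← hm, Real.cos_pi] at h2
    linarith

/-- The open ray at angle `θ`. -/
lemma ray_eq {θ : ℝ} (hθ : θ ∈ Set.Ioc (-π) π) :
    {z : ℂ | z ≠ 0 ∧ z.arg = θ} = {z : ℂ | DD θ z = 0 ∧ 0 < CC θ z} := by
  have hpi := Real.pi_pos
  ext z
  simp only [Set.mem_setOf_eq]
  rcases eq_or_ne z 0 with rfl | hz
  · simp [DD, CC]
  · have habs : 0 < ‖z‖ := norm_pos_iff.mpr hz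
    have ht1 := (Complex.arg_mem_Ioc z).1
    have ht2 := (Complex.arg_mem_Ioc z).2
    rw [DD_eq, CC_eq]
    constructor
    · rintro ⟨-, rfl⟩
      simp [habs]
    · rintro ⟨hd, hc⟩
      refine ⟨hz, ?_⟩
      have hs : Real.sin (θ - z.arg) = 0 := by
        rcases mul_eq_zero.mp hd with h | h
        · exact absurd h habs.ne'
        · exact h
      have hcc : 0 < Real.cos (θ - z.arg) := by nlinarith
      have := sin_cos_zero hs hcc (by linarith [hθ.1, hθ.2]) (by linarith [hθ.1, hθ.2])
      linarith

/-- Thin open sector between angles `a < b`, `b - a ≤ π`. -/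
lemma sector_eq {a b : ℝ} (ha : -π ≤ a) (hb : b ≤ π) (h1 : 0 < b - a) (h2 : b - a ≤ π) :
    {z : ℂ | z ≠ 0 ∧ z.arg ∈ Set.Ioo a b} = {z : ℂ | DD a z < 0 ∧ 0 < DD b z} := by
  ext z
  simp only [Set.mem_setOf_eq, Set.mem_Ioo]
  rcases eq_or_ne z 0 with rfl | hz
  · simp [DD]
  · have habs : 0 < ‖z‖ := norm_pos_iff.mpr hz
    have ht1 := (Complex.arg_mem_Ioc z).1
    have ht2 := (Complex.arg_mem_Ioc z).2
    rw [DD_eq, DD_eq]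
    have hkey := sin_sign ht1 ht2 ha hb h1 h2
    have e1 : Real.sin (a - z.arg) = -Real.sin (z.arg - a) := by
      rw [show a - z.arg = -(z.arg - a) by ring, Real.sin_neg]
    rw [e1]
    constructor
    · rintro ⟨-, hm1, hm2⟩
      obtain ⟨s1, s2⟩ := hkey.mpr ⟨hm1, hm2⟩
      exact ⟨by nlinarith, mul_pos habs s2⟩
    · rintro ⟨hd1, hd2⟩
      have s1 : 0 < Real.sin (z.arg - a) := by nlinarith
      have s2 : 0 < Real.sin (b - z.arg) := by nlinarith
      exact ⟨hz, hkey.mp ⟨s1, s2⟩⟩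



def polar (r θ : ℝ) : ℂ := (r:ℂ) * (↑(Real.cos θ) + ↑(Real.sin θ) * I)

lemma abs_polar {r : ℝ} (hr : 0 ≤ r) (θ : ℝ) : ‖polar r θ‖ = r := by
  rw [polar, norm_mul, Complex.norm_real, Real.norm_eq_abs, _root_.abs_of_nonneg hr, Complex.ofReal_cos,
    Complex.ofReal_sin, Complex.norm_cos_add_sin_mul_I, mul_one]

lemma arg_polar {r θ : ℝ} (hr : 0 < r) (hθ : θ ∈ Set.Ioc (-π) π) : (polar r θ).arg = θ := by
  rw [polar, Complex.ofReal_cos, Complex.ofReal_sin, Complex.arg_real_mul _ hr,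
    Complex.arg_cos_add_sin_mul_I hθ]

lemma polar_ne {r θ : ℝ} (hr : 0 < r) : polar r θ ≠ 0 := by
  intro h
  have := abs_polar hr.le θ
  rw [h] at this
  simp at this
  linarith

lemma polar_abs_arg (z : ℂ) : polar (‖z‖) z.arg = z := by
  rw [polar, Complex.ofReal_cos, Complex.ofReal_sin]
  exact Complex.norm_mul_cos_add_sin_mul_I z

lemma polar_sub_two_pi (r θ : ℝ) : polar r (θ - 2*π) = polar r θ := by
  rw [polar, polar, Real.cos_sub_two_pi, Real.sin_sub_two_pi]

lemma polar_add_two_pi (r θ : ℝ) : polar r (θ + 2*π) = polar r θ := by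
  rw [polar, polar, Real.cos_add_two_pi, Real.sin_add_two_pi]

lemma neg_polar_add (r θ : ℝ) : -polar r θ = polar r (θ + π) := by
  rw [polar, polar, Real.cos_add_pi, Real.sin_add_pi]
  push_cast
  ring

lemma neg_polar_sub (r θ : ℝ) : -polar r θ = polar r (θ - π) := by
  rw [polar, polar, Real.cos_sub_pi, Real.sin_sub_pi]
  push_cast
  ring

lemma continuous_polar (r : ℝ) : Continuous (fun θ : ℝ => polar r θ) := by
  unfold polar
  fun_prop

lemma arg_neg_of_pos {z : ℂ} (hz : z ≠ 0) (h : 0 < z.arg) : (-z).arg = z.arg - π := by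
  have h2 := (Complex.arg_mem_Ioc z).2
  have hr : 0 < ‖z‖ := norm_pos_iff.mpr hz
  have hpi := Real.pi_pos
  conv_lhs => rw [← polar_abs_arg z, neg_polar_sub]
  exact arg_polar hr ⟨by linarith, by linarith⟩

lemma arg_neg_of_nonpos {z : ℂ} (hz : z ≠ 0) (h : z.arg ≤ 0) : (-z).arg = z.arg + π := by
  have h1 := (Complex.arg_mem_Ioc z).1
  have hr : 0 < ‖z‖ := norm_pos_iff.mpr hz
  have hpi := Real.pi_pos
  conv_lhs => rw [← polar_abs_arg z, neg_polar_add]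
  exact arg_polar hr ⟨by linarith, by linarith⟩

lemma sector_isOpen {a b : ℝ} (hb : b ≤ π) :
    IsOpen {z : ℂ | z ≠ 0 ∧ z.arg ∈ Set.Ioo a b} := by
  rw [isOpen_iff_mem_nhds]
  rintro z ⟨hz, h1, h2⟩
  have hslit : z ∈ Complex.slitPlane := by
    rw [Complex.mem_slitPlane_iff]
    by_contra hc
    push_neg at hc
    have hre : z.re < 0 := by
      rcases lt_or_eq_of_le hc.1 with h | h
      · exact h
      · exfalso
        apply hz
        apply Complex.ext <;> simp [← h, hc.2]
    have : z.arg = π := Complex.arg_eq_pi_iff.mpr ⟨hre, hc.2⟩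
    linarith [this ▸ h2]
  have hc : ContinuousAt Complex.arg z := Complex.continuousAt_arg hslit
  have hnb : Complex.arg ⁻¹' (Set.Ioo a b) ∈ nhds z :=
    hc.preimage_mem_nhds (Ioo_mem_nhds h1 h2)
  filter_upwards [hnb, Complex.isOpen_slitPlane.mem_nhds hslit] with w hw hw2
  exact ⟨Complex.slitPlane_ne_zero hw2, hw⟩


/-! ### The plane as `ℂ`, and linear functionals -/

def EC : EuclideanSpace ℝ (Fin 2) ≃ₗᵢ[ℝ] ℂ := Complex.orthonormalBasisOneI.repr.symm

lemma EC_re (x : EuclideanSpace ℝ (Fin 2)) : (EC x).re = x 0 := by simp [EC]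

lemma EC_im (x : EuclideanSpace ℝ (Fin 2)) : (EC x).im = x 1 := by simp [EC]

lemma EC_eq_zero_iff {x : EuclideanSpace ℝ (Fin 2)} : EC x = 0 ↔ x 0 = 0 ∧ x 1 = 0 := by
  rw [Complex.ext_iff, EC_re, EC_im]
  simp

def lf (a b : ℝ) : EuclideanSpace ℝ (Fin 2) →ₗ[ℝ] ℝ where
  toFun x := a * x 0 + b * x 1
  map_add' x y := by simp [PiLp.add_apply]; ring
  map_smul' c x := by simp [PiLp.smul_apply, smul_eq_mul]; ring

lemma bg_le (a b c : ℝ) :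
    BoolGen (halfSpaces 2) {x : EuclideanSpace ℝ (Fin 2) | a * x 0 + b * x 1 ≤ c} :=
  BoolGen.base _ ⟨lf a b, c, rfl⟩

lemma bg_lt (a b c : ℝ) :
    BoolGen (halfSpaces 2) {x : EuclideanSpace ℝ (Fin 2) | a * x 0 + b * x 1 < c} := by
  have h := BoolGen.compl _ (bg_le (-a) (-b) (-c))
  convert h using 1
  ext x
  simp only [Set.mem_compl_iff, Set.mem_setOf_eq, not_le]
  constructor <;> intro h <;> linarith

lemma bg_eq (a b c : ℝ) :
    BoolGen (halfSpaces 2) {x : EuclideanSpace ℝ (Fin 2) | a * x 0 + b * x 1 = c} := by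
  have h := BoolGen.inter _ _ (bg_le a b c) (bg_le (-a) (-b) (-c))
  convert h using 1
  ext x
  simp only [Set.mem_inter_iff, Set.mem_setOf_eq]
  constructor
  · intro h; constructor <;> linarith
  · rintro ⟨h1, h2⟩; linarith

/-! ### The crown map -/

def crownMap (n : ℕ) (hn : 1 ≤ n) (x : EuclideanSpace ℝ (Fin 2)) : Fin (2*n+1) :=
  ⟨fval n (EC x), fval_lt hn⟩

lemma crownRel_root {n : ℕ} {w y : Fin (2*n+1)} (h : w.val = 0) : crownRel n w y :=
  Or.inr (Or.inl h)

lemma crownRel_odd_iff {n : ℕ} {w y : Fin (2*n+1)} (h : w.val % 2 = 1) :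
    crownRel n w y ↔ y = w := by
  unfold crownRel
  constructor
  · rintro (rfl | h0 | ⟨he, -, -⟩)
    · rfl
    · omega
    · omega
  · rintro rfl; exact Or.inl rfl

lemma crownRel_even_iff {n : ℕ} {w y : Fin (2*n+1)} (h : w.val % 2 = 0) (h0 : w.val ≠ 0) :
    crownRel n w y ↔
      (y.val = w.val ∨ y.val + 1 = w.val ∨ y.val = w.val + 1 ∨ (w.val = 2*n ∧ y.val = 1)) := by
  unfold crownRel
  constructor
  · rintro (rfl | h0' | ⟨-, -, hc⟩)
    · exact Or.inl rfl
    · omega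
    · exact Or.inr hc
  · rintro (h1 | h1)
    · exact Or.inl (Fin.ext h1.symm)
    · exact Or.inr (Or.inr ⟨h, h0, h1⟩)

/-! ### structure of fval -/

lemma fval_spec {n : ℕ} {z : ℂ} (hn : 1 ≤ n) (hz : z ≠ 0) :
    ∃ k, 1 ≤ k ∧ k ≤ n ∧ ((fval n z = 2*k ∧ z.arg = theta n k) ∨
      (fval n z = 2*k - 1 ∧ theta n (k-1) < z.arg ∧ z.arg < theta n k)) := by
  obtain ⟨hk1, hk2⟩ := kIdx_mem (n := n) (z := z) hn
  refine ⟨kIdx n z, hk1, hk2, ?_⟩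
  by_cases h2 : argU n z = (kIdx n z : ℝ)
  · left
    have hf : fval n z = 2 * kIdx n z := by
      unfold fval; rw [if_neg hz, if_pos h2]; omega
    exact ⟨hf, (argU_eq_iff hn).mp h2⟩
  · right
    have hf : fval n z = 2 * kIdx n z - 1 := by
      unfold fval; rw [if_neg hz, if_neg h2]
    exact ⟨hf, ((fval_eq_odd_iff hn hk1 hk2).mp hf).2⟩

lemma theta_sub_one {n k : ℕ} (hn : 1 ≤ n) (hk : 1 ≤ k) :
    theta n (k-1) = theta n k - 2*π/n := by
  have hn' : (0:ℝ) < n := by exact_mod_cast hn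
  unfold theta
  rw [Nat.cast_sub hk]
  push_cast
  field_simp
  ring

lemma theta_succ {n k : ℕ} (hn : 1 ≤ n) :
    theta n (k+1) = theta n k + 2*π/n := by
  have hn' : (0:ℝ) < n := by exact_mod_cast hn
  unfold theta
  push_cast
  field_simp
  ring

lemma theta_one {n : ℕ} (hn : 1 ≤ n) : theta n 1 = 2*π/n - π := by
  unfold theta; norm_num

lemma two_pi_div_pos {n : ℕ} (hn : 1 ≤ n) : 0 < 2*π/n := by
  have hn' : (0:ℝ) < n := by exact_mod_cast hn
  have := Real.pi_pos
  positivity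

lemma two_pi_div_le {n : ℕ} (hn : 2 ≤ n) : 2*π/n ≤ π := by
  have hn' : (2:ℝ) ≤ n := by exact_mod_cast hn
  have := Real.pi_pos
  rw [div_le_iff₀ (by linarith)]
  nlinarith

/-! ### union iffs for upsets -/

lemma fval_union_iff {n k : ℕ} {z : ℂ} (hn : 1 ≤ n) (hk1 : 1 ≤ k) (hklt : k < n) :
    (fval n z = 2*k - 1 ∨ fval n z = 2*k ∨ fval n z = 2*k + 1) ↔
      (z ≠ 0 ∧ theta n (k-1) < z.arg ∧ z.arg < theta n (k+1)) := by
  have e1 := fval_eq_odd_iff (n := n) (z := z) hn hk1 hklt.le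
  have e2 := fval_eq_even_iff (n := n) (z := z) hn hk1 hklt.le
  have e3 := fval_eq_odd_iff (n := n) (z := z) (k := k+1) hn (by omega) hklt
  have hrw : 2*(k+1) - 1 = 2*k + 1 := by omega
  rw [hrw] at e3
  simp only [Nat.add_sub_cancel] at e3
  rw [e1, e2, e3]
  constructor
  · rintro (⟨hz, h1, h2⟩ | ⟨hz, h1⟩ | ⟨hz, h1, h2⟩)
    · exact ⟨hz, h1, lt_trans h2 (theta_strict_mono hn (by omega))⟩
    · rw [h1]
      exact ⟨hz, theta_strict_mono hn (by omega), theta_strict_mono hn (by omega)⟩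
    · exact ⟨hz, lt_trans (theta_strict_mono hn (by omega)) h1, h2⟩
  · rintro ⟨hz, h1, h2⟩
    rcases lt_trichotomy z.arg (theta n k) with hc | hc | hc
    · exact Or.inl ⟨hz, h1, hc⟩
    · exact Or.inr (Or.inl ⟨hz, hc⟩)
    · exact Or.inr (Or.inr ⟨hz, hc, h2⟩)

lemma fval_top_iff {n : ℕ} {z : ℂ} (hn : 1 ≤ n) :
    (fval n z = 2*n - 1 ∨ fval n z = 2*n ∨ fval n z = 1) ↔
      (z ≠ 0 ∧ (theta n (n-1) < z.arg ∨ z.arg < theta n 1)) := by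
  have e1 := fval_eq_odd_iff (n := n) (z := z) (k := n) hn hn le_rfl
  have e2 := fval_eq_even_iff (n := n) (z := z) (k := n) hn hn le_rfl
  have e3 := fval_eq_odd_iff (n := n) (z := z) (k := 1) hn le_rfl hn
  have hrw : 2*1 - 1 = 1 := by omega
  rw [hrw] at e3
  norm_num at e3
  rw [e1, e2, e3]
  have harg1 := (Complex.arg_mem_Ioc z).1
  have harg2 := (Complex.arg_mem_Ioc z).2
  constructor
  · rintro (⟨hz, h1, h2⟩ | ⟨hz, h1⟩ | ⟨hz, h1, h2⟩)
    · exact ⟨hz, Or.inl h1⟩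
    · rw [h1]
      exact ⟨hz, Or.inl (theta_strict_mono hn (by omega))⟩
    · exact ⟨hz, Or.inr h2⟩
  · rintro ⟨hz, h1 | h1⟩
    · rcases lt_trichotomy z.arg (theta n n) with hc | hc | hc
      · exact Or.inl ⟨hz, h1, hc⟩
      · exact Or.inr (Or.inl ⟨hz, hc⟩)
      · exfalso
        rw [theta_n hn] at hc
        linarith
    · refine Or.inr (Or.inr ⟨hz, ?_, h1⟩)
      rw [theta_zero]
      exact harg1

lemma top_sector_isOpen {n : ℕ} (hn2 : 2 ≤ n) :
    IsOpen {z : ℂ | z ≠ 0 ∧ (theta n (n-1) < z.arg ∨ z.arg < theta n 1)} := by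
  have hn : 1 ≤ n := by omega
  have hn' : (0:ℝ) < n := by exact_mod_cast hn
  have hpi := Real.pi_pos
  have hth1 : theta n 1 = 2*π/n - π := theta_one hn
  have hthn1 : theta n (n-1) = π - 2*π/n := by
    rw [theta_sub_one hn hn, theta_n hn]
  have h2n : 2*π/n ≤ π := two_pi_div_le hn2
  have hkey : {z : ℂ | z ≠ 0 ∧ (theta n (n-1) < z.arg ∨ z.arg < theta n 1)} =
      (fun z : ℂ => -z) ⁻¹' {z : ℂ | z ≠ 0 ∧ z.arg ∈ Set.Ioo (-(2*π/n)) (2*π/n)} := by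
    ext z
    simp only [Set.mem_setOf_eq, Set.mem_preimage, Set.mem_Ioo]
    constructor
    · rintro ⟨hz, hc⟩
      refine ⟨fun h => hz (neg_eq_zero.mp h), ?_⟩
      rcases hc with h1 | h1
      · have hpos : 0 < z.arg := by rw [hthn1] at h1; linarith
        rw [arg_neg_of_pos hz hpos]
        have := (Complex.arg_mem_Ioc z).2
        rw [hthn1] at h1
        constructor <;> linarith
      · have hle : z.arg ≤ 0 := by rw [hth1] at h1; linarith
        rw [arg_neg_of_nonpos hz hle]
        have := (Complex.arg_mem_Ioc z).1
        rw [hth1] at h1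
        constructor <;> linarith
    · rintro ⟨hznz, hs1, hs2⟩
      have hz : z ≠ 0 := fun h => hznz (by rw [h, neg_zero])
      refine ⟨hz, ?_⟩
      rcases le_or_gt z.arg 0 with hle | hpos
      · rw [arg_neg_of_nonpos hz hle] at hs2
        right; rw [hth1]; linarith
      · rw [arg_neg_of_pos hz hpos] at hs1
        left; rw [hthn1]; linarith
  rw [hkey]
  exact (sector_isOpen h2n).preimage continuous_neg

/-! ### openness of preimages of upsets -/

lemma isOpen_upset (n : ℕ) (hn : 1 ≤ n) (w : Fin (2*n+1)) :
    IsOpen {x : EuclideanSpace ℝ (Fin 2) | crownRel n w (crownMap n hn x)} := by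
  have hpi := Real.pi_pos
  rcases Nat.eq_zero_or_pos w.val with h0 | hpos
  · have hset : {x : EuclideanSpace ℝ (Fin 2) | crownRel n w (crownMap n hn x)} = Set.univ :=
      Set.eq_univ_of_forall (fun x => crownRel_root h0)
    rw [hset]; exact isOpen_univ
  rcases Nat.even_or_odd w.val with he | ho
  · -- even world 2k
    obtain ⟨k, hk1, hk2, hkv⟩ : ∃ k, 1 ≤ k ∧ k ≤ n ∧ w.val = 2*k := by
      rcases he with ⟨k, hk⟩
      have := w.isLt
      exact ⟨k, by omega, by omega, by omega⟩
    rcases lt_or_eq_of_le hk2 with hklt | hkeq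
    · -- k < n
      have hset : {x : EuclideanSpace ℝ (Fin 2) | crownRel n w (crownMap n hn x)} =
          EC ⁻¹' {z : ℂ | z ≠ 0 ∧ z.arg ∈ Set.Ioo (theta n (k-1)) (theta n (k+1))} := by
        ext x
        simp only [Set.mem_setOf_eq, Set.mem_preimage, Set.mem_Ioo]
        rw [crownRel_even_iff (by omega) (by omega)]
        have hval : (crownMap n hn x).val = fval n (EC x) := rfl
        rw [← fval_union_iff hn hk1 hklt]
        constructor
        · rintro (h1 | h1 | h1 | ⟨h2, h3⟩)
          · right; left; omega
          · left; omega
          · right; right; omega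
          · omega
        · rintro (h1 | h1 | h1)
          · right; left; omega
          · left; omega
          · right; right; left; omega
      rw [hset]
      have hb : theta n (k+1) ≤ π := by
        calc theta n (k+1) ≤ theta n n := theta_mono hn (by omega)
        _ = π := theta_n hn
      exact (sector_isOpen hb).preimage EC.continuous
    · -- k = n
      have hkvn : w.val = 2*n := by omega
      have hset : {x : EuclideanSpace ℝ (Fin 2) | crownRel n w (crownMap n hn x)} =
          EC ⁻¹' {z : ℂ | z ≠ 0 ∧ (theta n (n-1) < z.arg ∨ z.arg < theta n 1)} := by
        ext x
        simp only [Set.mem_setOf_eq, Set.mem_preimage]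
        rw [crownRel_even_iff (by omega) (by omega)]
        have hval : (crownMap n hn x).val = fval n (EC x) := rfl
        have hlt : fval n (EC x) < 2*n+1 := fval_lt hn
        rw [← fval_top_iff hn]
        constructor
        · rintro (h1 | h1 | h1 | ⟨h2, h3⟩)
          · right; left; omega
          · left; omega
          · omega
          · right; right; omega
        · rintro (h1 | h1 | h1)
          · right; left; omega
          · left; omega
          · right; right; right; exact ⟨by omega, by omega⟩
      rw [hset]
      rcases lt_or_eq_of_le hn with hn2 | hn1
      · exact (top_sector_isOpen (by omega)).preimage EC.continuous
      · -- n = 1 : the set is {z ≠ 0}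
        have hset2 : {z : ℂ | z ≠ 0 ∧ (theta n (n-1) < z.arg ∨ z.arg < theta n 1)} =
            {(0:ℂ)}ᶜ := by
          ext z
          simp only [Set.mem_setOf_eq, Set.mem_compl_iff, Set.mem_singleton_iff]
          constructor
          · rintro ⟨hz, -⟩; exact hz
          · intro hz
            refine ⟨hz, Or.inl ?_⟩
            have : theta n (n-1) = -π := by
              rw [← hn1]; norm_num [theta_zero]
            rw [this]
            exact (Complex.arg_mem_Ioc z).1
        rw [hset2]
        exact isOpen_compl_singleton.preimage EC.continuous
  · -- odd world 2k-1 : singleton upset, open sector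
    obtain ⟨k, hk1, hk2, hkv⟩ : ∃ k, 1 ≤ k ∧ k ≤ n ∧ w.val = 2*k - 1 := by
      rcases ho with ⟨k, hk⟩
      have := w.isLt
      exact ⟨k+1, by omega, by omega, by omega⟩
    have hset : {x : EuclideanSpace ℝ (Fin 2) | crownRel n w (crownMap n hn x)} =
        EC ⁻¹' {z : ℂ | z ≠ 0 ∧ z.arg ∈ Set.Ioo (theta n (k-1)) (theta n k)} := by
      ext x
      simp only [Set.mem_setOf_eq, Set.mem_preimage, Set.mem_Ioo]
      rw [crownRel_odd_iff (by omega), Fin.ext_iff]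
      have hval : (crownMap n hn x).val = fval n (EC x) := rfl
      rw [hval, hkv, ← fval_eq_odd_iff hn hk1 hk2]
    rw [hset]
    have hb : theta n k ≤ π := by
      calc theta n k ≤ theta n n := theta_mono hn hk2
      _ = π := theta_n hn
    exact (sector_isOpen hb).preimage EC.continuous

/-! ### surjectivity witnesses -/

lemma exists_fval {n : ℕ} (hn : 1 ≤ n) {m : ℕ} (hm1 : 1 ≤ m) (hm2 : m ≤ 2*n)
    {r : ℝ} (hr : 0 < r) : ∃ z : ℂ, ‖z‖ = r ∧ fval n z = m := by
  have hpi := Real.pi_pos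
  have hn' : (0:ℝ) < n := by exact_mod_cast hn
  rcases Nat.even_or_odd m with he | ho
  · obtain ⟨k, hk1, hk2, rfl⟩ : ∃ k, 1 ≤ k ∧ k ≤ n ∧ m = 2*k := by
      rcases he with ⟨k, hk⟩; exact ⟨k, by omega, by omega, by omega⟩
    refine ⟨polar r (theta n k), abs_polar hr.le _, ?_⟩
    rw [fval_eq_even_iff hn hk1 hk2]
    exact ⟨polar_ne hr, arg_polar hr (theta_mem hn hk1 hk2)⟩
  · obtain ⟨k, hk1, hk2, rfl⟩ : ∃ k, 1 ≤ k ∧ k ≤ n ∧ m = 2*k - 1 := by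
      rcases ho with ⟨k, hk⟩; exact ⟨k+1, by omega, by omega, by omega⟩
    have hθa : theta n (k-1) = theta n k - 2*π/n := theta_sub_one hn hk1
    have hd := two_pi_div_pos hn
    have hmem := theta_mem hn hk1 hk2
    have hmem0 : -π ≤ theta n (k-1) := by
      rw [← theta_zero n]
      exact theta_mono hn (by omega)
    refine ⟨polar r (theta n k - π/n), abs_polar hr.le _, ?_⟩
    rw [fval_eq_odd_iff hn hk1 hk2]
    have hhalf : π/(n:ℝ) < 2*π/n := by
      rw [div_lt_div_iff₀ hn' hn']; nlinarith
    rw [hθa] at hmem0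
    have hio : theta n k - π/n ∈ Set.Ioc (-π) π := by
      constructor
      · linarith
      · have : 0 < π/n := by positivity
        linarith [hmem.2]
    rw [arg_polar hr hio]
    refine ⟨polar_ne hr, ?_, ?_⟩
    · rw [hθa]
      linarith
    · have : 0 < π/n := by positivity
      linarith

/-! ### approximation points for openness -/

lemma approx_point {x : EuclideanSpace ℝ (Fin 2)} {U : Set (EuclideanSpace ℝ (Fin 2))}
    (hU : IsOpen U) (hxU : x ∈ U) {r θ0 : ℝ} (hθ0 : EC.symm (polar r θ0) = x)
    (s : ℝ) {c : ℝ} (hc : 0 < c) :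
    ∃ δ : ℝ, 0 < δ ∧ δ < c ∧ EC.symm (polar r (θ0 + s*δ)) ∈ U := by
  have hcont : ContinuousAt (fun δ : ℝ => EC.symm (polar r (θ0 + s*δ))) 0 := by
    apply Continuous.continuousAt
    apply EC.symm.continuous.comp
    exact (continuous_polar r).comp (continuous_const.add (continuous_const.mul continuous_id))
  have h0 : EC.symm (polar r (θ0 + s*0)) = x := by
    rw [mul_zero, add_zero]; exact hθ0
  have hev : ∀ᶠ δ in nhds (0:ℝ), EC.symm (polar r (θ0 + s*δ)) ∈ U := by
    apply hcont.eventually_mem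
    rw [h0]
    exact hU.mem_nhds hxU
  rw [Metric.eventually_nhds_iff] at hev
  obtain ⟨ε, hε, hball⟩ := hev
  have h2 : (0:ℝ) < min (ε/2) (c/2) := by positivity
  refine ⟨min (ε/2) (c/2), h2, ?_, ?_⟩
  · calc min (ε/2) (c/2) ≤ c/2 := min_le_right _ _
    _ < c := by linarith
  · apply hball
    rw [Real.dist_eq, sub_zero, abs_of_pos h2]
    calc min (ε/2) (c/2) ≤ ε/2 := min_le_left _ _
    _ < ε := by linarith

/-! ### the `n = 1` sector as a boolean combination -/

lemma n1_fiber (z : ℂ) : (z ≠ 0 ∧ -π < z.arg ∧ z.arg < π) ↔ ¬(z.im = 0 ∧ z.re ≤ 0) := by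
  constructor
  · rintro ⟨hz, -, h2⟩ ⟨him, hre⟩
    have hre' : z.re < 0 := by
      rcases lt_or_eq_of_le hre with h | h
      · exact h
      · exfalso
        apply hz
        apply Complex.ext <;> simp [h, him]
    have := Complex.arg_eq_pi_iff.mpr ⟨hre', him⟩
    linarith
  · intro hc
    have hz : z ≠ 0 := by rintro rfl; exact hc ⟨rfl, le_rfl⟩
    refine ⟨hz, (Complex.arg_mem_Ioc z).1, ?_⟩
    rcases lt_or_eq_of_le (Complex.arg_mem_Ioc z).2 with h | h
    · exact h
    · exact absurd (Complex.arg_eq_pi_iff.mp h) (fun hh => hc ⟨hh.2, hh.1.le⟩)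

end CrownAux
end

open Complex Real Set CrownAux

set_option maxHeartbeats 1000000 in
/-- Every crown frame is an interior image of the polygonal plane: there is a surjective
continuous open map from `ℝ²` onto `𝔠_n` (with the Alexandroff topology) all of whose
fibers are polygons (elements of `P₂`). -/
theorem crown_interior_image_of_polygonal_plane (n : ℕ) (hn : 1 ≤ n) :
    ∃ f : EuclideanSpace ℝ (Fin 2) → Fin (2 * n + 1),
      Function.Surjective f ∧
      @Continuous _ _ _ (crownTop n) f ∧
      @IsOpenMap _ _ _ (crownTop n) f ∧
      ∀ w : Fin (2 * n + 1), BoolGen (halfSpaces 2) (f ⁻¹' {w}) := by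
  have hpi := Real.pi_pos
  refine ⟨crownMap n hn, ?_, ?_, ?_, ?_⟩
  · -- surjectivity
    intro w
    by_cases h0 : w.val = 0
    · refine ⟨0, Fin.ext ?_⟩
      show fval n (EC 0) = w.val
      rw [map_zero, h0]
      simp [fval]
    · obtain ⟨z, -, hfv⟩ := exists_fval hn (m := w.val) (by omega)
        (by have := w.isLt; omega) (r := 1) one_pos
      refine ⟨EC.symm z, Fin.ext ?_⟩
      show fval n (EC (EC.symm z)) = w.val
      rw [EC.apply_symm_apply]
      exact hfv
  · -- continuity
    rw [continuous_def]
    intro U hU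
    have hU' : ∀ a ∈ U, ∀ y, crownRel n a y → y ∈ U := hU
    have hset : crownMap n hn ⁻¹' U =
        ⋃ w ∈ U, {x | crownRel n w (crownMap n hn x)} := by
      ext x
      simp only [Set.mem_preimage, Set.mem_iUnion, Set.mem_setOf_eq, exists_prop]
      constructor
      · intro hx
        exact ⟨crownMap n hn x, hx, Or.inl rfl⟩
      · rintro ⟨w, hw, hrel⟩
        exact hU' w hw _ hrel
    rw [hset]
    exact isOpen_biUnion (fun w _ => isOpen_upset n hn w)
  · -- open map
    intro U hU
    show ∀ a ∈ crownMap n hn '' U, ∀ y, crownRel n a y → y ∈ crownMap n hn '' U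
    rintro a ⟨x, hxU, rfl⟩ y hrel
    by_cases hz : EC x = 0
    · -- root point
      by_cases hy0 : y.val = 0
      · refine ⟨x, hxU, Fin.ext ?_⟩
        show fval n (EC x) = y.val
        rw [hz, hy0]
        simp [fval]
      · obtain ⟨ε, hε, hball⟩ := Metric.isOpen_iff.mp hU x hxU
        obtain ⟨z', habs, hfv⟩ := exists_fval hn (m := y.val) (by omega)
          (by have := y.isLt; omega) (r := ε/2) (by positivity)
        refine ⟨EC.symm z', hball ?_, Fin.ext ?_⟩
        · show dist (EC.symm z') x < ε
          have hx' : EC.symm (0:ℂ) = x := by rw [← hz, EC.symm_apply_apply]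
          rw [← hx', EC.symm.dist_map, dist_zero_right, habs]
          linarith
        · show fval n (EC (EC.symm z')) = y.val
          rw [EC.apply_symm_apply]
          exact hfv
    · obtain ⟨k, hk1, hk2, hcase⟩ := fval_spec hn hz
      rcases hcase with ⟨hfv, harg⟩ | ⟨hfv, -, -⟩
      · -- even point
        have hval : (crownMap n hn x).val = 2*k := hfv
        rw [crownRel_even_iff (by omega) (by omega)] at hrel
        rw [hval] at hrel
        set r : ℝ := ‖EC x‖ with hr_def
        have hr : 0 < r := norm_pos_iff.mpr hz
        have hrep : EC.symm (polar r (theta n k)) = x := by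
          rw [hr_def, ← harg, polar_abs_arg, EC.symm_apply_apply]
        have hd := two_pi_div_pos hn
        have hup : theta n k ≤ π := by
          calc theta n k ≤ theta n n := theta_mono hn hk2
          _ = π := theta_n hn
        have hlow : -π ≤ theta n (k-1) := by
          rw [← theta_zero n]; exact theta_mono hn (by omega)
        have hsub := theta_sub_one (n := n) hn hk1
        rcases hrel with h1 | h1 | h1 | ⟨h2, h3⟩
        · exact ⟨x, hxU, Fin.ext (by omega)⟩
        · -- neighbour 2k - 1
          obtain ⟨δ, hδ0, hδc, hpU⟩ := approx_point hU hxU hrep (-1) hd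
          refine ⟨_, hpU, Fin.ext ?_⟩
          show fval n (EC (EC.symm (polar r (theta n k + (-1)*δ)))) = y.val
          rw [EC.apply_symm_apply]
          have hyv : y.val = 2*k - 1 := by omega
          rw [hyv, fval_eq_odd_iff hn hk1 hk2]
          have hio : theta n k + (-1)*δ ∈ Set.Ioc (-π) π :=
            ⟨by linarith, by linarith⟩
          rw [arg_polar hr hio]
          exact ⟨polar_ne hr, by linarith, by linarith⟩
        · -- neighbour 2k + 1
          have hklt : k < n := by have := y.isLt; omega
          have hsucc := theta_succ (n := n) (k := k) hn
          have hup2 : theta n (k+1) ≤ π := by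
            calc theta n (k+1) ≤ theta n n := theta_mono hn (by omega)
            _ = π := theta_n hn
          have hlow2 : -π < theta n k := (theta_mem hn hk1 hk2).1
          obtain ⟨δ, hδ0, hδc, hpU⟩ := approx_point hU hxU hrep 1 hd
          refine ⟨_, hpU, Fin.ext ?_⟩
          show fval n (EC (EC.symm (polar r (theta n k + 1*δ)))) = y.val
          rw [EC.apply_symm_apply]
          have hyv : y.val = 2*(k+1) - 1 := by omega
          rw [hyv, fval_eq_odd_iff hn (k := k+1) (by omega) hklt]
          have hio : theta n k + 1*δ ∈ Set.Ioc (-π) π :=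
            ⟨by linarith, by linarith⟩
          rw [arg_polar hr hio]
          simp only [Nat.add_sub_cancel]
          exact ⟨polar_ne hr, by linarith, by linarith⟩
        · -- k = n, neighbour 1
          have hkn : k = n := by omega
          rw [hkn, theta_n hn] at hrep
          obtain ⟨δ, hδ0, hδc, hpU⟩ := approx_point hU hxU hrep 1 hd
          refine ⟨_, hpU, Fin.ext ?_⟩
          show fval n (EC (EC.symm (polar r (π + 1*δ)))) = y.val
          rw [EC.apply_symm_apply]
          have hpolar : polar r (π + 1*δ) = polar r (δ - π) := by
            rw [show π + 1*δ = (δ - π) + 2*π by ring, polar_add_two_pi]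
          rw [hpolar, h3, show (1:ℕ) = 2*1-1 by norm_num,
            fval_eq_odd_iff hn (k := 1) le_rfl hn]
          have h2pile : 2*π/n ≤ 2*π :=
            div_le_self (by positivity) (by exact_mod_cast hn)
          have hdn : 2*π/n ≤ 2*π/1 := by
            apply div_le_div_of_nonneg_left (by positivity) (by norm_num)
            exact_mod_cast hn
          have hio : δ - π ∈ Set.Ioc (-π) π := ⟨by linarith, by linarith⟩
          rw [arg_polar hr hio]
          refine ⟨polar_ne hr, ?_, ?_⟩
          · show theta n (1-1) < δ - π
            norm_num [theta_zero]
            linarith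
          · rw [theta_one hn]
            linarith
      · -- odd point : reflexive successor only
        have hval : (crownMap n hn x).val = 2*k - 1 := hfv
        rw [crownRel_odd_iff (by omega)] at hrel
        exact ⟨x, hxU, hrel.symm⟩
  · -- polygonal fibers
    intro w
    have hpre : crownMap n hn ⁻¹' {w} = {x | fval n (EC x) = w.val} := by
      ext x
      rw [Set.mem_preimage, Set.mem_singleton_iff, Fin.ext_iff]
      exact Iff.rfl
    rw [hpre]
    by_cases h0 : w.val = 0
    · have hset : {x | fval n (EC x) = w.val} =
          {x : EuclideanSpace ℝ (Fin 2) | 1 * x 0 + 0 * x 1 = 0} ∩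
          {x | 0 * x 0 + 1 * x 1 = 0} := by
        ext x
        rw [Set.mem_inter_iff]
        simp only [Set.mem_setOf_eq, h0, one_mul, zero_mul, add_zero, zero_add]
        rw [fval_eq_zero_iff hn, EC_eq_zero_iff]
      rw [hset]
      exact BoolGen.inter _ _ (bg_eq 1 0 0) (bg_eq 0 1 0)
    rcases Nat.even_or_odd w.val with he | ho
    · -- ray fiber
      obtain ⟨k, hk1, hk2, hkv⟩ : ∃ k, 1 ≤ k ∧ k ≤ n ∧ w.val = 2*k := by
        rcases he with ⟨k, hk⟩
        have := w.isLt
        exact ⟨k, by omega, by omega, by omega⟩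
      have hray := ray_eq (theta_mem hn hk1 hk2)
      have hset : {x | fval n (EC x) = w.val} =
          {x : EuclideanSpace ℝ (Fin 2) |
            Real.sin (theta n k) * x 0 + (-Real.cos (theta n k)) * x 1 = 0} ∩
          {x | (-Real.cos (theta n k)) * x 0 + (-Real.sin (theta n k)) * x 1 < 0} := by
        ext x
        rw [Set.mem_inter_iff]
        simp only [Set.mem_setOf_eq, hkv]
        rw [fval_eq_even_iff hn hk1 hk2]
        have hmem := Set.ext_iff.mp hray (EC x)
        simp only [Set.mem_setOf_eq] at hmem
        rw [hmem]
        unfold DD CC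
        rw [EC_re, EC_im]
        constructor
        · rintro ⟨ha, hb⟩
          constructor <;> linarith
        · rintro ⟨ha, hb⟩
          constructor <;> linarith
      rw [hset]
      exact BoolGen.inter _ _ (bg_eq _ _ _) (bg_lt _ _ _)
    · -- sector fiber
      obtain ⟨k, hk1, hk2, hkv⟩ : ∃ k, 1 ≤ k ∧ k ≤ n ∧ w.val = 2*k - 1 := by
        rcases ho with ⟨k, hk⟩
        have := w.isLt
        exact ⟨k+1, by omega, by omega, by omega⟩
      rcases eq_or_lt_of_le hn with hn1 | hn2
      · -- n = 1 : complement of a closed ray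
        have hk : k = 1 := by omega
        subst hk
        have hn1' : n = 1 := hn1.symm
        have hset : {x | fval n (EC x) = w.val} =
            ({x : EuclideanSpace ℝ (Fin 2) | 0 * x 0 + 1 * x 1 = 0} ∩
             {x | 1 * x 0 + 0 * x 1 ≤ 0})ᶜ := by
          ext x
          simp only [Set.mem_compl_iff, Set.mem_inter_iff, Set.mem_setOf_eq,
            zero_mul, one_mul, add_zero, zero_add]
          rw [hkv, fval_eq_odd_iff hn le_rfl hk2]
          have ht0 : theta n 0 = -π := theta_zero n
          have ht1 : theta n 1 = π := by rw [hn1'] at hk2 ⊢; exact theta_n le_rfl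
          rw [show (1-1 : ℕ) = 0 from rfl, ht0, ht1, ← EC_re x, ← EC_im x]
          exact n1_fiber (EC x)
        rw [hset]
        exact BoolGen.compl _ (BoolGen.inter _ _ (bg_eq 0 1 0) (bg_le 1 0 0))
      · -- 2 ≤ n : intersection of two open half-planes
        have hlow : -π ≤ theta n (k-1) := by
          rw [← theta_zero n]; exact theta_mono hn (by omega)
        have hup : theta n k ≤ π := by
          calc theta n k ≤ theta n n := theta_mono hn hk2
          _ = π := theta_n hn
        have hsub := theta_sub_one (n := n) hn hk1
        have hd := two_pi_div_pos hn
        have h2n : 2*π/n ≤ π := two_pi_div_le (by omega)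
        have hsec := sector_eq (a := theta n (k-1)) (b := theta n k) hlow hup
          (by rw [hsub]; linarith) (by rw [hsub]; linarith)
        have hset : {x | fval n (EC x) = w.val} =
            {x : EuclideanSpace ℝ (Fin 2) |
              Real.sin (theta n (k-1)) * x 0 + (-Real.cos (theta n (k-1))) * x 1 < 0} ∩
            {x | (-Real.sin (theta n k)) * x 0 + (Real.cos (theta n k)) * x 1 < 0} := by
          ext x
          rw [Set.mem_inter_iff]
          simp only [Set.mem_setOf_eq, hkv]
          rw [fval_eq_odd_iff hn hk1 hk2]
          have hmem := Set.ext_iff.mp hsec (EC x)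
          simp only [Set.mem_setOf_eq, Set.mem_Ioo] at hmem
          rw [show (EC x ≠ 0 ∧ theta n (k-1) < (EC x).arg ∧ (EC x).arg < theta n k) ↔
            (DD (theta n (k-1)) (EC x) < 0 ∧ 0 < DD (theta n k) (EC x)) from hmem]
          unfold DD
          rw [EC_re, EC_im]
          constructor
          · rintro ⟨ha, hb⟩
            constructor <;> linarith
          · rintro ⟨ha, hb⟩
            constructor <;> linarith
        rw [hset]
        exact BoolGen.inter _ _ (bg_lt _ _ _) (bg_lt _ _ _)
end

section
/- For every modal formula φ: φ belongs to PL₂ (i.e., φ is true at every point of ℝ² under every valuation taking values in P₂) if and only if for every n ≥ 1, φ is true at every world of the crown frame 𝔠_n under every valuation assigning arbitrary subsets of S_n. Hence PL₂ is determined by the class of finite crown frames and has the finite model property. -/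
/-- Kripke semantics: the set of worlds of the frame `(W, R)` at which a formula is true. -/
def kripkeSem {W : Type*} (R : W → W → Prop) (ν : ℕ → Set W) : Fml → Set W
  | .bot => ∅
  | .var p => ν p
  | .neg φ => (kripkeSem R ν φ)ᶜ
  | .or φ ψ => kripkeSem R ν φ ∪ kripkeSem R ν ψ
  | .dia φ => {w | ∃ v, R w v ∧ v ∈ kripkeSem R ν φ}

open Complex Set Metric

noncomputable section
abbrev E2 := EuclideanSpace ℝ (Fin 2)

/-- Linear identification of the Euclidean plane with ℂ. -/
def toC : E2 →ₗ[ℝ] ℂ where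
  toFun y := ⟨y 0, y 1⟩
  map_add' y z := by
    apply Complex.ext <;> simp [EuclideanSpace]
  map_smul' c y := by
    apply Complex.ext <;> simp [EuclideanSpace]

def fromC : ℂ →ₗ[ℝ] E2 where
  toFun c := WithLp.toLp 2 ![c.re, c.im]
  map_add' y z := by
    ext i; fin_cases i <;> simp [EuclideanSpace]
  map_smul' c y := by
    ext i; fin_cases i <;> simp [EuclideanSpace]

@[simp] lemma toC_fromC (c : ℂ) : toC (fromC c) = c := by
  apply Complex.ext <;> simp [toC, fromC]

@[simp] lemma fromC_toC (y : E2) : fromC (toC y) = y := by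
  ext i; fin_cases i <;> simp [toC, fromC]

lemma toC_inj {y z : E2} (h : toC y = toC z) : y = z := by
  have := congrArg fromC h; simpa using this

@[simp] lemma toC_eq_zero {y : E2} : toC y = 0 ↔ y = 0 := by
  constructor
  · intro h; have := toC_inj (z := 0) (by simpa using h); exact this
  · rintro rfl; simp

lemma norm_toC (y : E2) : ‖toC y‖ = ‖y‖ := by
  rw [EuclideanSpace.norm_eq, Complex.norm_def, Complex.normSq_apply]
  simp [toC, Fin.sum_univ_two]
  ring_nf

lemma continuous_toC : Continuous toC := toC.continuous_of_finiteDimensional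
lemma continuous_fromC : Continuous fromC := fromC.continuous_of_finiteDimensional

/-- unit vector in direction θ -/
def dir (θ : ℝ) : E2 := fromC (Complex.exp (θ * I))

@[simp] lemma toC_dir (θ : ℝ) : toC (dir θ) = Complex.exp (θ * I) := by simp [dir]

lemma norm_dir (θ : ℝ) : ‖dir θ‖ = 1 := by
  rw [← norm_toC]; simp [dir]

lemma continuous_dir : Continuous dir := by
  apply continuous_fromC.comp
  exact Complex.continuous_exp.comp (by continuity)

lemma dir_ne_smul (x : E2) {r : ℝ} (hr : 0 < r) (θ : ℝ) : x + r • dir θ ≠ x := by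
  intro h
  have : r • dir θ = 0 := by
    have := congrArg (· - x) h; simpa [add_sub_cancel_left] using this
  have h2 : ‖r • dir θ‖ = 0 := by rw [this, norm_zero]
  rw [norm_smul, norm_dir, mul_one, Real.norm_eq_abs, abs_of_pos hr] at h2
  exact hr.ne' h2

/-- the angle of y as seen from x -/
def ang (x y : E2) : ℝ := Complex.arg (toC (y - x))

lemma ang_mem_Ioc (x y : E2) : ang x y ∈ Ioc (-Real.pi) Real.pi := Complex.arg_mem_Ioc _

lemma ang_add_smul_dir (x : E2) {r : ℝ} (hr : 0 < r) {θ : ℝ}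
    (hθ : θ ∈ Ioc (-Real.pi) Real.pi) : ang x (x + r • dir θ) = θ := by
  unfold ang
  have : toC (x + r • dir θ - x) = (r : ℂ) * Complex.exp (θ * I) := by
    rw [add_sub_cancel_left]; rw [map_smul]; simp [Complex.real_smul]
  rw [this, Complex.arg_real_mul _ hr, Complex.exp_mul_I]
  exact_mod_cast Complex.arg_cos_add_sin_mul_I hθ

/-- polar decomposition -/
lemma polar (x : E2) {y : E2} (h : y ≠ x) : y - x = ‖y - x‖ • dir (ang x y) := by
  apply toC_inj
  rw [map_smul, toC_dir]
  have := Complex.norm_mul_exp_arg_mul_I (toC (y - x))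
  rw [norm_toC] at this
  rw [Complex.real_smul]
  exact this.symm

end

open Set

def Fml.vars : Fml → Finset ℕ
  | .bot => ∅
  | .var p => {p}
  | .neg φ => φ.vars
  | .or φ ψ => φ.vars ∪ ψ.vars
  | .dia φ => φ.vars

lemma mem_closure_iff_inter {X : Type*} [TopologicalSpace X] {U T : Set X} {y : X}
    (hU : IsOpen U) (hy : y ∈ U) : y ∈ closure T ↔ y ∈ closure (T ∩ U) := by
  constructor
  · intro h
    rw [_root_.mem_closure_iff] at h ⊢
    intro V hV hyV
    obtain ⟨z, hz, hzT⟩ := h (V ∩ U) (hV.inter hU) ⟨hyV, hy⟩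
    exact ⟨z, hz.1, hzT, hz.2⟩
  · intro h
    exact closure_mono inter_subset_left h

/-- The master truth lemma. -/
lemma truthLemma {X W : Type*} [TopologicalSpace X] [Finite W]
    (R : W → W → Prop) (U : Set X) (hU : IsOpen U) (g : X → W)
    (ν : ℕ → Set X) (μ : ℕ → Set W) (ψ : Fml)
    (H1 : ∀ p ∈ ψ.vars, ∀ y ∈ U, (y ∈ ν p ↔ g y ∈ μ p))
    (H2 : ∀ y ∈ U, ∀ w, (y ∈ closure (U ∩ g ⁻¹' {w}) ↔ R (g y) w)) :
    ∀ y ∈ U, (y ∈ topoSem ν ψ ↔ g y ∈ kripkeSem R μ ψ) := by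
  induction ψ with
  | bot => intro y _; simp [topoSem, kripkeSem]
  | var p => intro y hy; exact H1 p (by simp [Fml.vars]) y hy
  | neg φ ih =>
    intro y hy
    have := ih (fun p hp => H1 p (by simpa [Fml.vars] using hp)) y hy
    simp [topoSem, kripkeSem, this]
  | or φ χ ih1 ih2 =>
    intro y hy
    have h1 := ih1 (fun p hp => H1 p (by simp [Fml.vars, hp])) y hy
    have h2 := ih2 (fun p hp => H1 p (by simp [Fml.vars, hp])) y hy
    simp [topoSem, kripkeSem, h1, h2]
  | dia φ ih =>
    intro y hy
    have ih' := ih (fun p hp => H1 p (by simpa [Fml.vars] using hp))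
    have key : topoSem ν φ ∩ U = ⋃ w ∈ kripkeSem R μ φ, (U ∩ g ⁻¹' {w}) := by
      ext z
      simp only [mem_inter_iff, mem_iUnion, mem_preimage, mem_singleton_iff]
      constructor
      · rintro ⟨hz, hzU⟩
        exact ⟨g z, (ih' z hzU).1 hz, hzU, rfl⟩
      · rintro ⟨w, hw, hzU, rfl⟩
        exact ⟨(ih' z hzU).2 hw, hzU⟩
    show y ∈ closure (topoSem ν φ) ↔ _
    rw [mem_closure_iff_inter hU hy, key,
      Set.Finite.closure_biUnion (Set.toFinite _) _]
    simp only [mem_iUnion]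
    constructor
    · rintro ⟨w, hw, hcl⟩
      exact ⟨w, (H2 y hy w).1 hcl, hw⟩
    · rintro ⟨w, hRw, hw⟩
      exact ⟨w, hw, (H2 y hy w).2 hRw⟩

open Set Metric

noncomputable section

def samesign (a b : ℝ) : Prop := (0 < a ↔ 0 < b) ∧ (a = 0 ↔ b = 0)

lemma samesign.refl (a : ℝ) : samesign a a := ⟨Iff.rfl, Iff.rfl⟩

lemma samesign_mul {r s t u : ℝ} (hr : 0 < r) (hs : 0 < s) (h : samesign t u) :
    samesign (r * t) (s * u) := by
  constructor
  · rw [mul_pos_iff_of_pos_left hr, mul_pos_iff_of_pos_left hs]; exact h.1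
  · rw [mul_eq_zero, mul_eq_zero]
    simp [hr.ne', hs.ne', h.2]

lemma samesign.nonpos_iff {a b : ℝ} (h : samesign a b) : a ≤ 0 ↔ b ≤ 0 := by
  rw [← not_lt, ← not_lt]; exact not_congr h.1

def SignDet (F : List (E2 →ₗ[ℝ] ℝ)) (x : E2) (ε : ℝ) (A : Set E2) : Prop :=
  ∀ y ∈ ball x ε, ∀ z ∈ ball x ε,
    (∀ l ∈ F, samesign (l (y - x)) (l (z - x))) → (y ∈ A ↔ z ∈ A)

lemma SignDet.mono {F F' : List (E2 →ₗ[ℝ] ℝ)} {x : E2} {ε ε' : ℝ} {A : Set E2}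
    (h : SignDet F x ε A) (hε : ε' ≤ ε) (hF : ∀ l ∈ F, l ∈ F') :
    SignDet F' x ε' A := by
  intro y hy z hz hsg
  exact h y (ball_subset_ball hε hy) z (ball_subset_ball hε hz)
    (fun l hl => hsg l (hF l hl))

lemma conical {A : Set E2} (hA : BoolGen (halfSpaces 2) A) (x : E2) :
    ∃ ε > 0, ∃ F : List (E2 →ₗ[ℝ] ℝ), SignDet F x ε A := by
  induction hA with
  | base A hAg =>
    obtain ⟨l, a, rfl⟩ := hAg
    rcases lt_trichotomy (l x) a with h | h | h
    · -- ball inside A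
      have hopen : IsOpen {y : E2 | l y < a} := by
        have : Continuous l := l.continuous_of_finiteDimensional
        exact isOpen_lt this continuous_const
      obtain ⟨ε, hε, hball⟩ := Metric.isOpen_iff.1 hopen x h
      refine ⟨ε, hε, [], fun y hy z hz _ => ?_⟩
      constructor
      · intro _; show l z ≤ a; exact le_of_lt (hball hz)
      · intro _; show l y ≤ a; exact le_of_lt (hball hy)
    · -- boundary
      refine ⟨1, one_pos, [l], fun y _ z _ hsg => ?_⟩
      have := (hsg l (by simp)).nonpos_iff
      simp only [map_sub, h, sub_nonpos] at this
      simpa [Set.mem_setOf_eq, ← h] using this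
    · -- ball outside A
      have hopen : IsOpen {y : E2 | a < l y} := by
        have : Continuous l := l.continuous_of_finiteDimensional
        exact isOpen_lt continuous_const this
      obtain ⟨ε, hε, hball⟩ := Metric.isOpen_iff.1 hopen x h
      refine ⟨ε, hε, [], fun y hy z hz _ => ?_⟩
      constructor
      · intro hyA; exact absurd (hball hy) (by simpa using hyA)
      · intro hzA; exact absurd (hball hz) (by simpa using hzA)
  | empty => exact ⟨1, one_pos, [], fun y _ z _ _ => by simp⟩
  | univ => exact ⟨1, one_pos, [], fun y _ z _ _ => by simp⟩
  | union A B _ _ ihA ihB =>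
    obtain ⟨ε1, hε1, F1, h1⟩ := ihA
    obtain ⟨ε2, hε2, F2, h2⟩ := ihB
    refine ⟨min ε1 ε2, lt_min hε1 hε2, F1 ++ F2, fun y hy z hz hsg => ?_⟩
    have hA := (h1.mono (min_le_left ε1 ε2) (fun l hl => List.mem_append_left _ hl)) y hy z hz hsg
    have hB := (h2.mono (min_le_right ε1 ε2) (fun l hl => List.mem_append_right _ hl)) y hy z hz hsg
    simp [Set.mem_union, hA, hB]
  | inter A B _ _ ihA ihB =>
    obtain ⟨ε1, hε1, F1, h1⟩ := ihA
    obtain ⟨ε2, hε2, F2, h2⟩ := ihB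
    refine ⟨min ε1 ε2, lt_min hε1 hε2, F1 ++ F2, fun y hy z hz hsg => ?_⟩
    have hA := (h1.mono (min_le_left ε1 ε2) (fun l hl => List.mem_append_left _ hl)) y hy z hz hsg
    have hB := (h2.mono (min_le_right ε1 ε2) (fun l hl => List.mem_append_right _ hl)) y hy z hz hsg
    simp [Set.mem_inter_iff, hA, hB]
  | compl A _ ihA =>
    obtain ⟨ε, hε, F, h⟩ := ihA
    exact ⟨ε, hε, F, fun y hy z hz hsg => not_congr (h y hy z hz hsg)⟩

/-- glue over a finite set of letters -/
lemma conical_finset (ν : ℕ → Set E2) (x : E2) (S : Finset ℕ)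
    (hν : ∀ p ∈ S, BoolGen (halfSpaces 2) (ν p)) :
    ∃ ε > 0, ∃ F : List (E2 →ₗ[ℝ] ℝ), ∀ p ∈ S, SignDet F x ε (ν p) := by
  classical
  induction S using Finset.induction with
  | empty => exact ⟨1, one_pos, [], by simp⟩
  | insert q T hp ih =>
    obtain ⟨ε1, hε1, F1, h1⟩ := ih (fun p hp => hν p (Finset.mem_insert_of_mem hp))
    obtain ⟨ε2, hε2, F2, h2⟩ := conical (hν q (Finset.mem_insert_self q T)) x
    refine ⟨min ε1 ε2, lt_min hε1 hε2, F1 ++ F2, fun p hpmem => ?_⟩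
    rcases Finset.mem_insert.1 hpmem with rfl | hpT
    · exact h2.mono (min_le_right ε1 ε2) (fun l hl => List.mem_append_right _ hl)
    · exact (h1 p hpT).mono (min_le_left ε1 ε2) (fun l hl => List.mem_append_left _ hl)

open scoped Classical in
/-- discarding zero functionals -/
lemma SignDet.filter_ne_zero {F : List (E2 →ₗ[ℝ] ℝ)} {x : E2} {ε : ℝ} {A : Set E2}
    (h : SignDet F x ε A) : SignDet (F.filter (fun l => decide (l ≠ 0))) x ε A := by
  classical
  intro y hy z hz hsg
  apply h y hy z hz
  intro l hl
  by_cases hl0 : l = 0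
  · subst hl0; simp [samesign.refl]
  · exact hsg l (by rw [List.mem_filter]; exact ⟨hl, by simpa using hl0⟩)

open Set Finset
open scoped Real

noncomputable section ThetaSec
variable (Θ : Finset ℝ)

/-- number of elements of Θ below θ -/
def cnt (θ : ℝ) : ℕ := (Θ.filter (· < θ)).card

/-- the i-th smallest element -/
def th (i : ℕ) (hi : i < Θ.card) : ℝ := (Θ.orderIsoOfFin rfl ⟨i, hi⟩ : ℝ)

variable {Θ}

lemma th_congr {i j : ℕ} (hi : i < Θ.card) (h : i = j) :
    th Θ i hi = th Θ j (h ▸ hi) := by subst h; rfl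

lemma th_mem {i : ℕ} (hi : i < Θ.card) : th Θ i hi ∈ Θ := (Θ.orderIsoOfFin rfl ⟨i, hi⟩).2

lemma th_lt_th {i j : ℕ} (hi : i < Θ.card) (hj : j < Θ.card) :
    th Θ i hi < th Θ j hj ↔ i < j := by
  unfold th
  rw [Subtype.coe_lt_coe, OrderIso.lt_iff_lt, Fin.mk_lt_mk]

lemma th_le_th {i j : ℕ} (hi : i < Θ.card) (hj : j < Θ.card) (h : i ≤ j) :
    th Θ i hi ≤ th Θ j hj := by
  rcases Nat.eq_or_lt_of_le h with he | hl
  · exact le_of_eq (th_congr hi he)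
  · exact le_of_lt ((th_lt_th hi hj).2 hl)

lemma th_inj {i j : ℕ} (hi : i < Θ.card) (hj : j < Θ.card)
    (h : th Θ i hi = th Θ j hj) : i = j := by
  by_contra hne
  rcases Nat.lt_or_ge i j with hlt | hge
  · exact absurd h (ne_of_lt ((th_lt_th hi hj).2 hlt))
  · have : j < i := lt_of_le_of_ne hge (Ne.symm hne)
    exact absurd h.symm (ne_of_lt ((th_lt_th hj hi).2 this))

lemma cnt_mono {a b : ℝ} (h : a ≤ b) : cnt Θ a ≤ cnt Θ b := by
  unfold cnt
  apply Finset.card_le_card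
  intro τ hτ
  rw [Finset.mem_filter] at hτ ⊢
  exact ⟨hτ.1, lt_of_lt_of_le hτ.2 h⟩

lemma cnt_th {i : ℕ} (hi : i < Θ.card) : cnt Θ (th Θ i hi) = i := by
  classical
  unfold cnt
  have hbij : (Θ.filter (· < th Θ i hi)).card = (Finset.range i).card := by
    refine Finset.card_bij' (i := fun τ hτ => (((Θ.orderIsoOfFin rfl).symm
        ⟨τ, (Finset.mem_filter.1 hτ).1⟩ : Fin Θ.card) : ℕ))
      (j := fun j hj => th Θ j (lt_trans (Finset.mem_range.1 hj) hi)) ?_ ?_ ?_ ?_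
    · intro τ hτ
      rw [Finset.mem_range]
      have hτ' := Finset.mem_filter.1 hτ
      have step : ((Θ.orderIsoOfFin rfl).symm ⟨τ, hτ'.1⟩ : Fin Θ.card) < ⟨i, hi⟩ := by
        rw [← OrderIso.lt_iff_lt (Θ.orderIsoOfFin rfl), OrderIso.apply_symm_apply]
        rw [← Subtype.coe_lt_coe]
        exact hτ'.2
      exact step
    · intro j hj
      rw [Finset.mem_filter]
      exact ⟨th_mem _, (th_lt_th _ hi).2 (Finset.mem_range.1 hj)⟩
    · intro τ hτ
      exact congrArg Subtype.val (OrderIso.apply_symm_apply (Θ.orderIsoOfFin rfl) _)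
    · intro j hj
      exact congrArg Fin.val (OrderIso.symm_apply_apply (Θ.orderIsoOfFin rfl) _)
  rw [Finset.card_range] at hbij
  exact hbij

lemma cnt_lt_card {θ : ℝ} (hθ : θ ∈ Θ) : cnt Θ θ < Θ.card := by
  classical
  apply Finset.card_lt_card
  refine Finset.ssubset_iff_of_subset (Finset.filter_subset _ _) |>.2
    ⟨θ, hθ, fun hmem => absurd (Finset.mem_filter.1 hmem).2 (lt_irrefl _)⟩

lemma th_cnt {θ : ℝ} (hθ : θ ∈ Θ) : th Θ (cnt Θ θ) (cnt_lt_card hθ) = θ := by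
  classical
  set i := ((Θ.orderIsoOfFin rfl).symm ⟨θ, hθ⟩ : Fin Θ.card) with hidef
  have hθi : th Θ i.1 i.2 = θ := by
    unfold th
    rw [Fin.eta, hidef, OrderIso.apply_symm_apply]
  have hc : cnt Θ θ = i.1 := by rw [← hθi]; exact cnt_th i.2
  rw [th_congr _ hc]
  exact hθi

/-- no elements of Θ in the open interval between consecutive elements. -/
lemma between_consec {i : ℕ} (hi1 : i + 1 < Θ.card) {ψ : ℝ}
    (h1 : th Θ i (by omega) < ψ) (h2 : ψ < th Θ (i+1) hi1) :
    cnt Θ ψ = i + 1 ∧ ψ ∉ Θ := by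
  classical
  have key : Θ.filter (· < ψ) = Θ.filter (· < th Θ (i+1) hi1) := by
    apply Finset.filter_congr
    intro τ hτ
    have hτi := th_cnt hτ
    constructor
    · intro h; exact lt_trans h h2
    · intro h
      have hji : cnt Θ τ ≤ i := by
        by_contra hc
        have hle : i + 1 ≤ cnt Θ τ := by omega
        have : th Θ (i+1) hi1 ≤ th Θ (cnt Θ τ) (cnt_lt_card hτ) := th_le_th _ _ hle
        rw [hτi] at this
        exact absurd h (not_lt.2 this)
      calc τ = th Θ (cnt Θ τ) (cnt_lt_card hτ) := hτi.symm
        _ ≤ th Θ i (by omega) := th_le_th _ _ hji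
        _ < ψ := h1
  have hcnt : cnt Θ ψ = i + 1 := by
    unfold cnt; rw [key]; exact cnt_th hi1
  refine ⟨hcnt, fun hψ => ?_⟩
  have hh := th_cnt hψ
  rw [th_congr _ hcnt] at hh
  rw [← hh] at h2
  exact lt_irrefl _ h2

lemma below_first {ψ : ℝ} (h0 : 0 < Θ.card) (h : ψ < th Θ 0 h0) :
    cnt Θ ψ = 0 ∧ ψ ∉ Θ := by
  classical
  have key : Θ.filter (· < ψ) = ∅ := by
    rw [Finset.filter_eq_empty_iff]
    intro τ hτ
    have hτi := th_cnt hτ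
    intro hc
    have hge : th Θ 0 h0 ≤ τ := by
      rw [← hτi]
      exact th_le_th _ _ (Nat.zero_le _)
    linarith
  have h2 : cnt Θ ψ = 0 := by unfold cnt; rw [key]; rfl
  refine ⟨h2, fun hψ => ?_⟩
  have hh := th_cnt hψ
  rw [th_congr _ h2] at hh
  rw [← hh] at h
  exact lt_irrefl _ h

lemma cnt_pi (hsub : ∀ θ ∈ Θ, θ ≤ π) (hπ : π ∈ Θ) : cnt Θ π = Θ.card - 1 := by
  classical
  unfold cnt
  have : Θ.filter (· < π) = Θ.erase π := by
    ext τ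
    simp only [Finset.mem_filter, Finset.mem_erase]
    constructor
    · rintro ⟨ha, hb⟩; exact ⟨ne_of_lt hb, ha⟩
    · rintro ⟨ha, hb⟩; exact ⟨hb, lt_of_le_of_ne (hsub τ hb) ha⟩
  rw [this, Finset.card_erase_of_mem hπ]

/-- the top element is π -/
lemma th_top (hsub : ∀ θ ∈ Θ, θ ≤ π) (hπ : π ∈ Θ) :
    th Θ (Θ.card - 1) (by have := Finset.card_pos.2 ⟨π, hπ⟩; omega) = π := by
  have hh := th_cnt hπ
  rw [th_congr _ (cnt_pi hsub hπ)] at hh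
  exact hh

lemma cnt_le_top {ψ : ℝ} (hsub : ∀ θ ∈ Θ, θ ≤ π) (hπ : π ∈ Θ)
    (hψ : ψ ≤ π) : cnt Θ ψ ≤ Θ.card - 1 := by
  have h1 : cnt Θ ψ ≤ cnt Θ π := cnt_mono hψ
  rw [cnt_pi hsub hπ] at h1
  exact h1

/-- inverse classification for non-elements -/
lemma sector_bounds_lo {ψ : ℝ} (hψ : ψ ∉ Θ) {c : ℕ} (hc : cnt Θ ψ = c)
    (hc1 : 1 ≤ c) (hcm : c < Θ.card) : th Θ (c-1) (by omega) < ψ := by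
  by_contra hle
  push_neg at hle
  have hmono : cnt Θ ψ ≤ cnt Θ (th Θ (c-1) (by omega)) := cnt_mono hle
  rw [cnt_th] at hmono
  omega

lemma sector_bounds_hi {ψ : ℝ} (hψ : ψ ∉ Θ) {c : ℕ} (hc : cnt Θ ψ = c)
    (hcm : c < Θ.card) : ψ < th Θ c hcm := by
  classical
  by_contra hle
  push_neg at hle
  have hne : th Θ c hcm ≠ ψ := fun h => hψ (h ▸ th_mem _)
  have hlt : th Θ c hcm < ψ := lt_of_le_of_ne hle hne
  have hss : Θ.filter (· < th Θ c hcm) ⊂ Θ.filter (· < ψ) := by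
    refine Finset.ssubset_iff_of_subset
      (fun τ hτ => ?_) |>.2 ⟨th Θ c hcm, Finset.mem_filter.2 ⟨th_mem _, hlt⟩,
        fun hmem => absurd (Finset.mem_filter.1 hmem).2 (lt_irrefl _)⟩
    rw [Finset.mem_filter] at hτ ⊢
    exact ⟨hτ.1, lt_trans hτ.2 hlt⟩
  have hcard := Finset.card_lt_card hss
  have e1 : (Θ.filter (· < th Θ c hcm)).card = c := cnt_th hcm
  have e2 : (Θ.filter (· < ψ)).card = c := hc
  omega

lemma sector_bounds_lo0 {ψ : ℝ} {c : ℕ} (hc : cnt Θ ψ = c)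
    (hc1 : 1 ≤ c) (hcm : c - 1 < Θ.card) : th Θ (c-1) hcm < ψ := by
  by_contra hle
  push_neg at hle
  have hmono : cnt Θ ψ ≤ cnt Θ (th Θ (c-1) hcm) := cnt_mono hle
  rw [cnt_th] at hmono
  omega

end ThetaSec

noncomputable section PartE
open Complex Set Metric
open scoped Real
/-- Arc neighborhood lemma -/
lemma arc_nbhd (x : E2) {y : E2} (hy : y ≠ x) {δ : ℝ} (hδ : 0 < δ) :
    ∃ V : Set E2, IsOpen V ∧ y ∈ V ∧
      ∀ z ∈ V, z ≠ x ∧ ∃ d : ℝ, |d| < δ ∧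
        ((ang x z : Real.Angle) = ((ang x y + d : ℝ) : Real.Angle)) := by
  have hyx : toC (y - x) ≠ 0 := by
    rw [Ne, toC_eq_zero, sub_eq_zero]; exact hy
  set q : E2 → ℂ := fun z => toC (z - x) / toC (y - x) with hq
  have hqc : Continuous q := by
    apply Continuous.div_const
    exact continuous_toC.comp (continuous_id.sub continuous_const)
  set W : Set ℂ := {c | c ∈ Complex.slitPlane ∧ |Complex.arg c| < δ} with hW
  have hWopen : IsOpen W := by
    rw [isOpen_iff_mem_nhds]
    rintro c ⟨hc1, hc2⟩
    have h1 : Complex.slitPlane ∈ nhds c := Complex.isOpen_slitPlane.mem_nhds hc1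
    have h2 : {z : ℂ | |Complex.arg z| < δ} ∈ nhds c := by
      have hcont := Complex.continuousAt_arg hc1
      have : ContinuousAt (fun z => |Complex.arg z|) c := hcont.abs
      exact this.preimage_mem_nhds (isOpen_Iio.mem_nhds hc2)
    filter_upwards [h1, h2] with z hz1 hz2 using ⟨hz1, hz2⟩
  refine ⟨q ⁻¹' W, hWopen.preimage hqc, ?_, ?_⟩
  · show q y ∈ W
    have : q y = 1 := by rw [hq]; exact div_self hyx
    rw [this]
    constructor
    · exact Complex.one_mem_slitPlane
    · simpa using hδ
  · rintro z hz
    obtain ⟨hz1, hz2⟩ := hz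
    have hqz : q z ≠ 0 := Complex.slitPlane_ne_zero hz1
    have hzx : toC (z - x) ≠ 0 := by
      intro h; apply hqz; rw [hq]; simp [h]
    have hzx' : z ≠ x := by
      intro h; apply hzx; rw [h]; simp
    refine ⟨hzx', Complex.arg (q z), hz2, ?_⟩
    have hfact : toC (z - x) = q z * toC (y - x) := by
      rw [hq]; simp only []
      rw [div_mul_cancel₀ _ hyx]
    unfold ang
    rw [hfact, Complex.arg_mul_coe_angle hqz hyx, Real.Angle.coe_add]
    exact add_comm _ _

/-- possible shifts by 2π -/
lemma angle_cases {θ ψ d : ℝ} (hθ : θ ∈ Ioc (-π) π) (hψ : ψ ∈ Ioc (-π) π)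
    (hd : |d| < 2*π) (h : ((θ : Real.Angle) = ((ψ + d : ℝ) : Real.Angle))) :
    θ = ψ + d ∨ θ = ψ + d - 2*π ∨ θ = ψ + d + 2*π := by
  obtain ⟨k, hk⟩ := Real.Angle.angle_eq_iff_two_pi_dvd_sub.1 h
  have hpi := Real.pi_pos
  have habs : |θ - (ψ + d)| < 4*π := by
    rw [abs_lt] at hd ⊢
    constructor <;> nlinarith [hθ.1, hθ.2, hψ.1, hψ.2, hd.1, hd.2]
  rw [hk] at habs
  have hk2 : |(k:ℝ)| < 2 := by
    rw [abs_mul, abs_mul] at habs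
    have : |(2:ℝ)| * |π| = 2*π := by rw [abs_of_pos Real.pi_pos]; norm_num
    rw [this] at habs
    nlinarith [abs_nonneg (k:ℝ)]
  have hk3 : k = 0 ∨ k = 1 ∨ k = -1 := by
    have : (-2:ℝ) < k := by have := (abs_lt.1 hk2).1; linarith
    have h2 : (k:ℝ) < 2 := (abs_lt.1 hk2).2
    have i1 : (-2:ℤ) < k := by exact_mod_cast this
    have i2 : k < 2 := by exact_mod_cast h2
    omega
  rcases hk3 with rfl | rfl | rfl
  · left; have : θ - (ψ + d) = 0 := by rw [hk]; simp
    linarith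
  · right; right
    have : θ - (ψ + d) = 2*π := by rw [hk]; simp
    linarith
  · right; left
    have : θ - (ψ + d) = -(2*π) := by rw [hk]; push_cast; ring
    linarith

/-- rotation gives closure membership -/
lemma mem_closure_rot (x : E2) {R : ℝ} (hR : 0 < R) (θ s : ℝ) (S : Set E2)
    (h : ∃ t0 > 0, ∀ t, 0 < t → t < t0 → x + R • dir (θ + s*t) ∈ S) :
    x + R • dir θ ∈ closure S := by
  obtain ⟨t0, ht0, hmem⟩ := h
  have hcont : Continuous (fun t : ℝ => x + R • dir (θ + s*t)) := by
    apply continuous_const.add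
    refine Continuous.const_smul (g := fun t : ℝ => dir (θ + s*t)) ?_ R
    exact continuous_dir.comp (continuous_const.add (continuous_const.mul continuous_id))
  have htend : Filter.Tendsto (fun t : ℝ => x + R • dir (θ + s*t))
      (nhdsWithin 0 (Ioi 0)) (nhds (x + R • dir θ)) := by
    have := hcont.tendsto 0
    simp only [mul_zero, add_zero] at this
    exact this.mono_left nhdsWithin_le_nhds
  apply mem_closure_of_tendsto htend
  filter_upwards [Ioo_mem_nhdsGT_of_mem (left_mem_Ico.2 ht0)] with t ht
  exact hmem t ht.1 ht.2

end PartE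

noncomputable section PartF
open Complex Set Metric
open scoped Real Classical

def crownRelN (n a b : ℕ) : Prop :=
  a = b ∨ a = 0 ∨ (a % 2 = 0 ∧ a ≠ 0 ∧ (b + 1 = a ∨ b = a + 1 ∨ (a = 2*n ∧ b = 1)))

variable (Θ : Finset ℝ) (x : E2)

/-- the cell-index map: root ↦ 0, ray at the i-th angle ↦ 2i+2, sectors ↦ odd -/
def gmap (y : E2) : ℕ :=
  if y = x then 0
  else if ang x y ∈ Θ then 2 * cnt Θ (ang x y) + 2 else 2 * cnt Θ (ang x y) + 1

/-- total version of th -/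
def thN (i : ℕ) : ℝ := if h : i < Θ.card then th Θ i h else 0

def repAng (w : ℕ) : ℝ :=
  if w % 2 = 0 then thN Θ ((w-2)/2)
  else if w = 1 then (-π + thN Θ 0)/2
  else (thN Θ ((w-3)/2) + thN Θ ((w-1)/2))/2

variable {Θ x}

section basic

lemma thN_eq {i : ℕ} (hi : i < Θ.card) : thN Θ i = th Θ i hi := dif_pos hi

lemma thN_mem {i : ℕ} (hi : i < Θ.card) : thN Θ i ∈ Θ := by
  rw [thN_eq hi]; exact th_mem hi

lemma thN_lt_thN {i j : ℕ} (hi : i < Θ.card) (hj : j < Θ.card) :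
    thN Θ i < thN Θ j ↔ i < j := by
  rw [thN_eq hi, thN_eq hj]; exact th_lt_th hi hj

lemma cnt_thN {i : ℕ} (hi : i < Θ.card) : cnt Θ (thN Θ i) = i := by
  rw [thN_eq hi]; exact cnt_th hi

lemma thN_cnt {θ : ℝ} (hθ : θ ∈ Θ) : thN Θ (cnt Θ θ) = θ := by
  rw [thN_eq (cnt_lt_card hθ)]; exact th_cnt hθ

lemma below_firstN {ψ : ℝ} (h0 : 0 < Θ.card) (h : ψ < thN Θ 0) :
    cnt Θ ψ = 0 ∧ ψ ∉ Θ := below_first h0 (by rw [← thN_eq h0]; exact h)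

lemma between_consecN {i : ℕ} (hi1 : i + 1 < Θ.card) {ψ : ℝ}
    (h1 : thN Θ i < ψ) (h2 : ψ < thN Θ (i+1)) : cnt Θ ψ = i + 1 ∧ ψ ∉ Θ :=
  between_consec hi1 (by rw [← thN_eq (by omega)]; exact h1)
    (by rw [← thN_eq hi1]; exact h2)

lemma sector_boundsN_lo {ψ : ℝ} (hψ : ψ ∉ Θ) {c : ℕ} (hc : cnt Θ ψ = c)
    (hc1 : 1 ≤ c) (hcm : c - 1 < Θ.card) : thN Θ (c-1) < ψ := by
  rw [thN_eq hcm]; exact sector_bounds_lo0 hc hc1 hcm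

lemma sector_boundsN_hi {ψ : ℝ} (hψ : ψ ∉ Θ) {c : ℕ} (hc : cnt Θ ψ = c)
    (hcm : c < Θ.card) : ψ < thN Θ c := by
  rw [thN_eq hcm]; exact sector_bounds_hi hψ hc hcm

lemma card_posΘ (hsub : ∀ θ ∈ Θ, θ ∈ Ioc (-π) π) (hπ : π ∈ Θ) : 0 < Θ.card := Finset.card_pos.2 ⟨π, hπ⟩

lemma thN_top (hsub : ∀ θ ∈ Θ, θ ∈ Ioc (-π) π) (hπ : π ∈ Θ) : thN Θ (Θ.card - 1) = π := by
  have h0 : 0 < Θ.card := card_posΘ hsub hπ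
  rw [thN_eq (by omega)]
  exact th_top (fun θ hθ => (hsub θ hθ).2) hπ

lemma thN_mem_Ioc (hsub : ∀ θ ∈ Θ, θ ∈ Ioc (-π) π) (hπ : π ∈ Θ) {i : ℕ} (hi : i < Θ.card) : thN Θ i ∈ Ioc (-π) π :=
  hsub _ (thN_mem hi)

lemma cnt_le_topN (hsub : ∀ θ ∈ Θ, θ ∈ Ioc (-π) π) (hπ : π ∈ Θ) {ψ : ℝ} (hψ : ψ ≤ π) : cnt Θ ψ ≤ Θ.card - 1 :=
  cnt_le_top (fun θ hθ => (hsub θ hθ).2) hπ hψ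

lemma gmap_self : gmap Θ x x = 0 := if_pos rfl

lemma gmap_eq_zero_iff {y : E2} : gmap Θ x y = 0 ↔ y = x := by
  unfold gmap
  split
  · simp_all
  · split <;> simp_all

lemma gmap_le (hsub : ∀ θ ∈ Θ, θ ∈ Ioc (-π) π) (hπ : π ∈ Θ) {y : E2} : gmap Θ x y ≤ 2 * Θ.card := by
  have h0 : 0 < Θ.card := card_posΘ hsub hπ
  unfold gmap
  split
  · omega
  · rename_i hyx
    split
    · rename_i hmem
      have := cnt_lt_card hmem
      omega
    · rename_i hmem
      have h1 : cnt Θ (ang x y) ≤ Θ.card - 1 :=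
        cnt_le_topN hsub hπ (ang_mem_Ioc x y).2
      omega

lemma gmap_smul {r : ℝ} (hr : 0 < r) {ψ : ℝ} (hψ : ψ ∈ Ioc (-π) π) :
    gmap Θ x (x + r • dir ψ) =
      if ψ ∈ Θ then 2 * cnt Θ ψ + 2 else 2 * cnt Θ ψ + 1 := by
  unfold gmap
  rw [if_neg (dir_ne_smul x hr ψ), ang_add_smul_dir x hr hψ]

lemma repAng_mem (hsub : ∀ θ ∈ Θ, θ ∈ Ioc (-π) π) (hπ : π ∈ Θ) {w : ℕ} (h1 : 1 ≤ w) (h2 : w ≤ 2 * Θ.card) :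
    repAng Θ w ∈ Ioc (-π) π := by
  have h0 : 0 < Θ.card := card_posΘ hsub hπ
  have hπpos := Real.pi_pos
  unfold repAng
  split
  · rename_i hev
    exact thN_mem_Ioc hsub hπ (by omega)
  · split
    · -- w = 1
      have hθ0 := thN_mem_Ioc hsub hπ h0
      constructor
      · have := hθ0.1; linarith
      · have := hθ0.2; linarith
    · rename_i hodd hne1
      have hc3 : 3 ≤ w := by omega
      have hka : (w-3)/2 < Θ.card := by omega
      have hkb : (w-1)/2 < Θ.card := by omega
      have ha := thN_mem_Ioc hsub hπ hka
      have hb := thN_mem_Ioc hsub hπ hkb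
      constructor
      · have := ha.1; have := hb.1; linarith
      · have := ha.2; have := hb.2; linarith

lemma gmap_rep (hsub : ∀ θ ∈ Θ, θ ∈ Ioc (-π) π) (hπ : π ∈ Θ) {w : ℕ} (h1 : 1 ≤ w) (h2 : w ≤ 2 * Θ.card) {r : ℝ} (hr : 0 < r) :
    gmap Θ x (x + r • dir (repAng Θ w)) = w := by
  have h0 : 0 < Θ.card := card_posΘ hsub hπ
  have hπpos := Real.pi_pos
  rw [gmap_smul hr (repAng_mem hsub hπ h1 h2)]
  unfold repAng
  split
  · rename_i hev
    have hi : (w-2)/2 < Θ.card := by omega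
    rw [if_pos (thN_mem hi), cnt_thN hi]
    omega
  · rename_i hodd
    split
    · rename_i hw1
      have hθ0 : thN Θ 0 ∈ Ioc (-π) π := thN_mem_Ioc hsub hπ h0
      have hlt : (-π + thN Θ 0)/2 < thN Θ 0 := by have := hθ0.1; linarith
      obtain ⟨hcnt, hnm⟩ := below_firstN h0 hlt
      rw [if_neg hnm, hcnt]
      omega
    · rename_i hne1
      have hc3 : 3 ≤ w := by omega
      set c := (w-1)/2 with hc
      have hc1 : 1 ≤ c := by omega
      have hcm : c < Θ.card := by omega
      have hcm1 : c - 1 < Θ.card := by omega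
      have hwc : (w-3)/2 = c - 1 := by omega
      rw [hwc]
      have hlt : thN Θ (c-1) < thN Θ c := (thN_lt_thN hcm1 hcm).2 (by omega)
      set ψ := (thN Θ (c-1) + thN Θ c)/2 with hψdef
      have hb1 : thN Θ (c-1) < ψ := by rw [hψdef]; linarith
      have hb2 : ψ < thN Θ c := by rw [hψdef]; linarith
      have hbc := between_consecN (i := c-1) (by omega : c - 1 + 1 < Θ.card)
        hb1 (by rw [show c - 1 + 1 = c by omega]; exact hb2)
      rw [if_neg hbc.2, hbc.1]
      omega

end basic
end PartF

noncomputable section PartF2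
open Complex Set Metric
open scoped Real Classical

variable {Θ : Finset ℝ} {x : E2}

lemma gmap_of_ne {z : E2} (hz : z ≠ x) :
    gmap Θ x z = if ang x z ∈ Θ then 2 * cnt Θ (ang x z) + 2
      else 2 * cnt Θ (ang x z) + 1 := if_neg hz

lemma class_sector (hsub : ∀ θ ∈ Θ, θ ∈ Ioc (-π) π) (hπ : π ∈ Θ)
    {y : E2} (hy : y ≠ x) (hsec : ang x y ∉ Θ) :
    ∃ V : Set E2, IsOpen V ∧ y ∈ V ∧ ∀ z ∈ V, gmap Θ x z = gmap Θ x y := by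
  have h0 : 0 < Θ.card := card_posΘ hsub hπ
  have hπpos := Real.pi_pos
  set θ := ang x y with hθdef
  have hθIoc : θ ∈ Ioc (-π) π := ang_mem_Ioc x y
  have hθlt : θ < π := lt_of_le_of_ne hθIoc.2 (fun h => hsec (h ▸ hπ))
  set c := cnt Θ θ with hc
  have hcm : c < Θ.card := by
    have := cnt_le_topN hsub hπ hθIoc.2; omega
  set lo : ℝ := if c = 0 then -π else thN Θ (c-1) with hlo
  have hlo1 : lo < θ := by
    by_cases h : c = 0
    · rw [hlo, if_pos h]; exact hθIoc.1
    · rw [hlo, if_neg h]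
      exact sector_boundsN_lo hsec hc.symm (by omega) (by omega)
  have hlo2 : -π ≤ lo := by
    by_cases h : c = 0
    · rw [hlo, if_pos h]
    · rw [hlo, if_neg h]
      exact le_of_lt (thN_mem_Ioc hsub hπ (by omega)).1
  have hhi : θ < thN Θ c := sector_boundsN_hi hsec hc.symm hcm
  have hhi2 : thN Θ c ≤ π := (thN_mem_Ioc hsub hπ hcm).2
  set δ := min (θ - lo) (thN Θ c - θ) with hδ
  have hδpos : 0 < δ := lt_min (by linarith) (by linarith)
  obtain ⟨V, hVopen, hyV, hV⟩ := arc_nbhd x hy hδpos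
  refine ⟨V, hVopen, hyV, fun z hz => ?_⟩
  obtain ⟨hzx, d, hd, hang⟩ := hV z hz
  have hzIoc : ang x z ∈ Ioc (-π) π := ang_mem_Ioc x z
  have hd2π : |d| < 2*π := lt_of_lt_of_le hd (by
    rw [hδ]
    refine (min_le_left _ _).trans ?_
    linarith)
  rcases angle_cases hzIoc hθIoc hd2π hang with hcase | hcase | hcase
  · -- ang z = θ + d
    have habs := abs_lt.1 hd
    have hb1 : lo < ang x z := by
      have hδle : δ ≤ θ - lo := by rw [hδ]; exact min_le_left _ _
      rw [hcase]
      linarith [habs.1]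
    have hb2 : ang x z < thN Θ c := by
      rw [hcase]
      have hδle : δ ≤ thN Θ c - θ := by rw [hδ]; exact min_le_right _ _
      have := habs.2
      linarith
    by_cases h : c = 0
    · rw [h] at hb2
      obtain ⟨hcnt, hnm⟩ := below_firstN h0 hb2
      rw [gmap_of_ne hzx, if_neg hnm, hcnt, gmap_of_ne hy, if_neg hsec, ← hc, h]
    · rw [hlo, if_neg h] at hb1
      obtain ⟨hcnt, hnm⟩ := between_consecN (i := c-1) (by omega) hb1
        (by rw [show c - 1 + 1 = c by omega]; exact hb2)
      rw [gmap_of_ne hzx, if_neg hnm, hcnt, gmap_of_ne hy, if_neg hsec, ← hc]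
      congr 1
      omega
  · -- ang z = θ + d - 2π : impossible
    exfalso
    have h1 : -π < ang x z := hzIoc.1
    rw [hcase] at h1
    have h2 : d > π - θ := by linarith
    have hδle : δ ≤ thN Θ c - θ := by rw [hδ]; exact min_le_right _ _
    have := abs_lt.1 hd
    linarith
  · -- ang z = θ + d + 2π : impossible
    exfalso
    have h1 : ang x z ≤ π := hzIoc.2
    rw [hcase] at h1
    have hδle : δ ≤ θ - lo := by rw [hδ]; exact min_le_left _ _
    have := abs_lt.1 hd
    linarith

lemma class_ray (hsub : ∀ θ ∈ Θ, θ ∈ Ioc (-π) π) (hπ : π ∈ Θ)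
    {y : E2} (hy : y ≠ x) (hray : ang x y ∈ Θ) :
    ∃ V : Set E2, IsOpen V ∧ y ∈ V ∧
      ∀ z ∈ V, crownRelN Θ.card (gmap Θ x y) (gmap Θ x z) := by
  have h0 : 0 < Θ.card := card_posΘ hsub hπ
  have hπpos := Real.pi_pos
  set m := Θ.card with hm
  set θ := ang x y with hθdef
  have hθIoc : θ ∈ Ioc (-π) π := ang_mem_Ioc x y
  set i := cnt Θ θ with hi
  have him : i < m := cnt_lt_card hray
  have hθi : thN Θ i = θ := thN_cnt hray
  have hgy : gmap Θ x y = 2*i + 2 := by rw [gmap_of_ne hy, if_pos hray]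
  set left : ℝ := if i = 0 then thN Θ 0 + π else thN Θ i - thN Θ (i-1) with hleft
  set right : ℝ := if i = m - 1 then thN Θ 0 + π else thN Θ (i+1) - thN Θ i
    with hright
  have hth0 : -π < thN Θ 0 := (thN_mem_Ioc hsub hπ h0).1
  have hleftpos : 0 < left := by
    by_cases h : i = 0
    · rw [hleft, if_pos h]; linarith
    · rw [hleft, if_neg h]
      have := (thN_lt_thN (show i-1 < m by omega) him).2 (by omega)
      linarith
  have hrightpos : 0 < right := by
    by_cases h : i = m - 1
    · rw [hright, if_pos h]; linarith
    · rw [hright, if_neg h]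
      have := (thN_lt_thN him (show i+1 < m by omega)).2 (by omega)
      linarith
  set δ := min (min left right) π with hδ
  have hδpos : 0 < δ := lt_min (lt_min hleftpos hrightpos) hπpos
  have hδleft : δ ≤ left := (min_le_left _ _).trans (min_le_left _ _)
  have hδright : δ ≤ right := (min_le_left _ _).trans (min_le_right _ _)
  have hδπ : δ ≤ π := min_le_right _ _
  obtain ⟨V, hVopen, hyV, hV⟩ := arc_nbhd x hy hδpos
  refine ⟨V, hVopen, hyV, fun z hz => ?_⟩
  obtain ⟨hzx, d, hd, hang⟩ := hV z hz
  have hzIoc : ang x z ∈ Ioc (-π) π := ang_mem_Ioc x z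
  have hd2π : |d| < 2*π := lt_of_lt_of_le hd (by linarith)
  have habs := abs_lt.1 hd
  rcases angle_cases hzIoc hθIoc hd2π hang with hcase | hcase | hcase
  · -- ang z = θ + d
    rcases lt_trichotomy d 0 with hdneg | rfl0 | hdpos
    · -- d < 0 : adjacent lower sector
      by_cases h : i = 0
      · have hb1 : -π < ang x z := hzIoc.1
        have hb2 : ang x z < thN Θ 0 := by
          rw [hcase, ← hθi, h]; linarith
        obtain ⟨hcnt, hnm⟩ := below_firstN h0 hb2
        rw [gmap_of_ne hzx, if_neg hnm, hcnt, hgy]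
        right; right
        refine ⟨by omega, by omega, Or.inl (by omega)⟩
      · have hleft' : left = thN Θ i - thN Θ (i-1) := by rw [hleft, if_neg h]
        have hb1 : thN Θ (i-1) < ang x z := by
          rw [hcase, ← hθi]
          have : -left ≤ -δ := by linarith
          rw [hleft'] at this
          linarith [habs.1]
        have hb2 : ang x z < thN Θ i := by rw [hcase, ← hθi]; linarith
        obtain ⟨hcnt, hnm⟩ := between_consecN (i := i-1) (by omega) hb1
          (by rw [show i - 1 + 1 = i by omega]; exact hb2)
        rw [gmap_of_ne hzx, if_neg hnm, hcnt, hgy]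
        right; right
        refine ⟨by omega, by omega, Or.inl (by omega)⟩
    · -- d = 0
      have hzz : ang x z = θ := by rw [hcase, rfl0, add_zero]
      left
      rw [gmap_of_ne hzx, gmap_of_ne hy, hzz]
    · -- d > 0 : adjacent upper sector
      have h : i ≠ m - 1 := by
        intro h
        have : thN Θ i = π := by rw [h]; exact thN_top hsub hπ
        have : ang x z > π := by rw [hcase, ← hθi]; linarith
        linarith [hzIoc.2]
      have hright' : right = thN Θ (i+1) - thN Θ i := by rw [hright, if_neg h]
      have hb1 : thN Θ i < ang x z := by rw [hcase, ← hθi]; linarith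
      have hb2 : ang x z < thN Θ (i+1) := by
        rw [hcase, ← hθi]
        rw [hright'] at hδright
        linarith [habs.2]
      obtain ⟨hcnt, hnm⟩ := between_consecN (i := i) (by omega) hb1 hb2
      rw [gmap_of_ne hzx, if_neg hnm, hcnt, hgy]
      right; right
      refine ⟨by omega, by omega, Or.inr (Or.inl (by omega))⟩
  · -- ang z = θ + d - 2π : the wrap case
    have h1 : -π < ang x z := hzIoc.1
    have hdpos : 0 < d := by
      rw [hcase] at h1
      have := hθIoc.2
      linarith
    have h : i = m - 1 := by
      by_contra h
      have hright' : right = thN Θ (i+1) - thN Θ i := by rw [hright, if_neg h]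
      have hup : thN Θ (i+1) ≤ π := (thN_mem_Ioc hsub hπ (by omega)).2
      rw [hcase] at h1
      rw [hright'] at hδright
      rw [← hθi] at h1
      linarith [habs.2]
    have hθpi : θ = π := by rw [← hθi, h]; exact thN_top hsub hπ
    have hright' : right = thN Θ 0 + π := by rw [hright, if_pos h]
    have hb2 : ang x z < thN Θ 0 := by
      rw [hcase, hθpi]
      rw [hright'] at hδright
      linarith [habs.2]
    obtain ⟨hcnt, hnm⟩ := below_firstN h0 hb2
    rw [gmap_of_ne hzx, if_neg hnm, hcnt, hgy]
    right; right
    refine ⟨by omega, by omega, Or.inr (Or.inr ⟨by omega, by omega⟩)⟩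
  · -- ang z = θ + d + 2π : impossible
    exfalso
    have h1 : ang x z ≤ π := hzIoc.2
    rw [hcase] at h1
    have hdneg : d ≤ -π - θ := by linarith
    by_cases h : i = 0
    · have : left = thN Θ 0 + π := by rw [hleft, if_pos h]
      rw [this] at hδleft
      rw [← hθi, h] at hdneg
      linarith [habs.1]
    · have hleft' : left = thN Θ i - thN Θ (i-1) := by rw [hleft, if_neg h]
      have hlow : -π < thN Θ (i-1) := (thN_mem_Ioc hsub hπ (by omega)).1
      rw [hleft'] at hδleft
      rw [← hθi] at hdneg
      linarith [habs.1]
end PartF2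

noncomputable section PartF3
open Complex Set Metric
open scoped Real Classical

variable {Θ : Finset ℝ} {x : E2}

lemma dist_add_smul_dir (x : E2) {r : ℝ} (hr : 0 ≤ r) (θ : ℝ) :
    dist (x + r • dir θ) x = r := by
  rw [dist_eq_norm, add_sub_cancel_left, norm_smul, norm_dir, mul_one,
    Real.norm_eq_abs, _root_.abs_of_nonneg hr]

lemma dir_neg_pi : dir (-π) = dir π := by
  unfold dir
  congr 1
  push_cast
  rw [neg_mul, Complex.exp_neg, Complex.exp_pi_mul_I]
  norm_num

/-- rotation into a fiber gives closure membership in the punctured ball model -/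
lemma rot_closure_into {ε R : ℝ} (hR : 0 < R) (hRε : R < ε) (θ s : ℝ) (w : ℕ)
    (h : ∃ t0 > 0, ∀ t, 0 < t → t < t0 → (θ + s*t ∈ Ioc (-π) π) ∧
      (if θ + s*t ∈ Θ then 2*cnt Θ (θ+s*t)+2 else 2*cnt Θ (θ+s*t)+1) = w) :
    x + R • dir θ ∈ closure (ball x ε ∩ {z | gmap Θ x z = w}) := by
  apply mem_closure_rot x hR θ s
  obtain ⟨t0, ht0, hmem⟩ := h
  refine ⟨t0, ht0, fun t ht1 ht2 => ⟨?_, ?_⟩⟩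
  · rw [mem_ball, dist_add_smul_dir x hR.le]; exact hRε
  · show gmap Θ x _ = w
    rw [gmap_smul hR (hmem t ht1 ht2).1]
    exact (hmem t ht1 ht2).2

/-- the H2 lemma: closure of fibers within the ball are exactly given by crownRelN -/
lemma closure_fiber_iff (hsub : ∀ θ ∈ Θ, θ ∈ Ioc (-π) π) (hπ : π ∈ Θ)
    {ε : ℝ} (hε : 0 < ε) {y : E2} (hy : y ∈ ball x ε) {w : ℕ} (hw : w ≤ 2*Θ.card) :
    (y ∈ closure (ball x ε ∩ {z | gmap Θ x z = w}) ↔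
      crownRelN Θ.card (gmap Θ x y) w) := by
  have h0 : 0 < Θ.card := card_posΘ hsub hπ
  have hπpos := Real.pi_pos
  by_cases hyx : y = x
  · subst hyx
    rw [gmap_self]
    constructor
    · intro _; exact Or.inr (Or.inl rfl)
    · intro _
      rcases Nat.eq_zero_or_pos w with rfl | hw1
      · exact subset_closure ⟨mem_ball_self hε, gmap_self⟩
      · rw [Metric.mem_closure_iff]
        intro δ hδ
        set r := min δ ε / 2 with hr
        have hrpos : 0 < r := by positivity
        have hrδ : r < δ := by
          have : min δ ε ≤ δ := min_le_left _ _
          rw [hr]; linarith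
        have hrε : r < ε := by
          have : min δ ε ≤ ε := min_le_right _ _
          rw [hr]; linarith
        refine ⟨y + r • dir (repAng Θ w), ⟨?_, ?_⟩, ?_⟩
        · rw [mem_ball, dist_add_smul_dir y hrpos.le]; exact hrε
        · exact gmap_rep hsub hπ hw1 hw hrpos
        · rw [dist_comm, dist_add_smul_dir y hrpos.le]; exact hrδ
  · have hR : 0 < ‖y - x‖ := by
      rw [norm_pos_iff, sub_ne_zero]; exact hyx
    have hRε : ‖y - x‖ < ε := by rw [← dist_eq_norm]; exact mem_ball.1 hy
    have hyrot : y = x + ‖y - x‖ • dir (ang x y) := by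
      have := polar x hyx
      rw [← this, add_sub_cancel]
    by_cases hray : ang x y ∈ Θ
    · -- y on a ray
      set i := cnt Θ (ang x y) with hidef
      have him : i < Θ.card := cnt_lt_card hray
      have hθi : thN Θ i = ang x y := thN_cnt hray
      have hgy : gmap Θ x y = 2*i + 2 := by rw [gmap_of_ne hyx, if_pos hray]
      have hθIoc : ang x y ∈ Ioc (-π) π := ang_mem_Ioc x y
      have hth0 : -π < thN Θ 0 := (thN_mem_Ioc hsub hπ h0).1
      constructor
      · intro hcl
        obtain ⟨V, hVopen, hyV, hV⟩ := class_ray hsub hπ hyx hray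
        rw [_root_.mem_closure_iff] at hcl
        obtain ⟨z, hzV, hzball, hzw⟩ := hcl V hVopen hyV
        have := hV z hzV
        rwa [hzw] at this
      · intro hrel
        rcases hrel with heq | h00 | ⟨hev, hne0, hor⟩
        · exact subset_closure ⟨hy, heq⟩
        · rw [hgy] at h00; omega
        · rw [hgy] at hor
          rcases hor with hwl | hwr | ⟨h2m, hw1⟩
          · -- w = 2i+1 : rotate down
            rw [hyrot]
            by_cases hi0 : i = 0
            · apply rot_closure_into hR hRε _ (-1)
              refine ⟨thN Θ 0 + π, by linarith, fun t ht1 ht2 => ?_⟩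
              have hψ : ang x y + (-1)*t = thN Θ 0 - t := by
                rw [← hθi, hi0]; ring
              rw [hψ]
              have hb2 : thN Θ 0 - t < thN Θ 0 := by linarith
              obtain ⟨hcnt, hnm⟩ := below_firstN h0 hb2
              refine ⟨⟨by linarith, ?_⟩, ?_⟩
              · have := (thN_mem_Ioc hsub hπ h0).2; linarith
              · rw [if_neg hnm, hcnt]; omega
            · apply rot_closure_into hR hRε _ (-1)
              have hi1m : i - 1 < Θ.card := by omega
              have hlt : thN Θ (i-1) < thN Θ i := (thN_lt_thN hi1m him).2 (by omega)
              refine ⟨thN Θ i - thN Θ (i-1), by linarith, fun t ht1 ht2 => ?_⟩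
              have hψ : ang x y + (-1)*t = thN Θ i - t := by rw [← hθi]; ring
              rw [hψ]
              have hb1 : thN Θ (i-1) < thN Θ i - t := by linarith
              have hb2 : thN Θ i - t < thN Θ i := by linarith
              obtain ⟨hcnt, hnm⟩ := between_consecN (i := i-1) (by omega) hb1
                (by rw [show i - 1 + 1 = i by omega]; exact hb2)
              refine ⟨⟨?_, ?_⟩, ?_⟩
              · have := (thN_mem_Ioc hsub hπ hi1m).1; linarith
              · have := (thN_mem_Ioc hsub hπ him).2; linarith
              · rw [if_neg hnm, hcnt]; omega
          · -- w = 2i+3 : rotate up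
            have him1 : i + 1 < Θ.card := by omega
            have hlt : thN Θ i < thN Θ (i+1) := (thN_lt_thN him him1).2 (by omega)
            rw [hyrot]
            apply rot_closure_into hR hRε _ 1
            refine ⟨thN Θ (i+1) - thN Θ i, by linarith, fun t ht1 ht2 => ?_⟩
            have hψ : ang x y + 1*t = thN Θ i + t := by rw [← hθi]; ring
            rw [hψ]
            have hb1 : thN Θ i < thN Θ i + t := by linarith
            have hb2 : thN Θ i + t < thN Θ (i+1) := by linarith
            obtain ⟨hcnt, hnm⟩ := between_consecN (i := i) him1 hb1 hb2
            refine ⟨⟨?_, ?_⟩, ?_⟩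
            · have := (thN_mem_Ioc hsub hπ him).1; linarith
            · have := (thN_mem_Ioc hsub hπ him1).2; linarith
            · rw [if_neg hnm, hcnt]; omega
          · -- wrap : i = m-1, w = 1
            have hieq : i = Θ.card - 1 := by omega
            have hθpi : ang x y = π := by
              rw [← hθi, hieq]; exact thN_top hsub hπ
            rw [hyrot, hθpi, ← dir_neg_pi]
            apply rot_closure_into hR hRε _ 1
            refine ⟨thN Θ 0 + π, by linarith, fun t ht1 ht2 => ?_⟩
            have hψ : -π + 1*t = -π + t := by ring
            rw [hψ]
            have hb2 : -π + t < thN Θ 0 := by linarith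
            obtain ⟨hcnt, hnm⟩ := below_firstN h0 hb2
            refine ⟨⟨by linarith, ?_⟩, ?_⟩
            · have := (thN_mem_Ioc hsub hπ h0).2; linarith
            · rw [if_neg hnm, hcnt]; omega
    · -- y in a sector
      have hgy : gmap Θ x y = 2 * cnt Θ (ang x y) + 1 := by
        rw [gmap_of_ne hyx, if_neg hray]
      constructor
      · intro hcl
        obtain ⟨V, hVopen, hyV, hV⟩ := class_sector hsub hπ hyx hray
        rw [_root_.mem_closure_iff] at hcl
        obtain ⟨z, hzV, hzball, hzw⟩ := hcl V hVopen hyV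
        left
        rw [← hzw, hV z hzV]
      · intro hrel
        rcases hrel with heq | h00 | ⟨hev, hne0, _⟩
        · exact subset_closure ⟨hy, heq⟩
        · rw [hgy] at h00; omega
        · rw [hgy] at hev; omega
end PartF3

noncomputable section PartF4
open Complex Set Metric
open scoped Real Classical

variable {Θ : Finset ℝ} {x : E2}

lemma samesign_zero : samesign 0 0 := ⟨Iff.rfl, Iff.rfl⟩

/-- basis decomposition of directions -/
lemma dir_decomp (ψ : ℝ) : dir ψ = Real.cos ψ • dir 0 + Real.sin ψ • dir (π/2) := by
  apply toC_inj
  rw [map_add, map_smul, map_smul, toC_dir, toC_dir, toC_dir]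
  have h0 : Complex.exp ((0:ℝ) * I) = 1 := by norm_num
  have h2 : Complex.exp ((↑(π/2):ℂ) * I) = I := by
    rw [Complex.exp_mul_I, ← Complex.ofReal_cos, ← Complex.ofReal_sin,
      Real.cos_pi_div_two, Real.sin_pi_div_two]
    simp
  rw [h0, h2, Complex.exp_mul_I, ← Complex.ofReal_cos, ← Complex.ofReal_sin,
    Complex.real_smul, Complex.real_smul]
  ring

lemma lhat_eq (l : E2 →ₗ[ℝ] ℝ) (ψ : ℝ) :
    l (dir ψ) = Real.cos ψ * l (dir 0) + Real.sin ψ * l (dir (π/2)) := by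
  rw [dir_decomp ψ, map_add, map_smul, map_smul, smul_eq_mul, smul_eq_mul]

lemma continuous_lhat (l : E2 →ₗ[ℝ] ℝ) : Continuous (fun ψ : ℝ => l (dir ψ)) :=
  l.continuous_of_finiteDimensional.comp continuous_dir

/-- no sign change of l∘dir inside one sector -/
lemma sector_sign_const (hsub : ∀ θ ∈ Θ, θ ∈ Ioc (-π) π) (hπ : π ∈ Θ)
    (l : E2 →ₗ[ℝ] ℝ)
    (HΘ : ∀ ψ ∈ Ioc (-π) π, l (dir ψ) = 0 → ψ ∈ Θ)
    {c : ℕ} (hcm : c < Θ.card) {α β : ℝ}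
    (hα1 : (if c = 0 then -π else thN Θ (c-1)) < α) (hα2 : α < thN Θ c)
    (hβ1 : (if c = 0 then -π else thN Θ (c-1)) < β) (hβ2 : β < thN Θ c)
    (hsignα : 0 < l (dir α)) (hsignβ : l (dir β) < 0) : False := by
  have h0 : 0 < Θ.card := card_posΘ hsub hπ
  set lo : ℝ := if c = 0 then -π else thN Θ (c-1) with hlo
  have hlo2 : -π ≤ lo := by
    by_cases h : c = 0
    · rw [hlo, if_pos h]
    · rw [hlo, if_neg h]
      exact le_of_lt (thN_mem_Ioc hsub hπ (by omega)).1
  have hhi2 : thN Θ c ≤ π := (thN_mem_Ioc hsub hπ hcm).2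
  have hzero : ∃ ψ, (α ⊓ β ≤ ψ ∧ ψ ≤ α ⊔ β) ∧ l (dir ψ) = 0 := by
    rcases le_total α β with hab | hab
    · obtain ⟨ψ, hmem, hval⟩ := (intermediate_value_Icc' hab
        ((continuous_lhat l).continuousOn)) ⟨hsignβ.le, hsignα.le⟩
      exact ⟨ψ, ⟨le_trans inf_le_left hmem.1, le_trans hmem.2 le_sup_right⟩, hval⟩
    · obtain ⟨ψ, hmem, hval⟩ := (intermediate_value_Icc hab
        ((continuous_lhat l).continuousOn)) ⟨hsignβ.le, hsignα.le⟩
      exact ⟨ψ, ⟨le_trans inf_le_right hmem.1, le_trans hmem.2 le_sup_left⟩, hval⟩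
  obtain ⟨ψ, hψmem, hψ0⟩ := hzero
  have hψlo : lo < ψ := lt_of_lt_of_le (lt_inf_iff.2 ⟨hα1, hβ1⟩) hψmem.1
  have hψhi : ψ < thN Θ c := lt_of_le_of_lt hψmem.2 (sup_lt_iff.2 ⟨hα2, hβ2⟩)
  have hψIoc : ψ ∈ Ioc (-π) π := ⟨lt_of_le_of_lt hlo2 hψlo, le_of_lt (lt_of_lt_of_le hψhi hhi2)⟩
  have hψΘ : ψ ∈ Θ := HΘ ψ hψIoc hψ0
  by_cases h : c = 0
  · rw [hlo, if_pos h] at hψlo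
    rw [h] at hψhi
    exact (below_firstN h0 hψhi).2 hψΘ
  · rw [hlo, if_neg h] at hψlo
    exact (between_consecN (i := c-1) (by omega) hψlo
      (by rw [show c - 1 + 1 = c by omega]; exact hψhi)).2 hψΘ

/-- G1: points in the same cell have the same sign pattern -/
lemma fiber_samesign (hsub : ∀ θ ∈ Θ, θ ∈ Ioc (-π) π) (hπ : π ∈ Θ)
    (l : E2 →ₗ[ℝ] ℝ)
    (HΘ : ∀ ψ ∈ Ioc (-π) π, l (dir ψ) = 0 → ψ ∈ Θ)
    {y z : E2} (h : gmap Θ x y = gmap Θ x z) :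
    samesign (l (y - x)) (l (z - x)) := by
  by_cases hyx : y = x
  · have hz : z = x := by
      rw [← gmap_eq_zero_iff (Θ := Θ), ← h, hyx, gmap_self]
    rw [hyx, hz, sub_self, map_zero]
    exact samesign_zero
  · have hzx : z ≠ x := by
      intro hz
      apply hyx
      rw [← gmap_eq_zero_iff (Θ := Θ), h, hz, gmap_self]
    have hRy : 0 < ‖y - x‖ := by rw [norm_pos_iff, sub_ne_zero]; exact hyx
    have hRz : 0 < ‖z - x‖ := by rw [norm_pos_iff, sub_ne_zero]; exact hzx
    have hply : l (y - x) = ‖y - x‖ * l (dir (ang x y)) := by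
      conv_lhs => rw [polar x hyx]
      rw [map_smul, smul_eq_mul]
    have hplz : l (z - x) = ‖z - x‖ * l (dir (ang x z)) := by
      conv_lhs => rw [polar x hzx]
      rw [map_smul, smul_eq_mul]
    rw [hply, hplz]
    by_cases hray : ang x y ∈ Θ
    · have hrayz : ang x z ∈ Θ := by
        by_contra hc
        rw [gmap_of_ne hyx, gmap_of_ne hzx, if_pos hray, if_neg hc] at h
        omega
      have hceq : cnt Θ (ang x y) = cnt Θ (ang x z) := by
        rw [gmap_of_ne hyx, gmap_of_ne hzx, if_pos hray, if_pos hrayz] at h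
        omega
      have hangeq : ang x y = ang x z := by
        rw [← thN_cnt hray, ← thN_cnt hrayz, hceq]
      rw [hangeq]
      exact samesign_mul hRy hRz (samesign.refl _)
    · have hrayz : ang x z ∉ Θ := by
        intro hc
        rw [gmap_of_ne hyx, gmap_of_ne hzx, if_neg hray, if_pos hc] at h
        omega
      have hceq : cnt Θ (ang x y) = cnt Θ (ang x z) := by
        rw [gmap_of_ne hyx, gmap_of_ne hzx, if_neg hray, if_neg hrayz] at h
        omega
      set c := cnt Θ (ang x y) with hc
      have hyIoc := ang_mem_Ioc x y
      have hzIoc := ang_mem_Ioc x z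
      have hcm : c < Θ.card := by
        have := cnt_le_topN hsub hπ hyIoc.2
        have h0 := card_posΘ hsub hπ
        omega
      have hyhi : ang x y < thN Θ c := sector_boundsN_hi hray hc.symm hcm
      have hzhi : ang x z < thN Θ c := sector_boundsN_hi hrayz hceq.symm hcm
      have hylo : (if c = 0 then -π else thN Θ (c-1)) < ang x y := by
        by_cases hc0 : c = 0
        · rw [if_pos hc0]; exact hyIoc.1
        · rw [if_neg hc0]
          exact sector_boundsN_lo hray hc.symm (by omega) (by omega)
      have hzlo : (if c = 0 then -π else thN Θ (c-1)) < ang x z := by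
        by_cases hc0 : c = 0
        · rw [if_pos hc0]; exact hzIoc.1
        · rw [if_neg hc0]
          exact sector_boundsN_lo hrayz hceq.symm (by omega) (by omega)
      have hty : l (dir (ang x y)) ≠ 0 := fun h0 => hray (HΘ _ hyIoc h0)
      have htz : l (dir (ang x z)) ≠ 0 := fun h0 => hrayz (HΘ _ hzIoc h0)
      have hsgn : samesign (l (dir (ang x y))) (l (dir (ang x z))) := by
        constructor
        · constructor
          · intro hpos
            by_contra hneg
            have : l (dir (ang x z)) < 0 := lt_of_le_of_ne (not_lt.1 hneg) htz
            exact sector_sign_const hsub hπ l HΘ hcm hylo hyhi hzlo hzhi hpos this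
          · intro hpos
            by_contra hneg
            have : l (dir (ang x y)) < 0 := lt_of_le_of_ne (not_lt.1 hneg) hty
            exact sector_sign_const hsub hπ l HΘ hcm hzlo hzhi hylo hyhi hpos this
        · constructor
          · intro h0; exact absurd h0 hty
          · intro h0; exact absurd h0 htz
      exact samesign_mul hRy hRz hsgn
end PartF4

noncomputable section PartF5
open Complex Set Metric
open scoped Real Classical

def zC (l : E2 →ₗ[ℝ] ℝ) : ℂ := ⟨l (dir 0), l (dir (π/2))⟩

lemma vec_decomp (v : E2) : v = v 0 • dir 0 + v 1 • dir (π/2) := by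
  apply toC_inj
  rw [map_add, map_smul, map_smul, toC_dir, toC_dir]
  have h0 : Complex.exp ((0:ℝ) * I) = 1 := by norm_num
  have h2 : Complex.exp ((↑(π/2):ℂ) * I) = I := by
    rw [Complex.exp_mul_I, ← Complex.ofReal_cos, ← Complex.ofReal_sin,
      Real.cos_pi_div_two, Real.sin_pi_div_two]
    simp
  rw [h0, h2, Complex.real_smul, Complex.real_smul]
  show (⟨v 0, v 1⟩ : ℂ) = _
  rw [Complex.mk_eq_add_mul_I]
  ring

lemma zC_ne_zero {l : E2 →ₗ[ℝ] ℝ} (hl : l ≠ 0) : zC l ≠ 0 := by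
  intro h
  apply hl
  have ha : l (dir 0) = 0 := congrArg Complex.re h
  have hb : l (dir (π/2)) = 0 := congrArg Complex.im h
  ext v
  rw [LinearMap.zero_apply]
  conv_lhs => rw [vec_decomp v]
  rw [map_add, map_smul, map_smul, ha, hb, smul_zero, smul_zero, add_zero]

lemma arg_exp_mul_I {ψ : ℝ} (hψ : ψ ∈ Ioc (-π) π) :
    (Complex.exp (↑ψ * I)).arg = ψ := by
  rw [Complex.exp_mul_I]
  exact Complex.arg_cos_add_sin_mul_I hψ

lemma zeros_mem {l : E2 →ₗ[ℝ] ℝ} (hl : l ≠ 0) {ψ : ℝ} (hψ : ψ ∈ Ioc (-π) π)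
    (h : l (dir ψ) = 0) :
    ψ = (I * zC l).arg ∨ ψ = (-(I * zC l)).arg := by
  have hz : zC l ≠ 0 := zC_ne_zero hl
  have hzc : (starRingEnd ℂ) (zC l) ≠ 0 := by
    rw [Ne, map_eq_zero]; exact hz
  set e := Complex.exp (↑ψ * I) with he
  have hene : e ≠ 0 := Complex.exp_ne_zero _
  set u := (starRingEnd ℂ) (zC l) * e with hu
  have hure : u.re = 0 := by
    rw [hu, Complex.mul_re]
    have h1 : ((starRingEnd ℂ) (zC l)).re = l (dir 0) := by
      rw [Complex.conj_re]; rfl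
    have h2 : ((starRingEnd ℂ) (zC l)).im = -(l (dir (π/2))) := by
      rw [Complex.conj_im]; rfl
    have h3 : e.re = Real.cos ψ := by
      rw [he]; exact Complex.exp_ofReal_mul_I_re ψ
    have h4 : e.im = Real.sin ψ := by
      rw [he]; exact Complex.exp_ofReal_mul_I_im ψ
    rw [h1, h2, h3, h4]
    have := lhat_eq l ψ
    rw [h] at this
    linarith [this.symm]
  have huI : u = ↑u.im * I := by
    have hri := Complex.re_add_im u
    rw [hure] at hri
    rw [← hri]
    simp
  have hefact : e = ↑(u.im * (Complex.normSq (zC l))⁻¹) * (I * zC l) := by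
    have h5 : (starRingEnd ℂ) (zC l) * e = ↑u.im * I := by rw [← hu]; exact huI
    have h6 : e = ↑u.im * I * ((starRingEnd ℂ) (zC l))⁻¹ := by
      rw [← h5]
      field_simp
    rw [h6, Complex.inv_def, Complex.normSq_conj, Complex.conj_conj]
    push_cast
    ring
  set r := u.im * (Complex.normSq (zC l))⁻¹ with hr
  have hrne : r ≠ 0 := by
    intro h0
    rw [h0] at hefact
    simp at hefact
    exact hene hefact
  have hψarg : ψ = e.arg := (arg_exp_mul_I hψ).symm
  rcases lt_trichotomy r 0 with hneg | h0 | hpos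
  · right
    rw [hψarg, hefact]
    have : (↑r : ℂ) * (I * zC l) = ↑(-r) * (-(I * zC l)) := by push_cast; ring
    rw [this, Complex.arg_real_mul _ (by linarith : 0 < -r)]
  · exact absurd h0 hrne
  · left
    rw [hψarg, hefact, Complex.arg_real_mul _ hpos]

def zerosFold (F : List (E2 →ₗ[ℝ] ℝ)) : Finset ℝ :=
  F.foldr (fun l acc => insert ((I * zC l).arg) (insert ((-(I * zC l)).arg) acc)) ∅

lemma mem_zerosFold {F : List (E2 →ₗ[ℝ] ℝ)} {θ : ℝ} :
    θ ∈ zerosFold F ↔ ∃ l ∈ F, θ = (I * zC l).arg ∨ θ = (-(I * zC l)).arg := by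
  induction F with
  | nil => simp [zerosFold]
  | cons l F ih =>
    simp only [zerosFold, List.foldr_cons, Finset.mem_insert, List.mem_cons]
    rw [show (List.foldr (fun l acc => insert ((I * zC l).arg)
      (insert ((-(I * zC l)).arg) acc)) ∅ F) = zerosFold F from rfl, ih]
    constructor
    · rintro (rfl | rfl | ⟨l', hl', hor⟩)
      · exact ⟨l, Or.inl rfl, Or.inl rfl⟩
      · exact ⟨l, Or.inl rfl, Or.inr rfl⟩
      · exact ⟨l', Or.inr hl', hor⟩
    · rintro ⟨l', (rfl | hl'), hor⟩
      · rcases hor with rfl | rfl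
        · exact Or.inl rfl
        · exact Or.inr (Or.inl rfl)
      · exact Or.inr (Or.inr ⟨l', hl', hor⟩)

def polyTheta (F : List (E2 →ₗ[ℝ] ℝ)) : Finset ℝ := insert π (zerosFold F)

lemma polyTheta_pi (F : List (E2 →ₗ[ℝ] ℝ)) : π ∈ polyTheta F :=
  Finset.mem_insert_self _ _

lemma polyTheta_sub (F : List (E2 →ₗ[ℝ] ℝ)) :
    ∀ θ ∈ polyTheta F, θ ∈ Ioc (-π) π := by
  intro θ hθ
  rcases Finset.mem_insert.1 hθ with rfl | hmem
  · exact ⟨by linarith [Real.pi_pos], le_refl _⟩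
  · rcases mem_zerosFold.1 hmem with ⟨l, _, (rfl | rfl)⟩ <;>
      exact Complex.arg_mem_Ioc _

lemma polyTheta_HΘ {F : List (E2 →ₗ[ℝ] ℝ)} {l : E2 →ₗ[ℝ] ℝ} (hlF : l ∈ F)
    (hl : l ≠ 0) : ∀ ψ ∈ Ioc (-π) π, l (dir ψ) = 0 → ψ ∈ polyTheta F := by
  intro ψ hψ h0
  rcases zeros_mem hl hψ h0 with rfl | rfl <;>
    exact Finset.mem_insert_of_mem (mem_zerosFold.2 ⟨l, hlF, by simp⟩)
end PartF5

noncomputable section PartF6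
open Complex Set Metric
open scoped Real Classical

variable {Θ : Finset ℝ} {x : E2}

/-- sign of sin on (-2π, 2π] -/
lemma sin_pos_cases {s : ℝ} (h : 0 < Real.sin s) (h1 : -(2*π) < s) (h2 : s ≤ 2*π) :
    (0 < s ∧ s < π) ∨ (-(2*π) < s ∧ s < -π) := by
  have hπ := Real.pi_pos
  rcases le_or_gt s (-π) with hc | hc
  · rcases eq_or_lt_of_le hc with heq | hlt
    · exfalso
      rw [heq] at h
      rw [Real.sin_neg, Real.sin_pi] at h
      linarith
    · exact Or.inr ⟨h1, hlt⟩
  · rcases le_or_gt s 0 with hc2 | hc2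
    · exfalso
      have : Real.sin s ≤ 0 := by
        have := Real.sin_nonneg_of_nonneg_of_le_pi (x := -s) (by linarith) (by linarith)
        rw [Real.sin_neg] at this
        linarith
      linarith
    · rcases lt_or_ge s π with hc3 | hc3
      · exact Or.inl ⟨hc2, hc3⟩
      · exfalso
        have h4 : Real.sin (s - π) ≥ 0 :=
          Real.sin_nonneg_of_nonneg_of_le_pi (by linarith) (by linarith)
        rw [Real.sin_sub_pi] at h4
        linarith

lemma sin_neg_cases {s : ℝ} (h : Real.sin s < 0) (h1 : -(2*π) < s) (h2 : s ≤ 2*π) :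
    (-π < s ∧ s < 0) ∨ (π < s ∧ s ≤ 2*π) := by
  have hπ := Real.pi_pos
  have hs2 : s < 2*π := by
    rcases lt_or_eq_of_le h2 with h' | h'
    · exact h'
    · exfalso; rw [h'] at h; rw [Real.sin_two_pi] at h; linarith
  have := sin_pos_cases (s := -s) (by rw [Real.sin_neg]; linarith)
    (by linarith) (by linarith)
  rcases this with ⟨a, b⟩ | ⟨a, b⟩
  · exact Or.inl ⟨by linarith, by linarith⟩
  · exact Or.inr ⟨by linarith, by linarith⟩

/-- the real sector characterization -/
lemma sec_real {α β θ : ℝ} (hα : -π ≤ α) (hβ : β ≤ π) (hab : α < β)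
    (hgap : β - α ≤ π) (hθ : θ ∈ Ioc (-π) π) :
    (α < θ ∧ θ < β) ↔ (0 < Real.sin (θ - α) ∧ Real.sin (θ - β) < 0) := by
  have hπ := Real.pi_pos
  obtain ⟨hθ1, hθ2⟩ := hθ
  constructor
  · rintro ⟨h1, h2⟩
    constructor
    · exact Real.sin_pos_of_pos_of_lt_pi (by linarith) (by linarith)
    · have : 0 < Real.sin (β - θ) :=
        Real.sin_pos_of_pos_of_lt_pi (by linarith) (by linarith)
      rw [show β - θ = -(θ - β) by ring, Real.sin_neg] at this
      linarith
  · rintro ⟨h1, h2⟩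
    have hc1 := sin_pos_cases h1 (by linarith) (by linarith)
    have hc2 := sin_neg_cases h2 (by linarith) (by linarith)
    rcases hc1 with ⟨a1, b1⟩ | ⟨a1, b1⟩
    · refine ⟨by linarith, ?_⟩
      rcases hc2 with ⟨a2, b2⟩ | ⟨a2, b2⟩
      · linarith
      · linarith
    · exfalso
      rcases hc2 with ⟨a2, b2⟩ | ⟨a2, b2⟩
      · linarith
      · linarith

/-- linear functionals from complex multiplication -/
def imMulL (w : ℂ) : E2 →ₗ[ℝ] ℝ :=
  Complex.imLm.comp ((LinearMap.mulLeft ℝ w).comp (toC : E2 →ₗ[ℝ] ℂ))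

lemma imMulL_apply (w : ℂ) (y : E2) : imMulL w y = (w * toC y).im := rfl

def reMulL (w : ℂ) : E2 →ₗ[ℝ] ℝ :=
  Complex.reLm.comp ((LinearMap.mulLeft ℝ w).comp (toC : E2 →ₗ[ℝ] ℂ))

lemma reMulL_apply (w : ℂ) (y : E2) : reMulL w y = (w * toC y).re := rfl

/-- BoolGen building blocks -/
lemma boolgen_le (l : E2 →ₗ[ℝ] ℝ) (b : ℝ) : BoolGen (halfSpaces 2) {y : E2 | l y ≤ b} :=
  BoolGen.base _ ⟨l, b, rfl⟩

lemma boolgen_ge (l : E2 →ₗ[ℝ] ℝ) (b : ℝ) : BoolGen (halfSpaces 2) {y : E2 | b ≤ l y} := by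
  have : {y : E2 | b ≤ l y} = {y : E2 | (-l) y ≤ -b} := by
    ext y; simp only [mem_setOf_eq, LinearMap.neg_apply]; constructor <;> intro <;> linarith
  rw [this]
  exact boolgen_le _ _

lemma boolgen_eq (l : E2 →ₗ[ℝ] ℝ) (b : ℝ) : BoolGen (halfSpaces 2) {y : E2 | l y = b} := by
  have : {y : E2 | l y = b} = {y : E2 | l y ≤ b} ∩ {y : E2 | b ≤ l y} := by
    ext y; simp only [mem_setOf_eq, mem_inter_iff]; constructor
    · intro h; exact ⟨le_of_eq h, ge_of_eq h⟩
    · intro h; exact le_antisymm h.1 h.2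
  rw [this]
  exact BoolGen.inter _ _ (boolgen_le _ _) (boolgen_ge _ _)

lemma boolgen_gt (l : E2 →ₗ[ℝ] ℝ) (b : ℝ) : BoolGen (halfSpaces 2) {y : E2 | b < l y} := by
  have : {y : E2 | b < l y} = {y : E2 | l y ≤ b}ᶜ := by
    ext y; simp [not_le]
  rw [this]
  exact BoolGen.compl _ (boolgen_le _ _)

lemma boolgen_lt (l : E2 →ₗ[ℝ] ℝ) (b : ℝ) : BoolGen (halfSpaces 2) {y : E2 | l y < b} := by
  have : {y : E2 | l y < b} = {y : E2 | b ≤ l y}ᶜ := by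
    ext y; simp [not_le]
  rw [this]
  exact BoolGen.compl _ (boolgen_ge _ _)

lemma boolgen_biUnion {ι : Type*} (s : Finset ι) (f : ι → Set E2)
    (h : ∀ i ∈ s, BoolGen (halfSpaces 2) (f i)) :
    BoolGen (halfSpaces 2) (⋃ i ∈ s, f i) := by
  classical
  induction s using Finset.induction with
  | empty => simpa using BoolGen.empty
  | insert a t hmem ih =>
    rw [Finset.set_biUnion_insert]
    exact BoolGen.union _ _ (h a (Finset.mem_insert_self a t))
      (ih (fun i hi => h i (Finset.mem_insert_of_mem hi)))

/-- polar form of toC -/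
lemma toC_polar {z : E2} (hz : z ≠ x) :
    toC (z - x) = ↑‖z - x‖ * Complex.exp (↑(ang x z) * I) := by
  conv_lhs => rw [polar x hz]
  rw [map_smul, toC_dir, Complex.real_smul]

/-- the ray characterization -/
lemma ray_iff {θ : ℝ} (hθ : θ ∈ Ioc (-π) π) (z : E2) :
    (z ≠ x ∧ ang x z = θ) ↔
    ((starRingEnd ℂ) (Complex.exp (↑θ * I)) * toC (z - x)).im = 0 ∧
      0 < ((starRingEnd ℂ) (Complex.exp (↑θ * I)) * toC (z - x)).re := by
  set w := (starRingEnd ℂ) (Complex.exp (↑θ * I)) with hw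
  have habs : Complex.exp (↑θ * I) * w = 1 := by
    rw [hw, Complex.mul_conj, Complex.normSq_eq_norm_sq, Complex.norm_exp_ofReal_mul_I]
    norm_num
  constructor
  · rintro ⟨hzx, rfl⟩
    rw [toC_polar hzx]
    have hkey : w * (↑‖z - x‖ * Complex.exp (↑(ang x z) * I)) = ↑‖z - x‖ := by
      rw [mul_comm w _, mul_assoc, habs, mul_one]
    rw [hkey]
    constructor
    · simp
    · simp only [Complex.ofReal_re]
      rw [norm_pos_iff, sub_ne_zero]; exact hzx
  · rintro ⟨him, hre⟩
    set t := (w * toC (z - x)).re with ht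
    have hwt : w * toC (z - x) = ↑t := by
      apply Complex.ext
      · simp [ht]
      · rw [him]; simp
    have hfact : toC (z - x) = ↑t * Complex.exp (↑θ * I) := by
      have := congrArg (fun c => Complex.exp (↑θ * I) * c) hwt
      rw [← mul_assoc, habs, one_mul] at this
      rw [this]; ring
    have hzx : z ≠ x := by
      intro h
      rw [h, sub_self, map_zero] at hfact
      have : (0:ℂ) = ↑t * Complex.exp (↑θ * I) := hfact
      have hexp : Complex.exp (↑θ * I) ≠ 0 := Complex.exp_ne_zero _
      have ht0 : (↑t : ℂ) = 0 := by
        rcases mul_eq_zero.1 this.symm with h' | h'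
        · exact h'
        · exact absurd h' hexp
      rw [Complex.ofReal_eq_zero] at ht0
      rw [ht0] at hre
      exact lt_irrefl _ hre
    refine ⟨hzx, ?_⟩
    unfold ang
    rw [hfact, Complex.arg_real_mul _ hre, arg_exp_mul_I hθ]

/-- the sector characterization -/
lemma sector_iff {α β : ℝ} (hα : -π ≤ α) (hβ : β ≤ π) (hab : α < β)
    (hgap : β - α ≤ π) (z : E2) :
    (z ≠ x ∧ α < ang x z ∧ ang x z < β) ↔
    (0 < ((starRingEnd ℂ) (Complex.exp (↑α * I)) * toC (z - x)).im ∧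
      ((starRingEnd ℂ) (Complex.exp (↑β * I)) * toC (z - x)).im < 0) := by
  have key : ∀ γ : ℝ, ∀ hzx : z ≠ x,
      ((starRingEnd ℂ) (Complex.exp (↑γ * I)) * toC (z - x)).im
        = ‖z - x‖ * Real.sin (ang x z - γ) := by
    intro γ hzx
    rw [toC_polar hzx]
    have hconj : (starRingEnd ℂ) (Complex.exp (↑γ * I)) = Complex.exp (↑(-γ) * I) := by
      rw [← Complex.exp_conj]
      congr 1
      simp [Complex.ext_iff]
    rw [hconj, mul_comm, mul_assoc, ← Complex.exp_add]
    have h7 : (↑(ang x z) * I + ↑(-γ) * I) = ↑(ang x z - γ) * I := by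
      push_cast; ring
    rw [h7, Complex.mul_im]
    simp only [Complex.ofReal_re, Complex.ofReal_im, zero_mul, add_zero]
    rw [Complex.exp_ofReal_mul_I_im]
  by_cases hzx : z ≠ x
  · have hR : 0 < ‖z - x‖ := by rw [norm_pos_iff, sub_ne_zero]; exact hzx
    rw [key α hzx, key β hzx]
    have hsec := sec_real hα hβ hab hgap (ang_mem_Ioc x z)
    constructor
    · rintro ⟨_, h1, h2⟩
      obtain ⟨s1, s2⟩ := hsec.1 ⟨h1, h2⟩
      exact ⟨by positivity, mul_neg_of_pos_of_neg hR s2⟩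
    · rintro ⟨h1, h2⟩
      have s1 : 0 < Real.sin (ang x z - α) := by
        by_contra hc
        push_neg at hc
        nlinarith
      have s2 : Real.sin (ang x z - β) < 0 := by
        by_contra hc
        push_neg at hc
        nlinarith
      obtain ⟨b1, b2⟩ := hsec.2 ⟨s1, s2⟩
      exact ⟨hzx, b1, b2⟩
  · push_neg at hzx
    constructor
    · rintro ⟨h, _⟩; exact absurd hzx h
    · rintro ⟨h1, _⟩
      exfalso
      rw [hzx, sub_self, map_zero, mul_zero] at h1
      simp at h1
end PartF6

noncomputable section PartF7
open Complex Set Metric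
open scoped Real Classical

variable {x : E2}

/-- n equally spaced angles ending at π -/
def angEq (n j : ℕ) : ℝ := -π + 2*π*(j+1)/n

def thetaEq (n : ℕ) : Finset ℝ := (Finset.range n).image (angEq n)

lemma angEq_strictMono {n : ℕ} (hn : 1 ≤ n) {i j : ℕ} (h : i < j) :
    angEq n i < angEq n j := by
  unfold angEq
  have hπ := Real.pi_pos
  have hn' : (0:ℝ) < n := by exact_mod_cast hn
  have hij : (i:ℝ) + 1 < (j:ℝ) + 1 := by exact_mod_cast Nat.add_lt_add_right h 1
  have h2 : 2*π*((i:ℝ)+1) < 2*π*((j:ℝ)+1) := by nlinarith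
  have h3 : 2*π*((i:ℝ)+1)/n < 2*π*((j:ℝ)+1)/n := div_lt_div_of_pos_right h2 hn'
  linarith

lemma thetaEq_card {n : ℕ} (hn : 1 ≤ n) : (thetaEq n).card = n := by
  unfold thetaEq
  rw [Finset.card_image_of_injOn, Finset.card_range]
  intro i hi j hj hij
  by_contra hne
  rcases Nat.lt_or_ge i j with h | h
  · exact absurd hij (ne_of_lt (angEq_strictMono hn h))
  · have : j < i := by omega
    exact absurd hij.symm (ne_of_lt (angEq_strictMono hn this))

lemma angEq_mem_Ioc {n j : ℕ} (hn : 1 ≤ n) (hj : j < n) :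
    angEq n j ∈ Ioc (-π) π := by
  unfold angEq
  have hπ := Real.pi_pos
  have hn' : (0:ℝ) < n := by exact_mod_cast hn
  constructor
  · have : 0 < 2*π*(j+1)/n := by positivity
    linarith
  · have h1 : (j:ℝ) + 1 ≤ n := by exact_mod_cast hj
    have : 2*π*(j+1)/n ≤ 2*π := by
      rw [div_le_iff₀ hn']
      nlinarith
    linarith

lemma thetaEq_sub {n : ℕ} (hn : 1 ≤ n) : ∀ θ ∈ thetaEq n, θ ∈ Ioc (-π) π := by
  intro θ hθ
  obtain ⟨j, hj, rfl⟩ := Finset.mem_image.1 hθ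
  exact angEq_mem_Ioc hn (Finset.mem_range.1 hj)

lemma angEq_top {n : ℕ} (hn : 1 ≤ n) : angEq n (n-1) = π := by
  unfold angEq
  have hn' : (n:ℝ) ≠ 0 := by
    have : (0:ℝ) < n := by exact_mod_cast hn
    linarith
  have hcast : ((n-1 : ℕ) : ℝ) + 1 = (n : ℝ) := by
    have : 1 ≤ n := hn
    push_cast [Nat.cast_sub this]
    ring
  rw [hcast, mul_div_assoc, div_self hn', mul_one]
  ring

lemma thetaEq_pi {n : ℕ} (hn : 1 ≤ n) : π ∈ thetaEq n := by
  rw [← angEq_top hn]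
  exact Finset.mem_image_of_mem _ (Finset.mem_range.2 (by omega))

lemma cnt_angEq {n i : ℕ} (hn : 1 ≤ n) (hi : i < n) :
    cnt (thetaEq n) (angEq n i) = i := by
  unfold cnt
  have key : (thetaEq n).filter (· < angEq n i) = (Finset.range i).image (angEq n) := by
    ext τ
    simp only [Finset.mem_filter, thetaEq, Finset.mem_image, Finset.mem_range]
    constructor
    · rintro ⟨⟨j, hj, rfl⟩, hlt⟩
      refine ⟨j, ?_, rfl⟩
      by_contra hge
      have : i ≤ j := by omega
      rcases Nat.eq_or_lt_of_le this with rfl | h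
      · exact lt_irrefl _ hlt
      · exact absurd hlt (not_lt.2 (le_of_lt (angEq_strictMono hn h)))
    · rintro ⟨j, hj, rfl⟩
      exact ⟨⟨j, by omega, rfl⟩, angEq_strictMono hn hj⟩
  rw [key, Finset.card_image_of_injOn, Finset.card_range]
  intro a ha b hb hab
  by_contra hne
  rcases Nat.lt_or_ge a b with h | h
  · exact absurd hab (ne_of_lt (angEq_strictMono hn h))
  · have : b < a := by omega
    exact absurd hab.symm (ne_of_lt (angEq_strictMono hn this))

lemma thN_thetaEq {n i : ℕ} (hn : 1 ≤ n) (hi : i < n) :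
    thN (thetaEq n) i = angEq n i := by
  have hmem : angEq n i ∈ thetaEq n :=
    Finset.mem_image_of_mem _ (Finset.mem_range.2 hi)
  have := thN_cnt hmem
  rw [cnt_angEq hn hi] at this
  exact this
end PartF7

noncomputable section PartF8
open Complex Set Metric
open scoped Real Classical

variable {Θ : Finset ℝ} {x : E2}

lemma boolgen_fiber_root : BoolGen (halfSpaces 2) {z : E2 | gmap Θ x z = 0} := by
  have key : {z : E2 | gmap Θ x z = 0} =
      {z : E2 | reMulL 1 z = reMulL 1 x} ∩ {z : E2 | imMulL 1 z = imMulL 1 x} := by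
    ext z
    simp only [mem_setOf_eq, mem_inter_iff, gmap_eq_zero_iff]
    constructor
    · rintro rfl; exact ⟨rfl, rfl⟩
    · rintro ⟨h1, h2⟩
      apply toC_inj
      apply Complex.ext
      · rw [reMulL_apply, reMulL_apply, one_mul, one_mul] at h1; exact h1
      · rw [imMulL_apply, imMulL_apply, one_mul, one_mul] at h2; exact h2
  rw [key]
  exact BoolGen.inter _ _ (boolgen_eq _ _) (boolgen_eq _ _)

lemma gmap_ray_iff (hsub : ∀ θ ∈ Θ, θ ∈ Ioc (-π) π) (hπ : π ∈ Θ)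
    {i : ℕ} (hi : i < Θ.card) {z : E2} :
    gmap Θ x z = 2*i + 2 ↔ (z ≠ x ∧ ang x z = thN Θ i) := by
  constructor
  · intro h
    have hzx : z ≠ x := by
      intro hz
      rw [hz, gmap_self] at h
      omega
    refine ⟨hzx, ?_⟩
    rw [gmap_of_ne hzx] at h
    by_cases hmem : ang x z ∈ Θ
    · rw [if_pos hmem] at h
      have hcnt : cnt Θ (ang x z) = i := by omega
      rw [← thN_cnt hmem, hcnt]
    · rw [if_neg hmem] at h
      omega
  · rintro ⟨hzx, hang⟩
    rw [gmap_of_ne hzx, hang, if_pos (thN_mem hi), cnt_thN hi]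

lemma boolgen_fiber_ray (hsub : ∀ θ ∈ Θ, θ ∈ Ioc (-π) π) (hπ : π ∈ Θ)
    {i : ℕ} (hi : i < Θ.card) :
    BoolGen (halfSpaces 2) {z : E2 | gmap Θ x z = 2*i + 2} := by
  set θ := thN Θ i with hθ
  have hθIoc : θ ∈ Ioc (-π) π := thN_mem_Ioc hsub hπ hi
  set w := (starRingEnd ℂ) (Complex.exp (↑θ * I)) with hw
  have key : {z : E2 | gmap Θ x z = 2*i + 2} =
      {z : E2 | imMulL w z = imMulL w x} ∩ {z : E2 | reMulL w x < reMulL w z} := by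
    ext z
    simp only [mem_setOf_eq, mem_inter_iff]
    rw [gmap_ray_iff hsub hπ hi, ray_iff hθIoc z]
    have him : (w * toC (z - x)).im = imMulL w z - imMulL w x := by
      rw [imMulL_apply, imMulL_apply, map_sub, mul_sub, Complex.sub_im]
    have hre : (w * toC (z - x)).re = reMulL w z - reMulL w x := by
      rw [reMulL_apply, reMulL_apply, map_sub, mul_sub, Complex.sub_re]
    rw [him, hre]
    constructor
    · rintro ⟨h1, h2⟩; exact ⟨by linarith, by linarith⟩
    · rintro ⟨h1, h2⟩; exact ⟨by linarith, by linarith⟩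
  rw [key]
  exact BoolGen.inter _ _ (boolgen_eq _ _) (boolgen_gt _ _)

lemma gmap_sector_iff (hsub : ∀ θ ∈ Θ, θ ∈ Ioc (-π) π) (hπ : π ∈ Θ)
    {c : ℕ} (hcm : c < Θ.card) {z : E2} :
    gmap Θ x z = 2*c + 1 ↔
      (z ≠ x ∧ (if c = 0 then -π else thN Θ (c-1)) < ang x z ∧ ang x z < thN Θ c) := by
  have h0 : 0 < Θ.card := card_posΘ hsub hπ
  constructor
  · intro h
    have hzx : z ≠ x := by
      intro hz; rw [hz, gmap_self] at h; omega
    rw [gmap_of_ne hzx] at h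
    by_cases hmem : ang x z ∈ Θ
    · rw [if_pos hmem] at h; omega
    · rw [if_neg hmem] at h
      have hcnt : cnt Θ (ang x z) = c := by omega
      refine ⟨hzx, ?_, sector_boundsN_hi hmem hcnt hcm⟩
      by_cases hc0 : c = 0
      · rw [if_pos hc0]; exact (ang_mem_Ioc x z).1
      · rw [if_neg hc0]
        exact sector_boundsN_lo hmem hcnt (by omega) (by omega)
  · rintro ⟨hzx, h1, h2⟩
    rw [gmap_of_ne hzx]
    by_cases hc0 : c = 0
    · rw [if_pos hc0] at h1
      rw [hc0] at h2
      obtain ⟨hcnt, hnm⟩ := below_firstN h0 h2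
      rw [if_neg hnm, hcnt, hc0]
    · rw [if_neg hc0] at h1
      obtain ⟨hcnt, hnm⟩ := between_consecN (i := c-1) (by omega) h1
        (by rw [show c - 1 + 1 = c by omega]; exact h2)
      rw [if_neg hnm, hcnt]
      omega

lemma boolgen_fiber_sector (hsub : ∀ θ ∈ Θ, θ ∈ Ioc (-π) π) (hπ : π ∈ Θ)
    {c : ℕ} (hcm : c < Θ.card)
    (hgap : thN Θ c - (if c = 0 then -π else thN Θ (c-1)) ≤ π) :
    BoolGen (halfSpaces 2) {z : E2 | gmap Θ x z = 2*c + 1} := by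
  have h0 : 0 < Θ.card := card_posΘ hsub hπ
  set α : ℝ := if c = 0 then -π else thN Θ (c-1) with hα
  set β : ℝ := thN Θ c with hβ
  have hαlow : -π ≤ α := by
    by_cases h : c = 0
    · rw [hα, if_pos h]
    · rw [hα, if_neg h]; exact le_of_lt (thN_mem_Ioc hsub hπ (by omega)).1
  have hβhi : β ≤ π := (thN_mem_Ioc hsub hπ hcm).2
  have hab : α < β := by
    by_cases h : c = 0
    · rw [hα, if_pos h, hβ, h]; exact (thN_mem_Ioc hsub hπ h0).1
    · rw [hα, if_neg h, hβ]
      exact (thN_lt_thN (by omega) hcm).2 (by omega)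
  set wα := (starRingEnd ℂ) (Complex.exp (↑α * I)) with hwα
  set wβ := (starRingEnd ℂ) (Complex.exp (↑β * I)) with hwβ
  have key : {z : E2 | gmap Θ x z = 2*c + 1} =
      {z : E2 | imMulL wα x < imMulL wα z} ∩ {z : E2 | imMulL wβ z < imMulL wβ x} := by
    ext z
    simp only [mem_setOf_eq, mem_inter_iff]
    rw [gmap_sector_iff hsub hπ hcm, ← hα, ← hβ]
    rw [sector_iff hαlow hβhi hab hgap z]
    have him1 : (wα * toC (z - x)).im = imMulL wα z - imMulL wα x := by
      rw [imMulL_apply, imMulL_apply, map_sub, mul_sub, Complex.sub_im]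
    have him2 : (wβ * toC (z - x)).im = imMulL wβ z - imMulL wβ x := by
      rw [imMulL_apply, imMulL_apply, map_sub, mul_sub, Complex.sub_im]
    rw [him1, him2]
    constructor
    · rintro ⟨h1, h2⟩; exact ⟨by linarith, by linarith⟩
    · rintro ⟨h1, h2⟩; exact ⟨by linarith, by linarith⟩
  rw [key]
  exact BoolGen.inter _ _ (boolgen_gt _ _) (boolgen_lt _ _)

lemma boolgen_fiber_sector1 (hsub : ∀ θ ∈ Θ, θ ∈ Ioc (-π) π) (hπ : π ∈ Θ)
    (hm : Θ.card = 1) :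
    BoolGen (halfSpaces 2) {z : E2 | gmap Θ x z = 1} := by
  have key : {z : E2 | gmap Θ x z = 1} =
      ({z : E2 | gmap Θ x z = 0} ∪ {z : E2 | gmap Θ x z = 2*0 + 2})ᶜ := by
    ext z
    simp only [mem_setOf_eq, mem_compl_iff, mem_union]
    have := gmap_le (x := x) hsub hπ (y := z)
    rw [hm] at this
    omega
  rw [key]
  exact BoolGen.compl _ (BoolGen.union _ _ boolgen_fiber_root
    (boolgen_fiber_ray hsub hπ (by omega)))

/-- every fiber of the equally-spaced map is a polygon -/
lemma boolgen_fiber_eq {n : ℕ} (hn : 1 ≤ n) {w : ℕ} (hw : w ≤ 2*n) :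
    BoolGen (halfSpaces 2) {z : E2 | gmap (thetaEq n) x z = w} := by
  have hsub := thetaEq_sub hn
  have hπ := thetaEq_pi hn
  have hcard := thetaEq_card hn
  rcases Nat.eq_zero_or_pos w with rfl | hw1
  · exact boolgen_fiber_root
  · rcases Nat.even_or_odd w with ⟨k, hk⟩ | ⟨k, hk⟩
    · -- w = 2k, k ≥ 1 : ray at index k-1
      have hk1 : 1 ≤ k := by omega
      have hkn : k - 1 < (thetaEq n).card := by rw [hcard]; omega
      have : w = 2*(k-1) + 2 := by omega
      rw [this]
      exact boolgen_fiber_ray hsub hπ hkn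
    · -- w = 2k+1 : sector c = k
      have hkn : k < (thetaEq n).card := by rw [hcard]; omega
      have hwk : w = 2*k + 1 := by omega
      rw [hwk]
      rcases Nat.eq_or_lt_of_le hn with h1 | h2
      · -- n = 1
        have : k = 0 := by omega
        rw [this]
        norm_num
        exact boolgen_fiber_sector1 hsub hπ (by omega)
      · -- n ≥ 2 : gaps are 2π/n ≤ π
        apply boolgen_fiber_sector hsub hπ hkn
        have hπpos := Real.pi_pos
        have hn2 : 2 ≤ n := h2
        have hnR : (2:ℝ) ≤ n := by exact_mod_cast hn2
        have hgap2 : ∀ j, j < n → thN (thetaEq n) j = angEq n j := fun j hj =>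
          thN_thetaEq hn hj
        by_cases hc0 : k = 0
        · rw [if_pos hc0, hgap2 k (by omega), hc0]
          unfold angEq
          have : 2*π*(0+1)/n ≤ π := by
            rw [div_le_iff₀ (by linarith : (0:ℝ) < n)]
            nlinarith
          linarith
        · rw [if_neg hc0, hgap2 k (by omega), hgap2 (k-1) (by omega)]
          unfold angEq
          have hcast : ((k-1:ℕ):ℝ) + 1 = (k:ℝ) := by
            push_cast [Nat.cast_sub (by omega : 1 ≤ k)]
            ring
          rw [hcast]
          have hnpos : (0:ℝ) < n := by linarith
          have : 2*π*((k:ℝ)+1)/n - 2*π*(k:ℝ)/n = 2*π/n := by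
            field_simp
            ring
          rw [show -π + 2*π*((k:ℝ)+1)/↑n - (-π + 2*π*(k:ℝ)/↑n)
              = 2*π*((k:ℝ)+1)/↑n - 2*π*(k:ℝ)/↑n by ring, this]
          rw [div_le_iff₀ hnpos]
          nlinarith
end PartF8

noncomputable section PartF9
open Complex Set Metric
open scoped Real Classical

lemma crownRel_iff_N {n : ℕ} (a b : Fin (2*n+1)) :
    crownRel n a b ↔ crownRelN n a.1 b.1 := by
  unfold crownRel crownRelN
  rw [Fin.ext_iff]

/-- the hard direction: crown validity implies polygonal validity -/
lemma dir_crown_to_poly (φ : Fml)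
    (hcrown : ∀ n, 1 ≤ n → ∀ (μ : ℕ → Set (Fin (2 * n + 1))) (w : Fin (2 * n + 1)),
      w ∈ kripkeSem (crownRel n) μ φ) :
    ∀ ν : ℕ → Set E2, (∀ p, BoolGen (halfSpaces 2) (ν p)) →
      ∀ x : E2, x ∈ topoSem ν φ := by
  intro ν hν x
  obtain ⟨ε, hε, F0, hSD0⟩ := conical_finset ν x φ.vars (fun p _ => hν p)
  set F := F0.filter (fun l => decide (l ≠ 0)) with hF
  have hSD : ∀ p ∈ φ.vars, SignDet F x ε (ν p) :=
    fun p hp => (hSD0 p hp).filter_ne_zero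
  have hFne : ∀ l ∈ F, l ≠ 0 := by
    intro l hl
    rw [hF, List.mem_filter] at hl
    simpa using hl.2
  set Θ := polyTheta F with hΘ
  have hsub : ∀ θ ∈ Θ, θ ∈ Ioc (-π) π := polyTheta_sub F
  have hπ : π ∈ Θ := polyTheta_pi F
  set n := Θ.card with hn
  have hn1 : 1 ≤ n := card_posΘ hsub hπ
  have HΘall : ∀ l ∈ F, ∀ ψ ∈ Ioc (-π) π, l (dir ψ) = 0 → ψ ∈ Θ :=
    fun l hl => polyTheta_HΘ hl (hFne l hl)
  -- the interior map
  have hbound : ∀ z : E2, gmap Θ x z < 2*n + 1 := by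
    intro z
    have h := gmap_le (x := x) hsub hπ (y := z)
    rw [← hn] at h
    omega
  set g : E2 → Fin (2*n+1) := fun z => ⟨gmap Θ x z, hbound z⟩ with hg
  -- representative points
  set rep : Fin (2*n+1) → E2 :=
    fun w => if w.1 = 0 then x else x + (ε/2) • dir (repAng Θ w.1) with hrep
  have hrep_ball : ∀ w, rep w ∈ ball x ε := by
    intro w
    simp only [hrep]
    by_cases h : w.1 = 0
    · rw [if_pos h]; exact mem_ball_self hε
    · rw [if_neg h, mem_ball, dist_add_smul_dir x (by linarith)]
      linarith
  have hgrep : ∀ w, gmap Θ x (rep w) = w.1 := by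
    intro w
    simp only [hrep]
    by_cases h : w.1 = 0
    · rw [if_pos h, gmap_self, h]
    · rw [if_neg h]
      exact gmap_rep hsub hπ (by omega)
        (by have := w.2; rw [← hn]; omega) (by linarith)
  set μ : ℕ → Set (Fin (2*n+1)) := fun p => {w | rep w ∈ ν p} with hμ
  -- H1
  have H1 : ∀ p ∈ φ.vars, ∀ y ∈ ball x ε, (y ∈ ν p ↔ g y ∈ μ p) := by
    intro p hp y hy
    have hsame : ∀ l ∈ F, samesign (l (y - x)) (l (rep (g y) - x)) := by
      intro l hl
      apply fiber_samesign hsub hπ l (HΘall l hl)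
      rw [hgrep (g y)]
    have := hSD p hp y hy (rep (g y)) (hrep_ball (g y)) hsame
    exact this
  -- H2
  have H2 : ∀ y ∈ ball x ε, ∀ w : Fin (2*n+1),
      (y ∈ closure (ball x ε ∩ g ⁻¹' {w}) ↔ crownRel n (g y) w) := by
    intro y hy w
    have hseteq : ball x ε ∩ g ⁻¹' {w} = ball x ε ∩ {z | gmap Θ x z = w.1} := by
      ext z
      simp only [Set.mem_inter_iff, Set.mem_preimage, Set.mem_singleton_iff,
        Set.mem_setOf_eq]
      constructor
      · rintro ⟨h1, h2⟩
        exact ⟨h1, by rw [← h2]⟩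
      · rintro ⟨h1, h2⟩
        exact ⟨h1, Fin.ext h2⟩
    rw [hseteq, crownRel_iff_N]
    have hcf := closure_fiber_iff hsub hπ hε hy (w := w.1)
      (by rw [← hn]; have := w.2; omega)
    rw [← hn] at hcf
    exact hcf
  have := truthLemma (crownRel n) (ball x ε) isOpen_ball g ν μ φ H1 H2 x
    (mem_ball_self hε)
  rw [this]
  have hgx : g x = ⟨0, by omega⟩ := by
    rw [hg]
    exact Fin.ext (by simpa using gmap_self)
  exact hcrown n hn1 μ (g x)

/-- the easy direction: polygonal validity implies crown validity -/
lemma dir_poly_to_crown (φ : Fml)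
    (hpoly : ∀ ν : ℕ → Set E2, (∀ p, BoolGen (halfSpaces 2) (ν p)) →
      ∀ x : E2, x ∈ topoSem ν φ) :
    ∀ n, 1 ≤ n → ∀ (μ : ℕ → Set (Fin (2 * n + 1))) (w : Fin (2 * n + 1)),
      w ∈ kripkeSem (crownRel n) μ φ := by
  intro n hn μ w
  set Θ := thetaEq n with hΘ
  have hsub : ∀ θ ∈ Θ, θ ∈ Ioc (-π) π := thetaEq_sub hn
  have hπ : π ∈ Θ := thetaEq_pi hn
  have hcard : Θ.card = n := thetaEq_card hn
  set x : E2 := 0 with hx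
  have hbound : ∀ z : E2, gmap Θ x z < 2*n + 1 := by
    intro z
    have h := gmap_le (x := x) hsub hπ (y := z)
    rw [hcard] at h
    omega
  set g : E2 → Fin (2*n+1) := fun z => ⟨gmap Θ x z, hbound z⟩ with hg
  set ν : ℕ → Set E2 := fun p => ⋃ v ∈ (Finset.univ : Finset (Fin (2*n+1))),
    (if v ∈ μ p then {z : E2 | gmap Θ x z = v.1} else ∅) with hν
  have hνpoly : ∀ p, BoolGen (halfSpaces 2) (ν p) := by
    intro p
    apply boolgen_biUnion
    intro v _
    by_cases h : v ∈ μ p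
    · rw [if_pos h]
      exact boolgen_fiber_eq hn (by have := v.2; omega)
    · rw [if_neg h]
      exact BoolGen.empty
  have hνmem : ∀ p, ∀ z : E2, z ∈ ν p ↔ g z ∈ μ p := by
    intro p z
    rw [hν]
    simp only [mem_iUnion]
    constructor
    · rintro ⟨v, _, hv⟩
      by_cases h : v ∈ μ p
      · rw [if_pos h] at hv
        have : g z = v := Fin.ext hv
        rw [this]; exact h
      · rw [if_neg h] at hv; exact absurd hv (notMem_empty z)
    · intro h
      exact ⟨g z, Finset.mem_univ _, by rw [if_pos h]; exact rfl⟩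
  have H1 : ∀ p ∈ φ.vars, ∀ y ∈ ball x 1, (y ∈ ν p ↔ g y ∈ μ p) :=
    fun p _ y _ => hνmem p y
  have H2 : ∀ y ∈ ball x 1, ∀ v : Fin (2*n+1),
      (y ∈ closure (ball x 1 ∩ g ⁻¹' {v}) ↔ crownRel n (g y) v) := by
    intro y hy v
    have hsetated : ball x 1 ∩ g ⁻¹' {v} = ball x 1 ∩ {z | gmap Θ x z = v.1} := by
      ext z
      simp only [Set.mem_inter_iff, Set.mem_preimage, Set.mem_singleton_iff,
        Set.mem_setOf_eq]
      constructor
      · rintro ⟨h1, h2⟩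
        exact ⟨h1, by rw [← h2]⟩
      · rintro ⟨h1, h2⟩
        exact ⟨h1, Fin.ext h2⟩
    rw [hsetated, crownRel_iff_N]
    have hcf := closure_fiber_iff hsub hπ one_pos hy (w := v.1)
      (by rw [hcard]; have := v.2; omega)
    rw [hcard] at hcf
    exact hcf
  set y : E2 := if w.1 = 0 then x else x + (1/2 : ℝ) • dir (repAng Θ w.1) with hy
  have hyball : y ∈ ball x 1 := by
    rw [hy]
    by_cases h : w.1 = 0
    · rw [if_pos h]; exact mem_ball_self one_pos
    · rw [if_neg h, mem_ball, dist_add_smul_dir x (by norm_num)]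
      norm_num
  have hgy : g y = w := by
    apply Fin.ext
    rw [hg, hy]
    by_cases h : w.1 = 0
    · rw [if_pos h]
      simpa [h] using gmap_self
    · rw [if_neg h]
      show gmap Θ x _ = w.1
      exact gmap_rep hsub hπ (by omega) (by rw [hcard]; have := w.2; omega)
        (by norm_num)
  have := truthLemma (crownRel n) (ball x 1) isOpen_ball g ν μ φ H1 H2 y hyball
  rw [← hgy]
  rw [← this]
  exact hpoly ν hνpoly y
end PartF9


/-- `PL₂` is determined by the class of finite crown frames: a modal formula is true at
every point of `ℝ²` under every valuation taking values in the polygons `P₂` iff it is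
true at every world of every crown frame `𝔠_n` under every valuation. -/
theorem PL2_iff_valid_on_all_crown_frames (φ : Fml) :
    (∀ ν : ℕ → Set (EuclideanSpace ℝ (Fin 2)),
      (∀ p, BoolGen (halfSpaces 2) (ν p)) → ∀ x, x ∈ topoSem ν φ) ↔
    (∀ n, 1 ≤ n → ∀ (μ : ℕ → Set (Fin (2 * n + 1))) (w : Fin (2 * n + 1)),
      w ∈ kripkeSem (crownRel n) μ φ) := by
  constructor
  · exact dir_poly_to_crown φ
  · exact dir_crown_to_poly φ
end
end

section
/- For every n ≥ 1 and each i ∈ {1,2,3,4,5}, the crown frame 𝔠_n is not subreducible to the forbidden frame 𝔅ᵢ: no generated subframe of 𝔠_n admits a surjective p-morphism onto 𝔅ᵢ. -/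
/-- The forbidden frame `𝔅₁`: a two-element cluster with the total relation. -/
def B1Rel : Fin 2 → Fin 2 → Prop := fun _ _ => True

/-- The forbidden frame `𝔅₂`: a two-element cluster `{0,1}` below a reflexive point `2`. -/
def B2Rel : Fin 3 → Fin 3 → Prop := fun x y => x.val ≤ 1 ∨ x = y

/-- The forbidden frame `𝔅₃` (the trident): a reflexive root `0` seeing three reflexive
endpoints `1`, `2`, `3`, each of which sees only itself. -/
def B3Rel : Fin 4 → Fin 4 → Prop := fun x y => x = 0 ∨ x = y

/-- The forbidden frame `𝔅₄`: a reflexive four-element chain `3 R 2 R 1 R 0`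
(relation the reflexive-transitive closure). -/
def B4Rel : Fin 4 → Fin 4 → Prop := fun x y => y.val ≤ x.val

/-- The forbidden frame `𝔅₅`: points `0,1,2,3` (points `1,2,3,4` of the paper) with the
relation the reflexive-transitive closure of `{(2,1),(1,0),(2,3)}`. -/
def B5Rel : Fin 4 → Fin 4 → Prop := fun x y => x = y ∨ x = 2 ∨ (x = 1 ∧ y = 0)

/-- A subset of a frame is upward closed (a generated subframe) if it contains all
successors of its elements. -/
def UpClosed {W : Type*} (R : W → W → Prop) (D : Set W) : Prop :=
  ∀ x ∈ D, ∀ y, R x y → y ∈ D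

/-- `f` is a p-morphism from `(W,R)` to `(W',R')`. -/
def IsPMorphism {W W' : Type*} (R : W → W → Prop) (R' : W' → W' → Prop) (f : W → W') : Prop :=
  (∀ x y, R x y → R' (f x) (f y)) ∧ (∀ x z, R' (f x) z → ∃ y, R x y ∧ f y = z)

/-- `(W,R)` is subreducible to `(W',R')`: some generated subframe of `(W,R)` admits a
surjective p-morphism onto `(W',R')`. -/
def Subreducible {W W' : Type*} (R : W → W → Prop) (R' : W' → W' → Prop) : Prop :=
  ∃ D : Set W, UpClosed R D ∧ ∃ f : D → W', Function.Surjective f ∧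
    IsPMorphism (fun x y : D => R x.val y.val) R' f

def crownRank {n : ℕ} (x : Fin (2 * n + 1)) : ℕ :=
  if x.val = 0 then 0 else if x.val % 2 = 0 then 1 else 2

lemma crownRank_le {n : ℕ} (x : Fin (2 * n + 1)) : crownRank x ≤ 2 := by
  unfold crownRank; split_ifs <;> omega

lemma crownRank_lt {n : ℕ} {x y : Fin (2 * n + 1)} (h : crownRel n x y) (hne : x ≠ y) :
    crownRank x < crownRank y := by
  have hv : x.val ≠ y.val := fun hv => hne (Fin.ext hv)
  rcases h with rfl | h0 | ⟨he, h0, hy⟩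
  · exact absurd rfl hne
  · unfold crownRank; split_ifs <;> omega
  · unfold crownRank; split_ifs <;> omega

lemma no_chain3 {n : ℕ} {d y z w : Fin (2 * n + 1)} (h1 : crownRel n d y)
    (h2 : crownRel n y z) (h3 : crownRel n z w)
    (n1 : d ≠ y) (n2 : y ≠ z) (n3 : z ≠ w) : False := by
  have g1 := crownRank_lt h1 n1
  have g2 := crownRank_lt h2 n2
  have g3 := crownRank_lt h3 n3
  have := crownRank_le (n := n) w
  omega

lemma succ_val {n : ℕ} {x y : Fin (2 * n + 1)} (h : crownRel n x y) (hx : x.val ≠ 0)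
    (hne : x ≠ y) :
    y.val + 1 = x.val ∨ y.val = x.val + 1 ∨ (x.val = 2 * n ∧ y.val = 1) := by
  rcases h with rfl | h0 | ⟨_, _, hy⟩
  · exact absurd rfl hne
  · exact absurd h0 hx
  · exact hy

lemma succ_three {n : ℕ} {x a b c : Fin (2 * n + 1)} (hx : x.val ≠ 0)
    (h1 : crownRel n x a) (h2 : crownRel n x b) (h3 : crownRel n x c)
    (hxa : x ≠ a) (hxb : x ≠ b) (hxc : x ≠ c)
    (hab : a ≠ b) (hac : a ≠ c) (hbc : b ≠ c) : False := by
  have v1 := succ_val h1 hx hxa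
  have v2 := succ_val h2 hx hxb
  have v3 := succ_val h3 hx hxc
  have ba := a.isLt
  have bb := b.isLt
  have bc := c.isLt
  have bx := x.isLt
  have nab : a.val ≠ b.val := fun h => hab (Fin.ext h)
  have nac : a.val ≠ c.val := fun h => hac (Fin.ext h)
  have nbc : b.val ≠ c.val := fun h => hbc (Fin.ext h)
  omega

/-- No crown frame is subreducible to any of the five forbidden frames. -/
theorem crown_not_subreducible_to_forbidden (n : ℕ) (hn : 1 ≤ n) :
    ¬ Subreducible (crownRel n) B1Rel ∧ ¬ Subreducible (crownRel n) B2Rel ∧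
    ¬ Subreducible (crownRel n) B3Rel ∧ ¬ Subreducible (crownRel n) B4Rel ∧
    ¬ Subreducible (crownRel n) B5Rel := by
  refine ⟨?_, ?_, ?_, ?_, ?_⟩
  -- B1
  · rintro ⟨D, hD, f, hsurj, hfor, hback⟩
    have key : ∀ u v : D, f u ≠ f v → u.1 ≠ v.1 :=
      fun u v huv h => huv (congrArg f (Subtype.ext h))
    obtain ⟨d, hd⟩ := hsurj 0
    obtain ⟨y, hdy, hy⟩ := hback d 1 trivial
    obtain ⟨z, hyz, hz⟩ := hback y 0 trivial
    obtain ⟨w, hzw, hw⟩ := hback z 1 trivial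
    exact no_chain3 hdy hyz hzw
      (key d y (by rw [hd, hy]; decide))
      (key y z (by rw [hy, hz]; decide))
      (key z w (by rw [hz, hw]; decide))
  -- B2
  · rintro ⟨D, hD, f, hsurj, hfor, hback⟩
    have key : ∀ u v : D, f u ≠ f v → u.1 ≠ v.1 :=
      fun u v huv h => huv (congrArg f (Subtype.ext h))
    obtain ⟨d, hd⟩ := hsurj 0
    obtain ⟨y, hdy, hy⟩ := hback d 1 (Or.inl (by rw [hd]; decide))
    obtain ⟨z, hyz, hz⟩ := hback y 0 (Or.inl (by rw [hy]; decide))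
    obtain ⟨w, hzw, hw⟩ := hback z 1 (Or.inl (by rw [hz]; decide))
    exact no_chain3 hdy hyz hzw
      (key d y (by rw [hd, hy]; decide))
      (key y z (by rw [hy, hz]; decide))
      (key z w (by rw [hz, hw]; decide))
  -- B3
  · rintro ⟨D, hD, f, hsurj, hfor, hback⟩
    have key : ∀ u v : D, f u ≠ f v → u.1 ≠ v.1 :=
      fun u v huv h => huv (congrArg f (Subtype.ext h))
    have root0 : ∀ x : D, f x = 0 → x.1.val = 0 := by
      intro x hx
      by_contra hne
      obtain ⟨a, ha, hfa⟩ := hback x 1 (Or.inl hx)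
      obtain ⟨b, hb, hfb⟩ := hback x 2 (Or.inl hx)
      obtain ⟨c, hc, hfc⟩ := hback x 3 (Or.inl hx)
      exact succ_three hne ha hb hc
        (key x a (by rw [hx, hfa]; decide)) (key x b (by rw [hx, hfb]; decide))
        (key x c (by rw [hx, hfc]; decide)) (key a b (by rw [hfa, hfb]; decide))
        (key a c (by rw [hfa, hfc]; decide)) (key b c (by rw [hfb, hfc]; decide))
    obtain ⟨x0, hx0⟩ := hsurj 0
    have hx0v : x0.1.val = 0 := root0 x0 hx0
    have hall : ∀ v : Fin (2 * n + 1), v ∈ D :=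
      fun v => hD x0.1 x0.2 v (Or.inr (Or.inl hx0v))
    set g : Fin (2 * n + 1) → Fin 4 := fun v => f ⟨v, hall v⟩ with hg
    have gval : ∀ x : D, g x.1 = f x := fun x => congrArg f (Subtype.ext rfl)
    have gne0 : ∀ v : Fin (2 * n + 1), v.val ≠ 0 → g v ≠ 0 :=
      fun v hv h => hv (root0 ⟨v, hall v⟩ h)
    have gstep : ∀ i, 1 ≤ i → i < 2 * n → ∀ (h1 : i < 2 * n + 1) (h2 : i + 1 < 2 * n + 1),
        g ⟨i, h1⟩ = g ⟨i + 1, h2⟩ := by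
      intro i hi1 hi2 h1 h2
      rcases Nat.even_or_odd i with he | ho
      · have hmod := Nat.even_iff.mp he
        have hrel : crownRel n ⟨i, h1⟩ ⟨i + 1, h2⟩ :=
          Or.inr (Or.inr ⟨hmod, by show i ≠ 0; omega, Or.inr (Or.inl rfl)⟩)
        have hB : g ⟨i, h1⟩ = 0 ∨ g ⟨i, h1⟩ = g ⟨i + 1, h2⟩ :=
          hfor ⟨_, hall _⟩ ⟨_, hall _⟩ hrel
        rcases hB with h0 | heq
        · exact absurd h0 (gne0 ⟨i, h1⟩ (by show i ≠ 0; omega))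
        · exact heq
      · have hmod : (i + 1) % 2 = 0 := by have := Nat.odd_iff.mp ho; omega
        have hrel : crownRel n ⟨i + 1, h2⟩ ⟨i, h1⟩ :=
          Or.inr (Or.inr ⟨hmod, by show i + 1 ≠ 0; omega, Or.inl rfl⟩)
        have hB : g ⟨i + 1, h2⟩ = 0 ∨ g ⟨i + 1, h2⟩ = g ⟨i, h1⟩ :=
          hfor ⟨_, hall _⟩ ⟨_, hall _⟩ hrel
        rcases hB with h0 | heq
        · exact absurd h0 (gne0 ⟨i + 1, h2⟩ (by show i + 1 ≠ 0; omega))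
        · exact heq.symm
    have gconst : ∀ i, 1 ≤ i → ∀ (hi : i < 2 * n + 1),
        g ⟨i, hi⟩ = g ⟨1, by omega⟩ := by
      intro i
      induction i with
      | zero => intro h1 _; omega
      | succ k ih =>
        intro h1 hi
        rcases Nat.eq_or_lt_of_le h1 with heq | hlt
        · have hk0 : k = 0 := by omega
          subst hk0; rfl
        · have hk : 1 ≤ k := by omega
          have hs := gstep k hk (by omega) (by omega) hi
          rw [← hs]
          exact ih hk (by omega)
    obtain ⟨y1, hy1⟩ := hsurj 1
    obtain ⟨y2, hy2⟩ := hsurj 2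
    have n1 : 1 ≤ y1.1.val := by
      rcases Nat.eq_zero_or_pos y1.1.val with h | h
      · exfalso
        have : y1 = x0 := Subtype.ext (Fin.ext (by rw [h, hx0v]))
        rw [this, hx0] at hy1
        exact absurd hy1 (by decide)
      · exact h
    have n2 : 1 ≤ y2.1.val := by
      rcases Nat.eq_zero_or_pos y2.1.val with h | h
      · exfalso
        have : y2 = x0 := Subtype.ext (Fin.ext (by rw [h, hx0v]))
        rw [this, hx0] at hy2
        exact absurd hy2 (by decide)
      · exact h
    have e1 : g y1.1 = g ⟨1, by omega⟩ := gconst y1.1.val n1 y1.1.isLt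
    have e2 : g y2.1 = g ⟨1, by omega⟩ := gconst y2.1.val n2 y2.1.isLt
    have : (1 : Fin 4) = 2 := by
      rw [← hy1, ← hy2, ← gval y1, ← gval y2, e1, e2]
    exact absurd this (by decide)
  -- B4
  · rintro ⟨D, hD, f, hsurj, hfor, hback⟩
    have key : ∀ u v : D, f u ≠ f v → u.1 ≠ v.1 :=
      fun u v huv h => huv (congrArg f (Subtype.ext h))
    obtain ⟨d, hd⟩ := hsurj 3
    obtain ⟨y, hdy, hy⟩ := hback d 2 (by rw [hd]; exact (by decide : (2:Fin 4).val ≤ (3:Fin 4).val))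
    obtain ⟨z, hyz, hz⟩ := hback y 1 (by rw [hy]; exact (by decide : (1:Fin 4).val ≤ (2:Fin 4).val))
    obtain ⟨w, hzw, hw⟩ := hback z 0 (by rw [hz]; exact (by decide : (0:Fin 4).val ≤ (1:Fin 4).val))
    exact no_chain3 hdy hyz hzw
      (key d y (by rw [hd, hy]; decide))
      (key y z (by rw [hy, hz]; decide))
      (key z w (by rw [hz, hw]; decide))
  -- B5
  · rintro ⟨D, hD, f, hsurj, hfor, hback⟩
    have key : ∀ u v : D, f u ≠ f v → u.1 ≠ v.1 :=
      fun u v huv h => huv (congrArg f (Subtype.ext h))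
    have root2 : ∀ x : D, f x = 2 → x.1.val = 0 := by
      intro x hx
      by_contra hne
      obtain ⟨a, ha, hfa⟩ := hback x 0 (Or.inr (Or.inl hx))
      obtain ⟨b, hb, hfb⟩ := hback x 1 (Or.inr (Or.inl hx))
      obtain ⟨c, hc, hfc⟩ := hback x 3 (Or.inr (Or.inl hx))
      exact succ_three hne ha hb hc
        (key x a (by rw [hx, hfa]; decide)) (key x b (by rw [hx, hfb]; decide))
        (key x c (by rw [hx, hfc]; decide)) (key a b (by rw [hfa, hfb]; decide))
        (key a c (by rw [hfa, hfc]; decide)) (key b c (by rw [hfb, hfc]; decide))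
    obtain ⟨x0, hx0⟩ := hsurj 2
    have hx0v : x0.1.val = 0 := root2 x0 hx0
    have hall : ∀ v : Fin (2 * n + 1), v ∈ D :=
      fun v => hD x0.1 x0.2 v (Or.inr (Or.inl hx0v))
    set g : Fin (2 * n + 1) → Fin 4 := fun v => f ⟨v, hall v⟩ with hg
    have gval : ∀ x : D, g x.1 = f x := fun x => congrArg f (Subtype.ext rfl)
    have gne2 : ∀ v : Fin (2 * n + 1), v.val ≠ 0 → g v ≠ 2 :=
      fun v hv h => hv (root2 ⟨v, hall v⟩ h)
    have gstep : ∀ i, 1 ≤ i → i < 2 * n → ∀ (h1 : i < 2 * n + 1) (h2 : i + 1 < 2 * n + 1),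
        (g ⟨i, h1⟩ = 3 ↔ g ⟨i + 1, h2⟩ = 3) := by
      intro i hi1 hi2 h1 h2
      rcases Nat.even_or_odd i with he | ho
      · have hmod := Nat.even_iff.mp he
        have hrel : crownRel n ⟨i, h1⟩ ⟨i + 1, h2⟩ :=
          Or.inr (Or.inr ⟨hmod, by show i ≠ 0; omega, Or.inr (Or.inl rfl)⟩)
        have hB : g ⟨i, h1⟩ = g ⟨i + 1, h2⟩ ∨ g ⟨i, h1⟩ = 2 ∨
            (g ⟨i, h1⟩ = 1 ∧ g ⟨i + 1, h2⟩ = 0) :=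
          hfor ⟨_, hall _⟩ ⟨_, hall _⟩ hrel
        have hne2 : g ⟨i, h1⟩ ≠ 2 := gne2 ⟨i, h1⟩ (by show i ≠ 0; omega)
        constructor
        · intro h3
          rcases hB with heq | h2' | ⟨he1, _⟩
          · rw [← heq]; exact h3
          · exact absurd h2' hne2
          · rw [h3] at he1; exact absurd he1 (by decide)
        · intro h3
          rcases hB with heq | h2' | ⟨_, he0⟩
          · rw [heq]; exact h3
          · exact absurd h2' hne2
          · rw [h3] at he0; exact absurd he0 (by decide)
      · have hmod : (i + 1) % 2 = 0 := by have := Nat.odd_iff.mp ho; omega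
        have hrel : crownRel n ⟨i + 1, h2⟩ ⟨i, h1⟩ :=
          Or.inr (Or.inr ⟨hmod, by show i + 1 ≠ 0; omega, Or.inl rfl⟩)
        have hB : g ⟨i + 1, h2⟩ = g ⟨i, h1⟩ ∨ g ⟨i + 1, h2⟩ = 2 ∨
            (g ⟨i + 1, h2⟩ = 1 ∧ g ⟨i, h1⟩ = 0) :=
          hfor ⟨_, hall _⟩ ⟨_, hall _⟩ hrel
        have hne2 : g ⟨i + 1, h2⟩ ≠ 2 := gne2 ⟨i + 1, h2⟩ (by show i + 1 ≠ 0; omega)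
        constructor
        · intro h3
          rcases hB with heq | h2' | ⟨_, he0⟩
          · rw [heq]; exact h3
          · exact absurd h2' hne2
          · rw [h3] at he0; exact absurd he0 (by decide)
        · intro h3
          rcases hB with heq | h2' | ⟨he1, _⟩
          · rw [← heq]; exact h3
          · exact absurd h2' hne2
          · rw [h3] at he1; exact absurd he1 (by decide)
    have gconst : ∀ i, 1 ≤ i → ∀ (hi : i < 2 * n + 1),
        (g ⟨i, hi⟩ = 3 ↔ g ⟨1, by omega⟩ = 3) := by
      intro i
      induction i with
      | zero => intro h1 _; omega
      | succ k ih =>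
        intro h1 hi
        rcases Nat.eq_or_lt_of_le h1 with heq | hlt
        · have hk0 : k = 0 := by omega
          subst hk0; exact Iff.rfl
        · have hk : 1 ≤ k := by omega
          exact (gstep k hk (by omega) (by omega) hi).symm.trans (ih hk (by omega))
    obtain ⟨y3, hy3⟩ := hsurj 3
    obtain ⟨y1, hy1⟩ := hsurj 1
    have n3 : 1 ≤ y3.1.val := by
      rcases Nat.eq_zero_or_pos y3.1.val with h | h
      · exfalso
        have : y3 = x0 := Subtype.ext (Fin.ext (by rw [h, hx0v]))
        rw [this, hx0] at hy3
        exact absurd hy3 (by decide)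
      · exact h
    have n1 : 1 ≤ y1.1.val := by
      rcases Nat.eq_zero_or_pos y1.1.val with h | h
      · exfalso
        have : y1 = x0 := Subtype.ext (Fin.ext (by rw [h, hx0v]))
        rw [this, hx0] at hy1
        exact absurd hy1 (by decide)
      · exact h
    have hgy3 : g y3.1 = 3 := by rw [gval]; exact hy3
    have h1k : g ⟨1, by omega⟩ = 3 := (gconst y3.1.val n3 y3.1.isLt).mp hgy3
    have hgy1 : g y1.1 = 3 := (gconst y1.1.val n1 y1.1.isLt).mpr h1k
    rw [gval, hy1] at hgy1
    exact absurd hgy1 (by decide)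
end
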